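/- arXiv:1801.02696 — 5 statements merged into one kernel-verified Lean document; each statement's English description precedes it below -/
import Mathlib

section
/- The suppression factor η = binom(N,q)^{-1} Σ_{k=0}^{q} (-1)^{q+k} binom(N-q, q-k) binom(q, k) admits the large-N expansion η = (-1)^q (1 - 2q²/N + 2q²(q-1)²/N²) + O(1/N³) for fixed q. -/
open Finset Filter Asymptotics

/-- The suppression factor `η = C(N,q)⁻¹ ∑_{k=0}^q (-1)^{q+k} C(N-q,q-k) C(q,k)`. -/
noncomputable def etaSYK (N q : ℕ) : ℝ :=
  ((N.choose q : ℝ))⁻¹ * ∑ k ∈ Finset.range (q + 1),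
    (-1 : ℝ) ^ (q + k) * ((N - q).choose (q - k)) * (q.choose k)

namespace EtaAux

/-- `f` has asymptotic expansion `c₀ + c₁/N + c₂/N² + O(1/N³)`. -/
def Exp3 (f : ℕ → ℝ) (c₀ c₁ c₂ : ℝ) : Prop :=
  (fun N : ℕ => f N - (c₀ + c₁ / N + c₂ / (N : ℝ) ^ 2)) =O[atTop]
    fun N : ℕ => 1 / (N : ℝ) ^ 3

lemma Exp3.congr_coeffs {f c₀ c₁ c₂ d₀ d₁ d₂} (h : Exp3 f c₀ c₁ c₂)
    (h₀ : c₀ = d₀) (h₁ : c₁ = d₁) (h₂ : c₂ = d₂) : Exp3 f d₀ d₁ d₂ := by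
  subst h₀ h₁ h₂; exact h

lemma Exp3.congr_fun {f g c₀ c₁ c₂} (h : Exp3 f c₀ c₁ c₂) (he : ∀ N, f N = g N) :
    Exp3 g c₀ c₁ c₂ := by
  have : f = g := funext he
  subst this; exact h

lemma Exp3.congr_eventually {f g c₀ c₁ c₂} (h : Exp3 f c₀ c₁ c₂)
    (he : ∀ᶠ N in atTop, f N = g N) : Exp3 g c₀ c₁ c₂ := by
  refine IsBigO.congr' (h := h) ?_ (EventuallyEq.refl _ _)
  filter_upwards [he] with N hN
  rw [hN]

lemma natCast_tendsto : Tendsto (fun N : ℕ => (N : ℝ)) atTop atTop :=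
  tendsto_natCast_atTop_atTop

lemma isBigO_one_div_pow {i j : ℕ} (h : i ≤ j) :
    (fun N : ℕ => 1 / (N : ℝ) ^ j) =O[atTop] fun N : ℕ => 1 / (N : ℝ) ^ i := by
  refine IsBigO.of_bound 1 ?_
  filter_upwards [eventually_ge_atTop 1] with N hN
  have h1 : (1 : ℝ) ≤ (N : ℝ) := by exact_mod_cast hN
  have hpj : (0 : ℝ) < (N : ℝ) ^ j := by positivity
  have hpi : (0 : ℝ) < (N : ℝ) ^ i := by positivity
  rw [one_mul, Real.norm_eq_abs, Real.norm_eq_abs, abs_of_pos (by positivity),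
    abs_of_pos (by positivity)]
  exact one_div_le_one_div_of_le hpi (pow_le_pow_right₀ h1 h)

lemma isBigO_one_div_pow_one (i : ℕ) :
    (fun N : ℕ => 1 / (N : ℝ) ^ i) =O[atTop] fun _ : ℕ => (1 : ℝ) := by
  have := isBigO_one_div_pow (Nat.zero_le i)
  simpa using this

lemma expAux_isBigO_one (c₀ c₁ c₂ : ℝ) :
    (fun N : ℕ => c₀ + c₁ / N + c₂ / (N : ℝ) ^ 2) =O[atTop] fun _ : ℕ => (1 : ℝ) := by
  have h1 : (fun N : ℕ => c₁ / (N : ℝ)) =O[atTop] fun _ : ℕ => (1 : ℝ) := by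
    have := (isBigO_one_div_pow_one 1).const_mul_left c₁
    refine this.congr_left fun N => ?_
    simp [div_eq_mul_inv]
  have h2 : (fun N : ℕ => c₂ / (N : ℝ) ^ 2) =O[atTop] fun _ : ℕ => (1 : ℝ) := by
    have := (isBigO_one_div_pow_one 2).const_mul_left c₂
    refine this.congr_left fun N => ?_
    simp [div_eq_mul_inv]
  have h0 : (fun _ : ℕ => c₀) =O[atTop] fun _ : ℕ => (1 : ℝ) :=
    isBigO_const_const c₀ one_ne_zero atTop
  simpa using (h0.add h1).add h2

lemma Exp3.isBigO_one {f c₀ c₁ c₂} (h : Exp3 f c₀ c₁ c₂) :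
    f =O[atTop] fun _ : ℕ => (1 : ℝ) := by
  have := (h.trans (isBigO_one_div_pow_one 3)).add (expAux_isBigO_one c₀ c₁ c₂)
  refine this.congr_left fun N => ?_
  ring

lemma Exp3.const (c : ℝ) : Exp3 (fun _ => c) c 0 0 := by
  unfold Exp3
  simp only [zero_div, add_zero, sub_self]
  exact isBigO_zero _ _

lemma Exp3.add {f g a₀ a₁ a₂ b₀ b₁ b₂} (hf : Exp3 f a₀ a₁ a₂) (hg : Exp3 g b₀ b₁ b₂) :
    Exp3 (fun N => f N + g N) (a₀ + b₀) (a₁ + b₁) (a₂ + b₂) := by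
  have := IsBigO.add hf hg
  refine this.congr_left fun N => ?_
  ring

lemma Exp3.const_mul {f c₀ c₁ c₂} (a : ℝ) (h : Exp3 f c₀ c₁ c₂) :
    Exp3 (fun N => a * f N) (a * c₀) (a * c₁) (a * c₂) := by
  have := h.const_mul_left a
  refine this.congr_left fun N => ?_
  ring

lemma Exp3.of_isBigO {f} (h : f =O[atTop] fun N : ℕ => 1 / (N : ℝ) ^ 3) :
    Exp3 f 0 0 0 := by
  unfold Exp3
  simpa using h

lemma Exp3.mul {f g a₀ a₁ a₂ b₀ b₁ b₂} (hf : Exp3 f a₀ a₁ a₂) (hg : Exp3 g b₀ b₁ b₂) :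
    Exp3 (fun N => f N * g N) (a₀ * b₀) (a₀ * b₁ + a₁ * b₀)
      (a₀ * b₂ + a₁ * b₁ + a₂ * b₀) := by
  have h1 : (fun N : ℕ => (f N - (a₀ + a₁ / N + a₂ / (N : ℝ) ^ 2)) * g N) =O[atTop]
      fun N : ℕ => 1 / (N : ℝ) ^ 3 := by
    have := IsBigO.mul hf hg.isBigO_one
    refine this.trans (IsBigO.of_bound 1 ?_)
    filter_upwards with N
    simp
  have h2 : (fun N : ℕ => (a₀ + a₁ / N + a₂ / (N : ℝ) ^ 2) *
      (g N - (b₀ + b₁ / N + b₂ / (N : ℝ) ^ 2))) =O[atTop]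
      fun N : ℕ => 1 / (N : ℝ) ^ 3 := by
    have := (expAux_isBigO_one a₀ a₁ a₂).mul hg
    refine this.trans (IsBigO.of_bound 1 ?_)
    filter_upwards with N
    simp
  have h3 : (fun N : ℕ => (a₁ * b₂ + a₂ * b₁) / (N : ℝ) ^ 3 + a₂ * b₂ / (N : ℝ) ^ 4)
      =O[atTop] fun N : ℕ => 1 / (N : ℝ) ^ 3 := by
    have ha : (fun N : ℕ => (a₁ * b₂ + a₂ * b₁) / (N : ℝ) ^ 3) =O[atTop]
        fun N : ℕ => 1 / (N : ℝ) ^ 3 := by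
      have := (isBigO_refl (fun N : ℕ => 1 / (N : ℝ) ^ 3) atTop).const_mul_left
        (a₁ * b₂ + a₂ * b₁)
      refine this.congr_left fun N => ?_
      ring
    have hb : (fun N : ℕ => a₂ * b₂ / (N : ℝ) ^ 4) =O[atTop]
        fun N : ℕ => 1 / (N : ℝ) ^ 3 := by
      have := ((isBigO_one_div_pow (by norm_num : 3 ≤ 4)).const_mul_left (a₂ * b₂))
      refine this.congr_left fun N => ?_
      ring
    exact ha.add hb
  have := (h1.add h2).add h3
  refine this.congr_left fun N => ?_
  ring


lemma eventually_cast_ge (c : ℝ) : ∀ᶠ N : ℕ in atTop, c ≤ (N : ℝ) :=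
  natCast_tendsto.eventually_ge_atTop c

lemma inv_sub_isBigO (c : ℝ) :
    (fun N : ℕ => 1 / ((N : ℝ) - c)) =O[atTop] fun N : ℕ => 1 / (N : ℝ) := by
  refine IsBigO.of_bound 2 ?_
  filter_upwards [eventually_cast_ge (2 * |c| + 1)] with N hN
  have hc : (0:ℝ) ≤ |c| := abs_nonneg c
  have hN0 : (0:ℝ) < (N : ℝ) := by linarith
  have hhalf : (N : ℝ) / 2 ≤ (N : ℝ) - c := by
    have := le_abs_self c
    linarith
  have hpos : (0:ℝ) < (N : ℝ) - c := by linarith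
  rw [Real.norm_eq_abs, Real.norm_eq_abs, abs_of_pos (by positivity),
    abs_of_pos (by positivity)]
  have h1 : 1 / ((N:ℝ) - c) ≤ 1 / ((N:ℝ) / 2) :=
    one_div_le_one_div_of_le (by linarith) hhalf
  have h2 : 1 / ((N:ℝ) / 2) = 2 * (1 / (N:ℝ)) := by
    field_simp
  linarith

lemma exp3_inv (c : ℝ) : Exp3 (fun N : ℕ => 1 / ((N : ℝ) - c)) 0 1 c := by
  unfold Exp3
  have key : ∀ᶠ N : ℕ in atTop,
      1 / ((N : ℝ) - c) - (0 + 1 / N + c / (N : ℝ) ^ 2)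
        = c ^ 2 * (1 / (N:ℝ) * (1 / (N:ℝ) * (1 / ((N:ℝ) - c)))) := by
    filter_upwards [eventually_cast_ge (|c| + 1)] with N hN
    have h1 : ((N : ℝ)) ≠ 0 := by
      have : (0:ℝ) ≤ |c| := abs_nonneg c
      intro h; rw [h] at hN; linarith
    have h2 : ((N : ℝ) - c) ≠ 0 := by
      have := le_abs_self c
      intro h; nlinarith [abs_nonneg c]
    field_simp
    ring
  have hO : (fun N : ℕ => c ^ 2 * (1 / (N:ℝ) * (1 / (N:ℝ) * (1 / ((N:ℝ) - c)))))
      =O[atTop] fun N : ℕ => 1 / (N : ℝ) ^ 3 := by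
    have := (((isBigO_refl (fun N : ℕ => 1 / (N:ℝ)) atTop).mul
      ((isBigO_refl (fun N : ℕ => 1 / (N:ℝ)) atTop).mul
        (inv_sub_isBigO c))).const_mul_left (c ^ 2))
    refine this.trans ?_
    refine (isBigO_refl _ _).congr_right fun N => ?_
    ring
  exact IsBigO.congr' (hO) (by filter_upwards [key] with N h; rw [h]) (EventuallyEq.refl _ _)


lemma exp3_ratio (a b : ℝ) :
    Exp3 (fun N : ℕ => ((N : ℝ) - a) / ((N : ℝ) - b)) 1 (b - a) (b * (b - a)) := by
  have h := (Exp3.const 1).add ((exp3_inv b).const_mul (b - a))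
  have h' := h.congr_coeffs (by ring) (by ring) (by ring)
    (d₀ := 1) (d₁ := b - a) (d₂ := b * (b - a))
  refine h'.congr_eventually ?_
  filter_upwards [eventually_cast_ge (|b| + 1)] with N hN
  have hb : ((N : ℝ) - b) ≠ 0 := by
    have := le_abs_self b
    have := abs_nonneg b
    intro h0
    nlinarith
  field_simp
  ring

lemma exp3_prod_ratio (a : ℝ) (m : ℕ) :
    Exp3 (fun N : ℕ => ∏ j ∈ Finset.range m, (((N : ℝ) - a - j) / ((N : ℝ) - j)))
      1 (-(m * a)) (a * (a - 1) * m * (m - 1) / 2) := by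
  induction m with
  | zero =>
      refine ((Exp3.const 1).congr_coeffs ?_ ?_ ?_).congr_fun fun N => ?_
      · rfl
      · push_cast; ring
      · push_cast; ring
      · simp
  | succ m ih =>
      have h := ih.mul (exp3_ratio (a + m) m)
      refine (h.congr_coeffs ?_ ?_ ?_).congr_fun fun N => ?_
      · ring
      · push_cast; ring
      · push_cast; ring
      · rw [Finset.prod_range_succ]
        congr 1
        push_cast
        ring

lemma prod_inv_isBigO (c : ℝ) (k : ℕ) :
    (fun N : ℕ => ∏ i ∈ Finset.range k, (1 / ((N : ℝ) - c - i))) =O[atTop]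
      fun N : ℕ => 1 / (N : ℝ) ^ k := by
  induction k with
  | zero => simpa using isBigO_refl (fun _ : ℕ => (1:ℝ)) atTop
  | succ k ih =>
      have h := ih.mul (inv_sub_isBigO (c + k))
      have heq : ∀ N : ℕ, (∏ i ∈ Finset.range k, (1 / ((N : ℝ) - c - i))) *
          (1 / ((N : ℝ) - (c + k))) = ∏ i ∈ Finset.range (k+1), (1 / ((N : ℝ) - c - i)) := by
        intro N
        rw [Finset.prod_range_succ]
        congr 1
        push_cast
        ring
      have h' := h.congr_left heq
      refine h'.trans ?_
      refine (isBigO_refl _ _).congr_right fun N => ?_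
      rw [pow_succ]
      field_simp

lemma Exp3.sum {s : Finset ℕ} {f : ℕ → ℕ → ℝ} {c₀ c₁ c₂ : ℕ → ℝ}
    (h : ∀ k ∈ s, Exp3 (f k) (c₀ k) (c₁ k) (c₂ k)) :
    Exp3 (fun N => ∑ k ∈ s, f k N) (∑ k ∈ s, c₀ k) (∑ k ∈ s, c₁ k)
      (∑ k ∈ s, c₂ k) := by
  classical
  induction s using Finset.induction_on with
  | empty =>
      simpa using ((Exp3.const 0).congr_fun (fun N => by simp))
  | @insert a s ha ih =>
      have h1 := h a (Finset.mem_insert_self a s)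
      have h2 := ih fun k hk => h k (Finset.mem_insert_of_mem hk)
      have := h1.add h2
      rw [Finset.sum_insert ha, Finset.sum_insert ha, Finset.sum_insert ha]
      refine this.congr_fun fun N => ?_
      rw [Finset.sum_insert ha]


lemma cast_choose_prod {n k : ℕ} (h : k ≤ n) :
    (n.choose k : ℝ) * (k.factorial : ℝ) = ∏ j ∈ Finset.range k, ((n : ℝ) - j) := by
  have h1 : ((n.descFactorial k : ℕ) : ℝ) = (k.factorial : ℝ) * (n.choose k : ℝ) := by
    exact_mod_cast congrArg (Nat.cast : ℕ → ℝ) (Nat.descFactorial_eq_factorial_mul_choose n k)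
  rw [mul_comm, ← h1, Nat.descFactorial_eq_prod_range, Nat.cast_prod]
  refine Finset.prod_congr rfl fun j hj => ?_
  exact Nat.cast_sub (le_trans (le_of_lt (Finset.mem_range.1 hj)) h)

lemma term_eq (q k N : ℕ) (hk : k ≤ q) (hN : 2 * q + 1 ≤ N) :
    ((N.choose q : ℝ))⁻¹ * (((N - q).choose (q - k) : ℝ)) =
      ((q.factorial : ℝ) / ((q - k).factorial : ℝ)) *
        ((∏ j ∈ Finset.range (q - k), (((N : ℝ) - q - j) / ((N : ℝ) - j))) *
          ∏ i ∈ Finset.range k, (1 / ((N : ℝ) - ((q : ℝ) - k) - i))) := by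
  have hqN : q ≤ N := by omega
  have hq1 : (q : ℝ) + 1 ≤ (N : ℝ) := by exact_mod_cast (by omega : q + 1 ≤ N)
  have h2q : 2 * (q : ℝ) + 1 ≤ (N : ℝ) := by exact_mod_cast (by omega : 2 * q + 1 ≤ N)
  have hposq : ∀ j : ℕ, j < q → (0 : ℝ) < (N : ℝ) - j := by
    intro j hj
    have h1 : (j : ℝ) + 1 ≤ q := by exact_mod_cast hj
    linarith
  have hB : (N.choose q : ℝ) * (q.factorial : ℝ) = ∏ j ∈ Finset.range q, ((N : ℝ) - j) :=
    cast_choose_prod hqN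
  have hA : ((N - q).choose (q - k) : ℝ) * ((q - k).factorial : ℝ)
      = ∏ j ∈ Finset.range (q - k), ((N : ℝ) - q - j) := by
    have h1 := cast_choose_prod (n := N - q) (k := q - k) (by omega)
    rw [Nat.cast_sub hqN] at h1
    exact h1
  have hsplit : ∏ j ∈ Finset.range q, ((N : ℝ) - j)
      = (∏ j ∈ Finset.range (q - k), ((N : ℝ) - j)) *
        ∏ i ∈ Finset.range k, ((N : ℝ) - ((q : ℝ) - k) - i) := by
    have h1 := Finset.prod_range_add (fun j : ℕ => ((N : ℝ) - j)) (q - k) k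
    have h2 : q - k + k = q := by omega
    rw [h2] at h1
    rw [h1]
    refine congrArg _ (Finset.prod_congr rfl fun i _ => ?_)
    rw [Nat.cast_add, Nat.cast_sub hk]
    ring
  have hBne : (∏ j ∈ Finset.range (q - k), ((N : ℝ) - j)) ≠ 0 :=
    ne_of_gt (Finset.prod_pos fun j hj =>
      hposq j (lt_of_lt_of_le (Finset.mem_range.1 hj) (by omega)))
  have hCne : (∏ i ∈ Finset.range k, ((N : ℝ) - ((q : ℝ) - k) - i)) ≠ 0 := by
    refine ne_of_gt (Finset.prod_pos fun i hi => ?_)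
    have hik : (i : ℝ) + 1 ≤ k := by exact_mod_cast Finset.mem_range.1 hi
    have hkq : (k : ℝ) ≤ q := by exact_mod_cast hk
    linarith
  have hfq : (q.factorial : ℝ) ≠ 0 := Nat.cast_ne_zero.2 (Nat.factorial_ne_zero q)
  have hfqk : ((q - k).factorial : ℝ) ≠ 0 := Nat.cast_ne_zero.2 (Nat.factorial_ne_zero _)
  have hchne : (N.choose q : ℝ) ≠ 0 := Nat.cast_ne_zero.2 (Nat.choose_pos hqN).ne'
  have hratio : ∏ j ∈ Finset.range (q - k), (((N : ℝ) - q - j) / ((N : ℝ) - j))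
      = (∏ j ∈ Finset.range (q - k), ((N : ℝ) - q - j)) /
        (∏ j ∈ Finset.range (q - k), ((N : ℝ) - j)) := Finset.prod_div_distrib _ _
  have hinv : (∏ i ∈ Finset.range k, (1 / ((N : ℝ) - ((q : ℝ) - k) - i)))
      = 1 / ∏ i ∈ Finset.range k, ((N : ℝ) - ((q : ℝ) - k) - i) := by
    rw [one_div, ← Finset.prod_inv_distrib]
    exact Finset.prod_congr rfl fun i _ => (one_div _)
  have hchoose1 : (N.choose q : ℝ)
      = (∏ j ∈ Finset.range q, ((N : ℝ) - j)) / (q.factorial : ℝ) :=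
    (eq_div_iff hfq).2 hB
  have hchoose2 : ((N - q).choose (q - k) : ℝ)
      = (∏ j ∈ Finset.range (q - k), ((N : ℝ) - q - j)) / ((q - k).factorial : ℝ) :=
    (eq_div_iff hfqk).2 hA
  rw [hratio, hinv, hchoose1, hchoose2, hsplit]
  field_simp


/-- The `k`-th term of the expansion of `(-1)^q η`. -/
noncomputable def termF (q k : ℕ) : ℕ → ℝ := fun N =>
  (-1 : ℝ) ^ k * (q.choose k : ℝ) * ((q.factorial : ℝ) / ((q - k).factorial : ℝ)) *
    ((∏ j ∈ Finset.range (q - k), (((N : ℝ) - q - j) / ((N : ℝ) - j))) *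
      ∏ i ∈ Finset.range k, (1 / ((N : ℝ) - ((q : ℝ) - k) - i)))

noncomputable def D0 (k : ℕ) : ℝ := if k = 0 then 1 else 0
noncomputable def D1 (q k : ℕ) : ℝ := if k ≤ 1 then -(q : ℝ) ^ 2 else 0
noncomputable def D2 (q k : ℕ) : ℝ :=
  if k = 0 then (q : ℝ) ^ 2 * ((q : ℝ) - 1) ^ 2 / 2
  else if k = 1 then (q : ℝ) ^ 2 * ((q : ℝ) - 1) ^ 2
  else if k = 2 then (q : ℝ) ^ 2 * ((q : ℝ) - 1) ^ 2 / 2 else 0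

lemma factorial_cast_ne (n : ℕ) : ((n.factorial : ℕ) : ℝ) ≠ 0 :=
  Nat.cast_ne_zero.2 (Nat.factorial_ne_zero n)

lemma exp3_termF (q k : ℕ) (hk : k ≤ q) : Exp3 (termF q k) (D0 k) (D1 q k) (D2 q k) := by
  rcases k with _ | _ | _ | k
  · -- k = 0
    have h := exp3_prod_ratio (q : ℝ) q
    refine (h.congr_coeffs ?_ ?_ ?_).congr_fun fun N => ?_
    · simp [D0]
    · simp [D1]; try ring
    · simp [D2]; try ring
    · simp [termF, div_self (factorial_cast_ne q)]
  · -- k = 1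
    have hq : 1 ≤ q := hk
    have hcast : ((q - 1 : ℕ) : ℝ) = (q : ℝ) - 1 := by
      rw [Nat.cast_sub hq, Nat.cast_one]
    have hfact : (q : ℝ) * (((q - 1).factorial : ℕ) : ℝ) = (q.factorial : ℝ) := by
      exact_mod_cast congrArg (Nat.cast : ℕ → ℝ) (Nat.mul_factorial_pred (by omega))
    have hc : ((q.factorial : ℝ) / ((q - 1).factorial : ℝ)) = (q : ℝ) := by
      rw [← hfact]; field_simp
    have h := ((exp3_prod_ratio (q : ℝ) (q - 1)).mul
      (exp3_inv ((q : ℝ) - 1))).const_mul (-(q : ℝ) ^ 2)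
    refine (h.congr_coeffs ?_ ?_ ?_).congr_fun fun N => ?_
    · simp [D0]
    · simp [D1, hcast]; try ring
    · simp [D2, hcast]; try ring
    · show _ = termF q 1 N
      unfold termF
      rw [Finset.prod_range_one, Nat.choose_one_right, hc]
      push_cast [hq]
      ring
  · -- k = 2
    have hq : 2 ≤ q := hk
    have hcast : ((q - 2 : ℕ) : ℝ) = (q : ℝ) - 2 := by
      rw [Nat.cast_sub hq]; norm_num
    have hf1 : (q : ℝ) * (((q - 1).factorial : ℕ) : ℝ) = (q.factorial : ℝ) := by
      exact_mod_cast congrArg (Nat.cast : ℕ → ℝ) (Nat.mul_factorial_pred (by omega))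
    have hf2 : ((q : ℝ) - 1) * (((q - 2).factorial : ℕ) : ℝ)
        = (((q - 1).factorial : ℕ) : ℝ) := by
      have h1 := Nat.mul_factorial_pred (n := q - 1) (by omega)
      have h2 : q - 1 - 1 = q - 2 := by omega
      rw [h2] at h1
      have := congrArg (Nat.cast : ℕ → ℝ) h1
      push_cast at this
      rw [← this, Nat.cast_sub (by omega : 1 ≤ q), Nat.cast_one]
    have hc : ((-1 : ℝ)) ^ 2 * (q.choose 2 : ℝ) *
        ((q.factorial : ℝ) / ((q - 2).factorial : ℝ))
        = (q : ℝ) ^ 2 * ((q : ℝ) - 1) ^ 2 / 2 := by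
      rw [Nat.cast_choose_two, ← hf1, ← hf2]
      field_simp
    have h := ((exp3_prod_ratio (q : ℝ) (q - 2)).mul
      ((exp3_inv ((q : ℝ) - 2)).mul (exp3_inv ((q : ℝ) - 1)))).const_mul
      ((q : ℝ) ^ 2 * ((q : ℝ) - 1) ^ 2 / 2)
    refine (h.congr_coeffs ?_ ?_ ?_).congr_fun fun N => ?_
    · simp [D0]
    · simp [D1, hcast]; try ring
    · simp [D2, hcast]; try ring
    · show _ = termF q 2 N
      unfold termF
      rw [Finset.prod_range_succ, Finset.prod_range_one, ← hc]
      push_cast [hq]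
      ring
  · -- k ≥ 3
    have hD0 : D0 (k + 3) = 0 := by simp [D0]
    have hD1 : D1 q (k + 3) = 0 := by simp [D1]
    have hD2 : D2 q (k + 3) = 0 := by simp [D2]
    rw [hD0, hD1, hD2]
    refine Exp3.of_isBigO ?_
    have hP := (exp3_prod_ratio (q : ℝ) (q - (k + 3))).isBigO_one
    have hQ := prod_inv_isBigO ((q : ℝ) - ((k + 3 : ℕ) : ℝ)) (k + 3)
    have h := (hP.mul hQ).const_mul_left
      ((-1 : ℝ) ^ (k + 3) * (q.choose (k + 3) : ℝ) *
        ((q.factorial : ℝ) / ((q - (k + 3)).factorial : ℝ)))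
    have h2 : termF q (k + 3) =O[atTop] fun N : ℕ => 1 * (1 / (N : ℝ) ^ (k + 3)) := by
      exact h.congr_left fun N => rfl
    refine h2.trans ?_
    have h3 : (fun N : ℕ => 1 * (1 / (N : ℝ) ^ (k + 3))) = fun N : ℕ => 1 / (N : ℝ) ^ (k + 3) := by
      funext N; rw [one_mul]
    rw [h3]
    exact isBigO_one_div_pow (by omega)


lemma sum_D0 (q : ℕ) : ∑ k ∈ Finset.range (q + 1), D0 k = 1 := by
  rw [Finset.sum_eq_single_of_mem 0 (by simp) (fun b _ hb => by simp [D0, hb])]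
  simp [D0]

lemma sum_D1 (q : ℕ) : ∑ k ∈ Finset.range (q + 1), D1 q k = -2 * (q : ℝ) ^ 2 := by
  match q with
  | 0 => norm_num [D1]
  | (q + 1) =>
      have hsub : Finset.range 2 ⊆ Finset.range (q + 1 + 1) := by
        intro x hx
        simp only [Finset.mem_range] at *
        omega
      rw [← Finset.sum_subset hsub (fun x _ hnx => by
        have : ¬ x ≤ 1 := by
          simp only [Finset.mem_range] at hnx
          omega
        simp [D1, this])]
      simp [Finset.sum_range_succ, D1]
      push_cast
      ring

lemma sum_D2 (q : ℕ) :
    ∑ k ∈ Finset.range (q + 1), D2 q k = 2 * (q : ℝ) ^ 2 * ((q : ℝ) - 1) ^ 2 := by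
  match q with
  | 0 => norm_num [D2]
  | 1 => simp [Finset.sum_range_succ, D2]
  | (q + 2) =>
      have hsub : Finset.range 3 ⊆ Finset.range (q + 2 + 1) := by
        intro x hx
        simp only [Finset.mem_range] at *
        omega
      rw [← Finset.sum_subset hsub (fun x _ hnx => by
        have h0 : ¬ x = 0 := by
          simp only [Finset.mem_range] at hnx
          omega
        have h1 : ¬ x = 1 := by
          simp only [Finset.mem_range] at hnx
          omega
        have h2 : ¬ x = 2 := by
          simp only [Finset.mem_range] at hnx
          omega
        simp [D2, h0, h1, h2])]
      simp [Finset.sum_range_succ, D2]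
      push_cast
      ring

lemma eta_eventually (q : ℕ) :
    ∀ᶠ N : ℕ in atTop,
      (∑ k ∈ Finset.range (q + 1), termF q k N) = (-1 : ℝ) ^ q * etaSYK N q := by
  filter_upwards [eventually_ge_atTop (2 * q + 1)] with N hN
  rw [etaSYK, Finset.mul_sum, Finset.mul_sum]
  refine Finset.sum_congr rfl fun k hk => ?_
  have hkq : k ≤ q := by
    have := Finset.mem_range.1 hk
    omega
  have hte := term_eq q k N hkq hN
  have hsign : (-1 : ℝ) ^ q * (-1 : ℝ) ^ (q + k) = (-1 : ℝ) ^ k := by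
    rw [← pow_add]
    have h : q + (q + k) = 2 * q + k := by ring
    rw [h, pow_add, pow_mul]
    norm_num
  simp only [termF]
  linear_combination (-((-1 : ℝ) ^ k * (q.choose k : ℝ))) * hte -
    ((N.choose q : ℝ))⁻¹ * (((N - q).choose (q - k) : ℝ)) * (q.choose k : ℝ) * hsign

end EtaAux

open EtaAux

/-- Large-`N` expansion of the suppression factor at fixed `q`:
`η = (-1)^q (1 - 2q²/N + 2q²(q-1)²/N²) + O(1/N³)`. -/
theorem eta_large_N (q : ℕ) :
    (fun N : ℕ => etaSYK N q -
        (-1 : ℝ) ^ q * (1 - 2 * (q : ℝ) ^ 2 / N +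
          2 * (q : ℝ) ^ 2 * ((q : ℝ) - 1) ^ 2 / (N : ℝ) ^ 2))
      =O[atTop] fun N : ℕ => 1 / (N : ℝ) ^ 3 := by
  have hterm : ∀ k ∈ Finset.range (q + 1), Exp3 (termF q k) (D0 k) (D1 q k) (D2 q k) :=
    fun k hk => exp3_termF q k (by
      have := Finset.mem_range.1 hk
      omega)
  have hsum := (Exp3.sum hterm).congr_coeffs (sum_D0 q) (sum_D1 q) (sum_D2 q)
  have heta := hsum.congr_eventually (eta_eventually q)
  have h2 := heta.const_mul_left ((-1 : ℝ) ^ q)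
  refine h2.congr_left fun N => ?_
  have hsq : (-1 : ℝ) ^ q * (-1 : ℝ) ^ q = 1 := by
    rw [← pow_add, ← two_mul, pow_mul]
    norm_num
  linear_combination (etaSYK N q) * hsq
end

section
/- In the double scaling limit N → ∞ with q²/N fixed, the suppression factor satisfies (-1)^q η → e^{-2q²/N}, i.e. for a sequence q(N) with q(N)²/N → λ one has (-1)^{q(N)} η(N, q(N)) → e^{-2λ}. -/
open Finset Filter

/-- ratio term `A N k = C(N-q,q-k) C(q,k) / C(N,q)` as a real. -/
noncomputable def Aux (q : ℕ → ℕ) (N k : ℕ) : ℝ :=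
  (((N - q N).choose (q N - k) : ℝ) * ((q N).choose k : ℝ)) / ((N.choose (q N) : ℝ))

lemma Aux_nonneg (q : ℕ → ℕ) (N k : ℕ) : 0 ≤ Aux q N k := by unfold Aux; positivity

lemma Aux_zero_of_gt (q : ℕ → ℕ) {N k : ℕ} (h : q N < k) : Aux q N k = 0 := by
  simp [Aux, Nat.choose_eq_zero_of_lt h]

lemma Aux_succ (q : ℕ → ℕ) {N : ℕ} (hN : 2 * q N ≤ N) (k : ℕ) :
    Aux q N (k + 1) = Aux q N k *
      (((q N - k : ℕ) : ℝ) ^ 2 / (((k : ℝ) + 1) * ((N - 2 * q N + (k + 1) : ℕ) : ℝ))) := by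
  rcases le_or_gt (q N) k with hk | hk
  · rw [Aux_zero_of_gt q (by omega), Nat.sub_eq_zero_of_le hk]
    simp
  · have hQN : q N ≤ N := by omega
    have h1 : (q N).choose (k + 1) * (k + 1) = (q N).choose k * (q N - k) :=
      Nat.choose_succ_right_eq _ _
    have h2 : (N - q N).choose (q N - k) * (q N - k)
        = (N - q N).choose (q N - (k + 1)) * (N - 2 * q N + (k + 1)) := by
      have h3 := Nat.choose_succ_right_eq (N - q N) (q N - (k + 1))
      have e1 : q N - (k + 1) + 1 = q N - k := by omega
      have e2 : (N - q N) - (q N - (k + 1)) = N - 2 * q N + (k + 1) := by omega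
      rw [e1, e2] at h3
      exact h3
    have hC : ((N.choose (q N)) : ℝ) ≠ 0 := Nat.cast_ne_zero.2 (Nat.choose_pos hQN).ne'
    have hD : ((N - 2 * q N + (k + 1) : ℕ) : ℝ) ≠ 0 := Nat.cast_ne_zero.2 (by omega)
    have r1 : ((q N).choose (k + 1) : ℝ) * ((k : ℝ) + 1)
        = ((q N).choose k : ℝ) * ((q N - k : ℕ) : ℝ) := by exact_mod_cast h1
    have r2 : ((N - q N).choose (q N - k) : ℝ) * ((q N - k : ℕ) : ℝ)
        = ((N - q N).choose (q N - (k + 1)) : ℝ) * ((N - 2 * q N + (k + 1) : ℕ) : ℝ) := by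
      exact_mod_cast h2
    rw [Aux, Aux]
    have hk1 : ((k : ℝ) + 1) ≠ 0 := by positivity
    have hcast : ((N - 2 * q N + (k + 1) : ℕ) : ℝ) = (N : ℝ) - 2 * (q N) + ((k : ℝ) + 1) := by
      push_cast [hN]; ring
    rw [hcast] at r2 ⊢
    have hD' : ((N : ℝ) - 2 * (q N) + ((k : ℝ) + 1)) ≠ 0 := hcast ▸ hD
    rw [(eq_div_iff hk1).2 r1, (eq_div_iff hD').2 r2.symm]
    simp only [div_eq_mul_inv, mul_inv]
    ring

lemma Aux_zero_eq (q : ℕ → ℕ) (N : ℕ) :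
    Aux q N 0 = ((N - q N).choose (q N) : ℝ) / (N.choose (q N) : ℝ) := by
  simp [Aux]

lemma Aux_zero_le_one (q : ℕ → ℕ) {N : ℕ} (hQN : q N ≤ N) : Aux q N 0 ≤ 1 := by
  rw [Aux_zero_eq]
  apply div_le_one_of_le₀
  · exact_mod_cast Nat.choose_le_choose (q N) (Nat.sub_le N (q N))
  · positivity

lemma Aux_zero_prod (q : ℕ → ℕ) {N : ℕ} (hN : 2 * q N ≤ N) :
    Aux q N 0 = ∏ j ∈ Finset.range (q N), (((N - q N - j : ℕ) : ℝ) / ((N - j : ℕ) : ℝ)) := by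
  rw [Aux_zero_eq]
  have h1 : ((N - q N).choose (q N) : ℝ) / (N.choose (q N) : ℝ)
      = ((N - q N).descFactorial (q N) : ℝ) / ((N.descFactorial (q N)) : ℝ) := by
    rw [Nat.descFactorial_eq_factorial_mul_choose, Nat.descFactorial_eq_factorial_mul_choose]
    push_cast
    rw [mul_div_mul_left _ _ (by exact_mod_cast (Nat.factorial_ne_zero (q N)))]
  rw [h1, Nat.descFactorial_eq_prod_range, Nat.descFactorial_eq_prod_range]
  push_cast
  rw [← Finset.prod_div_distrib]

lemma pow_tendsto (q : ℕ → ℕ) (lam : ℝ) (t : ℕ → ℝ)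
    (ht0 : ∀ᶠ N in atTop, 0 ≤ t N) (ht : Tendsto t atTop (nhds 0))
    (hqt : Tendsto (fun N => (q N : ℝ) * t N) atTop (nhds lam)) :
    Tendsto (fun N => (1 - t N) ^ (q N)) atTop (nhds (Real.exp (-lam))) := by
  have ht2 : ∀ᶠ N in atTop, t N < 1/2 := ht.eventually (gt_mem_nhds (by norm_num))
  have hlow : Tendsto (fun N => -((q N : ℝ) * t N) * (1 - t N)⁻¹) atTop (nhds (-lam)) := by
    have h2 := (hqt.neg).mul ((tendsto_const_nhds.sub ht).inv₀ (by norm_num : (1:ℝ) - 0 ≠ 0))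
    simpa using h2
  have hup : Tendsto (fun N => -((q N : ℝ) * t N)) atTop (nhds (-lam)) := hqt.neg
  have hmid : Tendsto (fun N => (q N : ℝ) * Real.log (1 - t N)) atTop (nhds (-lam)) := by
    apply tendsto_of_tendsto_of_tendsto_of_le_of_le' hlow hup
    · filter_upwards [ht0, ht2] with N h0 h2
      have h1t : (0:ℝ) < 1 - t N := by linarith
      have hq : (0:ℝ) ≤ (q N : ℝ) := Nat.cast_nonneg _
      have hl := Real.log_le_sub_one_of_pos (x := (1 - t N)⁻¹) (by positivity)
      rw [Real.log_inv] at hl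
      have he : (1 - t N)⁻¹ - 1 = t N * (1 - t N)⁻¹ := by field_simp; ring
      rw [he] at hl
      nlinarith [mul_le_mul_of_nonneg_left (by linarith : -(t N * (1 - t N)⁻¹) ≤ Real.log (1 - t N)) hq]
    · filter_upwards [ht0, ht2] with N h0 h2
      have h1t : (0:ℝ) < 1 - t N := by linarith
      have hq : (0:ℝ) ≤ (q N : ℝ) := Nat.cast_nonneg _
      have hl := Real.log_le_sub_one_of_pos h1t
      nlinarith [mul_le_mul_of_nonneg_left hl hq]
  have := (Real.continuous_exp.tendsto (-lam)).comp hmid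
  apply this.congr'
  filter_upwards [ht2] with N h2
  have h1t : (0:ℝ) < 1 - t N := by
    have : t N < 1 := by linarith
    linarith
  simp only [Function.comp]
  rw [Real.exp_nat_mul, Real.exp_log h1t]


set_option maxHeartbeats 1000000 in
/-- Double scaling limit: if `q(N)²/N → λ` as `N → ∞`, then
`(-1)^{q(N)} η(N, q(N)) → e^{-2λ}`. -/
theorem eta_double_scaling (q : ℕ → ℕ) (lam : ℝ)
    (h : Tendsto (fun N : ℕ => ((q N : ℝ) ^ 2 / N)) atTop (nhds lam)) :
    Tendsto (fun N : ℕ => (-1 : ℝ) ^ (q N) * etaSYK N (q N)) atTop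
      (nhds (Real.exp (-2 * lam))) := by
  have hlam0 : 0 ≤ lam := ge_of_tendsto' h (fun N => by positivity)
  -- q/N → 0
  have hqN : Tendsto (fun N : ℕ => (q N : ℝ) / N) atTop (nhds 0) := by
    have hsq : Tendsto (fun N : ℕ => ((q N : ℝ) / N) ^ 2) atTop (nhds 0) := by
      have h1 : Tendsto (fun N : ℕ => ((q N : ℝ) ^ 2 / N) * (1 / N)) atTop (nhds (lam * 0)) :=
        h.mul tendsto_one_div_atTop_nhds_zero_nat
      rw [mul_zero] at h1
      apply h1.congr
      intro N
      rcases eq_or_ne (N : ℝ) 0 with h0 | h0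
      · simp [h0]
      · field_simp
    have h2 := (Real.continuous_sqrt.tendsto 0).comp hsq
    rw [Real.sqrt_zero] at h2
    apply h2.congr
    intro N
    simp only [Function.comp]
    rw [Real.sqrt_sq (by positivity)]
  -- eventually 4q + 4 ≤ N
  have hq4 : ∀ᶠ N in atTop, 4 * q N + 4 ≤ N := by
    have h1 : ∀ᶠ N in atTop, (q N : ℝ) / N < 1/8 := hqN.eventually (gt_mem_nhds (by norm_num))
    have h2 : ∀ᶠ N : ℕ in atTop, 8 ≤ N := eventually_ge_atTop 8
    filter_upwards [h1, h2] with N hr h8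
    have hNpos : (0:ℝ) < N := by positivity
    have : (q N : ℝ) < (N : ℝ) / 8 := by
      rw [div_lt_iff₀ hNpos] at hr; linarith
    have h8' : (8:ℝ) ≤ N := by exact_mod_cast h8
    have : (4 * q N + 4 : ℝ) < N := by push_cast; linarith
    exact_mod_cast this.le
  -- generic ratio limit
  have hratio : ∀ a b : ℝ, Tendsto (fun N : ℕ => (N : ℝ) / ((N : ℝ) - a * q N + b))
      atTop (nhds 1) := by
    intro a b
    have h1 : Tendsto (fun N : ℕ => ((N : ℝ) - a * q N + b) / N) atTop (nhds 1) := by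
      have h2 := ((tendsto_const_nhds (x := (1:ℝ))).sub (hqN.const_mul a)).add
        (tendsto_one_div_atTop_nhds_zero_nat.const_mul b)
      have h3 : (1:ℝ) - a * 0 + b * 0 = 1 := by ring
      rw [h3] at h2
      apply h2.congr'
      filter_upwards [eventually_gt_atTop 0] with N hN
      have hN0 : (N : ℝ) ≠ 0 := by positivity
      field_simp
    have h2 := h1.inv₀ one_ne_zero
    rw [inv_one] at h2
    apply h2.congr
    intro N
    rw [inv_div]
  -- helper: q * (q/(N - c*q)) → lam for c = 0, 1 (as needed)
  have hq2gen : Tendsto (fun N : ℕ => (q N : ℝ) * ((q N : ℝ) / ((N : ℝ) - q N))) atTop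
      (nhds lam) := by
    have h1 := h.mul (hratio 1 0)
    rw [mul_one] at h1
    apply h1.congr'
    filter_upwards [eventually_gt_atTop 0] with N hN
    have hN0 : (N : ℝ) ≠ 0 := by positivity
    rcases eq_or_ne ((N : ℝ) - q N) 0 with hd | hd
    · rw [one_mul, add_zero, hd] at *
      simp [hd]
    · rw [one_mul, add_zero]
      field_simp
  have ht20 : Tendsto (fun N : ℕ => (q N : ℝ) / ((N : ℝ) - q N)) atTop (nhds 0) := by
    have h1 := hqN.mul (hratio 1 0)
    rw [zero_mul] at h1
    apply h1.congr'
    filter_upwards [eventually_gt_atTop 0] with N hN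
    have hN0 : (N : ℝ) ≠ 0 := by positivity
    rcases eq_or_ne ((N : ℝ) - q N) 0 with hd | hd
    · rw [one_mul, add_zero, hd]
      simp [hd]
    · rw [one_mul, add_zero]
      field_simp
  -- limit of Aux · 0
  have hA0 : Tendsto (fun N => Aux q N 0) atTop (nhds (Real.exp (-lam))) := by
    have hup : Tendsto (fun N : ℕ => (1 - (q N : ℝ) / N) ^ (q N)) atTop
        (nhds (Real.exp (-lam))) := by
      apply pow_tendsto q lam _ (Eventually.of_forall fun N => by positivity) hqN
      apply h.congr
      intro N
      rw [sq, mul_div_assoc]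
    have hlow : Tendsto (fun N : ℕ => (1 - (q N : ℝ) / ((N : ℝ) - q N)) ^ (q N)) atTop
        (nhds (Real.exp (-lam))) := by
      apply pow_tendsto q lam _ _ ht20 hq2gen
      filter_upwards [hq4] with N h4
      have : (q N : ℝ) ≤ N := by exact_mod_cast (by omega : q N ≤ N)
      have h2 : (0:ℝ) ≤ (N : ℝ) - q N := by linarith
      positivity
    apply tendsto_of_tendsto_of_tendsto_of_le_of_le' hlow hup
    · filter_upwards [hq4] with N h4
      rw [Aux_zero_prod q (by omega),
        show (1 - (q N : ℝ) / ((N : ℝ) - q N)) ^ (q N)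
            = ∏ _j ∈ Finset.range (q N), (1 - (q N : ℝ) / ((N : ℝ) - q N)) by
          rw [Finset.prod_const, Finset.card_range]]
      apply Finset.prod_le_prod
      · intro j hj
        have hqle : (q N : ℝ) ≤ (N : ℝ) - q N := by
          have : (2 * q N : ℝ) ≤ N := by exact_mod_cast (by omega : 2 * q N ≤ N)
          push_cast at this ⊢
          linarith
        have hpos : (0:ℝ) < (N : ℝ) - q N := by
          have h4' : (4 * q N + 4 : ℝ) ≤ N := by exact_mod_cast h4
          have h0q : (0:ℝ) ≤ (q N : ℝ) := Nat.cast_nonneg _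
          push_cast at h4'
          linarith
        have := div_le_one_of_le₀ hqle hpos.le
        linarith
      · intro j hj
        rw [Finset.mem_range] at hj
        have hjq : (j : ℝ) < q N := by exact_mod_cast hj
        have hc1 : ((N - q N - j : ℕ) : ℝ) = (N : ℝ) - q N - j := by
          push_cast [(by omega : q N ≤ N), (by omega : j ≤ N - q N)]
          ring
        have hc2 : ((N - j : ℕ) : ℝ) = (N : ℝ) - j := by
          push_cast [(by omega : j ≤ N)]
          ring
        rw [hc1, hc2]
        have hNq : (0:ℝ) < (N : ℝ) - q N := by
          have : (2 * q N + 1 : ℝ) ≤ N := by exact_mod_cast (by omega : 2 * q N + 1 ≤ N)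
          push_cast at this
          linarith [hjq, (Nat.cast_nonneg (q N) : (0:ℝ) ≤ q N)]
        have hNj : (0:ℝ) < (N : ℝ) - j := by linarith
        have he : 1 - (q N : ℝ) / ((N : ℝ) - q N) = ((N : ℝ) - 2 * q N) / ((N : ℝ) - q N) := by
          field_simp
          ring
        rw [he, div_le_div_iff₀ hNq hNj]
        have h0q : (0:ℝ) ≤ (q N : ℝ) := Nat.cast_nonneg _
        nlinarith [mul_nonneg h0q (by linarith : (0:ℝ) ≤ (q N : ℝ) - j)]
    · filter_upwards [hq4] with N h4
      rw [Aux_zero_prod q (by omega),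
        show (1 - (q N : ℝ) / (N : ℝ)) ^ (q N)
            = ∏ _j ∈ Finset.range (q N), (1 - (q N : ℝ) / (N : ℝ)) by
          rw [Finset.prod_const, Finset.card_range]]
      apply Finset.prod_le_prod
      · intro j hj
        positivity
      · intro j hj
        rw [Finset.mem_range] at hj
        have hjq : (j : ℝ) < q N := by exact_mod_cast hj
        have hc1 : ((N - q N - j : ℕ) : ℝ) = (N : ℝ) - q N - j := by
          push_cast [(by omega : q N ≤ N), (by omega : j ≤ N - q N)]
          ring
        have hc2 : ((N - j : ℕ) : ℝ) = (N : ℝ) - j := by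
          push_cast [(by omega : j ≤ N)]
          ring
        rw [hc1, hc2]
        have hNpos : (0:ℝ) < N := by
          have : (4 * q N + 4 : ℝ) ≤ N := by exact_mod_cast h4
          linarith [ (Nat.cast_nonneg (q N) : (0:ℝ) ≤ q N) ]
        have hNj : (0:ℝ) < (N : ℝ) - j := by linarith
        have he : 1 - (q N : ℝ) / (N : ℝ) = ((N : ℝ) - q N) / N := by
          field_simp
        rw [he, div_le_div_iff₀ hNj hNpos]
        have h0q : (0:ℝ) ≤ (q N : ℝ) := Nat.cast_nonneg _
        have h0j : (0:ℝ) ≤ (j : ℝ) := Nat.cast_nonneg _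
        nlinarith [mul_nonneg h0q h0j]
  -- limit of the recursion factor
  have hfj : ∀ j : ℕ, Tendsto (fun N : ℕ => ((q N - j : ℕ) : ℝ) ^ 2 /
      (((j : ℝ) + 1) * ((N - 2 * q N + (j + 1) : ℕ) : ℝ))) atTop
      (nhds (lam / ((j : ℝ) + 1))) := by
    intro j
    -- numerator / N → lam
    have hnum : Tendsto (fun N : ℕ => ((q N - j : ℕ) : ℝ) ^ 2 / N) atTop (nhds lam) := by
      have hlo : Tendsto (fun N : ℕ => (q N : ℝ) ^ 2 / N - (2 * j) * ((q N : ℝ) / N)) atTop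
          (nhds lam) := by
        have := h.sub (hqN.const_mul (2 * (j : ℝ)))
        rw [mul_zero, sub_zero] at this
        exact this
      apply tendsto_of_tendsto_of_tendsto_of_le_of_le' hlo h
      · filter_upwards [eventually_gt_atTop 0] with N hN
        have hNpos : (0:ℝ) < N := by exact_mod_cast hN
        have hrw : (q N : ℝ) ^ 2 / N - 2 * j * ((q N : ℝ) / N)
            = ((q N : ℝ) ^ 2 - 2 * j * q N) / N := by
          field_simp
        rw [hrw, div_le_div_iff₀ hNpos hNpos]
        have hkey : (q N : ℝ) ^ 2 - 2 * j * q N ≤ ((q N - j : ℕ) : ℝ) ^ 2 := by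
          rcases le_or_gt j (q N) with hle | hlt
          · have : ((q N - j : ℕ) : ℝ) = (q N : ℝ) - j := by
              push_cast [hle]; ring
            rw [this]
            nlinarith [sq_nonneg ((j : ℝ))]
          · have : q N - j = 0 := by omega
            rw [this]
            have hql : (q N : ℝ) ≤ j := by exact_mod_cast hlt.le
            have h0q : (0:ℝ) ≤ (q N : ℝ) := Nat.cast_nonneg _
            push_cast
            nlinarith
        nlinarith [hkey, hNpos]
      · filter_upwards [eventually_gt_atTop 0] with N hN
        have hNpos : (0:ℝ) < N := by exact_mod_cast hN
        have hkey : ((q N - j : ℕ) : ℝ) ^ 2 ≤ (q N : ℝ) ^ 2 := by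
          have h1 : ((q N - j : ℕ) : ℝ) ≤ (q N : ℝ) := by exact_mod_cast Nat.sub_le _ _
          have h0 : (0:ℝ) ≤ ((q N - j : ℕ) : ℝ) := Nat.cast_nonneg _
          nlinarith
        exact (div_le_div_iff_of_pos_right hNpos).2 hkey
    have hND : Tendsto (fun N : ℕ => (N : ℝ) / ((N - 2 * q N + (j + 1) : ℕ) : ℝ)) atTop
        (nhds 1) := by
      apply (hratio 2 ((j : ℝ) + 1)).congr'
      filter_upwards [hq4] with N h4
      have : ((N - 2 * q N + (j + 1) : ℕ) : ℝ) = (N : ℝ) - 2 * q N + ((j : ℝ) + 1) := by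
        push_cast [(by omega : 2 * q N ≤ N)]
        ring
      rw [this]
    have hmul := (hnum.mul hND).mul_const (1 / ((j : ℝ) + 1))
    have hval : lam * 1 * (1 / ((j : ℝ) + 1)) = lam / ((j : ℝ) + 1) := by
      field_simp
    rw [hval] at hmul
    apply hmul.congr'
    filter_upwards [eventually_gt_atTop 0] with N hN
    have hN0 : (N : ℝ) ≠ 0 := by positivity
    rcases eq_or_ne ((N - 2 * q N + (j + 1) : ℕ) : ℝ) 0 with hd | hd
    · rw [hd]
      simp
    · have hj1 : ((j : ℝ) + 1) ≠ 0 := by positivity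
      field_simp
  -- limit of Aux · k for each fixed k
  have hAk : ∀ k : ℕ, Tendsto (fun N => Aux q N k) atTop
      (nhds (Real.exp (-lam) * lam ^ k / (k.factorial : ℝ))) := by
    intro k
    induction k with
    | zero => simpa using hA0
    | succ k ih =>
      have hmul := ih.mul (hfj k)
      have hval : Real.exp (-lam) * lam ^ k / (k.factorial : ℝ) * (lam / ((k : ℝ) + 1))
          = Real.exp (-lam) * lam ^ (k + 1) / ((k + 1).factorial : ℝ) := by
        rw [Nat.factorial_succ]
        have h1 : ((k.factorial : ℝ)) ≠ 0 := by exact_mod_cast (Nat.factorial_ne_zero k)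
        have h2 : ((k : ℝ) + 1) ≠ 0 := by positivity
        push_cast
        field_simp
        ring
      rw [hval] at hmul
      apply hmul.congr'
      filter_upwards [hq4] with N h4
      exact (Aux_succ q (by omega) k).symm
  -- eventual uniform bound
  have hqlt : ∀ᶠ N in atTop, (q N : ℝ) ^ 2 ≤ (lam + 1) * ((N : ℝ) - 2 * q N + 1) := by
    have h1 : Tendsto (fun N : ℕ => (q N : ℝ) ^ 2 / N * ((N : ℝ) / ((N : ℝ) - 2 * q N + 1)))
        atTop (nhds lam) := by
      have := h.mul (hratio 2 1)
      rwa [mul_one] at this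
    have h2 : ∀ᶠ N in atTop, (q N : ℝ) ^ 2 / N * ((N : ℝ) / ((N : ℝ) - 2 * q N + 1)) < lam + 1 :=
      h1.eventually (gt_mem_nhds (by linarith))
    filter_upwards [h2, hq4] with N hlt h4
    have h4' : (4 * q N + 4 : ℝ) ≤ N := by exact_mod_cast h4
    have h0q : (0:ℝ) ≤ (q N : ℝ) := Nat.cast_nonneg _
    push_cast at h4'
    have hNpos : (0:ℝ) < N := by linarith
    have hDpos : (0:ℝ) < (N : ℝ) - 2 * q N + 1 := by linarith
    have heq : (q N : ℝ) ^ 2 / N * ((N : ℝ) / ((N : ℝ) - 2 * q N + 1))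
        = (q N : ℝ) ^ 2 / ((N : ℝ) - 2 * q N + 1) := by
      field_simp
    rw [heq, div_lt_iff₀ hDpos] at hlt
    exact hlt.le
  have hbound : ∀ᶠ N in atTop, ∀ k : ℕ,
      ‖(-1 : ℝ) ^ k * Aux q N k‖ ≤ (lam + 1) ^ k / (k.factorial : ℝ) := by
    filter_upwards [hqlt, hq4] with N hq2 h4
    have key : ∀ k : ℕ, Aux q N k ≤ (lam + 1) ^ k / (k.factorial : ℝ) := by
      intro k
      induction k with
      | zero => simpa using Aux_zero_le_one q (by omega : q N ≤ N)
      | succ k ih =>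
        rw [Aux_succ q (by omega : 2 * q N ≤ N) k]
        have hDk : ((N - 2 * q N + (k + 1) : ℕ) : ℝ) = (N : ℝ) - 2 * q N + ((k : ℝ) + 1) := by
          push_cast [(by omega : 2 * q N ≤ N)]
          ring
        have h4' : (4 * q N + 4 : ℝ) ≤ N := by exact_mod_cast h4
        have h0q : (0:ℝ) ≤ (q N : ℝ) := Nat.cast_nonneg _
        push_cast at h4'
        have hDpos : (0:ℝ) < (N : ℝ) - 2 * q N + ((k : ℝ) + 1) := by
          have : (0:ℝ) ≤ (k : ℝ) := Nat.cast_nonneg _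
          linarith
        have hfle : ((q N - k : ℕ) : ℝ) ^ 2 /
            (((k : ℝ) + 1) * ((N - 2 * q N + (k + 1) : ℕ) : ℝ)) ≤ (lam + 1) / ((k : ℝ) + 1) := by
          rw [hDk, div_le_div_iff₀ (by positivity) (by positivity)]
          have hnum : ((q N - k : ℕ) : ℝ) ^ 2 ≤ (q N : ℝ) ^ 2 := by
            have h1 : ((q N - k : ℕ) : ℝ) ≤ (q N : ℝ) := by exact_mod_cast Nat.sub_le _ _
            have h0 : (0:ℝ) ≤ ((q N - k : ℕ) : ℝ) := Nat.cast_nonneg _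
            nlinarith
          have hq2' : (q N : ℝ) ^ 2 ≤ (lam + 1) * ((N : ℝ) - 2 * q N + ((k : ℝ) + 1)) := by
            have hk0 : (0:ℝ) ≤ (k : ℝ) := Nat.cast_nonneg _
            nlinarith [hq2, mul_nonneg (by linarith : (0:ℝ) ≤ lam + 1) hk0]
          have hk0 : (0:ℝ) ≤ (k : ℝ) + 1 := by positivity
          nlinarith [mul_le_mul_of_nonneg_right (hnum.trans hq2') hk0]
        have hb0 : (0:ℝ) ≤ (lam + 1) ^ k / (k.factorial : ℝ) := by positivity
        calc Aux q N k * (((q N - k : ℕ) : ℝ) ^ 2 /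
              (((k : ℝ) + 1) * ((N - 2 * q N + (k + 1) : ℕ) : ℝ)))
            ≤ ((lam + 1) ^ k / (k.factorial : ℝ)) * ((lam + 1) / ((k : ℝ) + 1)) := by
              apply mul_le_mul ih hfle _ hb0
              positivity
          _ = (lam + 1) ^ (k + 1) / ((k + 1).factorial : ℝ) := by
              rw [Nat.factorial_succ]
              have h1 : ((k.factorial : ℝ)) ≠ 0 := by exact_mod_cast Nat.factorial_ne_zero k
              push_cast
              field_simp
              ring
    intro k
    rw [norm_mul, norm_pow, norm_neg, norm_one, one_pow, one_mul,
      Real.norm_of_nonneg (Aux_nonneg q N k)]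
    exact key k
  -- Tannery's theorem
  have htan := tendsto_tsum_of_dominated_convergence
    (f := fun (N : ℕ) (k : ℕ) => (-1 : ℝ) ^ k * Aux q N k)
    (g := fun k : ℕ => (-1 : ℝ) ^ k * (Real.exp (-lam) * lam ^ k / (k.factorial : ℝ)))
    (bound := fun k : ℕ => (lam + 1) ^ k / (k.factorial : ℝ))
    (Real.summable_pow_div_factorial (lam + 1))
    (fun k => tendsto_const_nhds.mul (hAk k)) hbound
  -- value of the limit sum
  have hval : ∑' k : ℕ, (-1 : ℝ) ^ k * (Real.exp (-lam) * lam ^ k / (k.factorial : ℝ))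
      = Real.exp (-2 * lam) := by
    have h1 : ∀ k : ℕ, (-1 : ℝ) ^ k * (Real.exp (-lam) * lam ^ k / (k.factorial : ℝ))
        = Real.exp (-lam) * ((-lam) ^ k / (k.factorial : ℝ)) := by
      intro k
      rw [neg_pow]
      ring
    rw [tsum_congr h1, tsum_mul_left]
    have h2 : ∑' k : ℕ, ((-lam) ^ k / (k.factorial : ℝ)) = Real.exp (-lam) := by
      rw [Real.exp_eq_exp_ℝ, NormedSpace.exp_eq_tsum_div]
    rw [h2, ← Real.exp_add]
    ring_nf
  rw [hval] at htan
  apply htan.congr'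
  filter_upwards [hq4] with N h4
  have hsum : ∑' k : ℕ, (-1 : ℝ) ^ k * Aux q N k
      = ∑ k ∈ Finset.range (q N + 1), (-1 : ℝ) ^ k * Aux q N k := by
    apply tsum_eq_sum
    intro k hk
    rw [Finset.mem_range, not_lt] at hk
    rw [Aux_zero_of_gt q (by omega), mul_zero]
  rw [hsum, etaSYK, Finset.mul_sum, Finset.mul_sum]
  apply Finset.sum_congr rfl
  intro k _
  have hs : (-1 : ℝ) ^ (q N) * (-1 : ℝ) ^ (q N + k) = (-1 : ℝ) ^ k := by
    rw [← pow_add, show q N + (q N + k) = 2 * q N + k by ring, pow_add, pow_mul]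
    norm_num
  rw [Aux, ← hs]
  ring
end

section
/- The total number of crossings summed over all (2p-1)!! chord diagrams with p chords equals (1/3) binom(p,2) (2p-1)!!. -/
open Finset Equiv Equiv.Perm

/-- A chord diagram on `n` points: a fixed-point-free involution of `Fin n`. -/
def IsChordDiagram {n : ℕ} (σ : Equiv.Perm (Fin n)) : Prop :=
  (∀ x, σ (σ x) = x) ∧ ∀ x, σ x ≠ x

instance {n : ℕ} (σ : Equiv.Perm (Fin n)) : Decidable (IsChordDiagram σ) := by
  unfold IsChordDiagram; infer_instance

/-- The finset of all chord diagrams with `p` chords (on `2p` points). -/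
def chordDiagrams (p : ℕ) : Finset (Equiv.Perm (Fin (2 * p))) :=
  Finset.univ.filter IsChordDiagram

/-- Two chords, identified by their left endpoints `a`, `b`, cross. -/
def Cross {n : ℕ} (σ : Equiv.Perm (Fin n)) (a b : Fin n) : Prop :=
  (a < b ∧ b < σ a ∧ σ a < σ b) ∨ (b < a ∧ a < σ b ∧ σ b < σ a)

instance {n : ℕ} (σ : Equiv.Perm (Fin n)) (a b : Fin n) : Decidable (Cross σ a b) := by
  unfold Cross; infer_instance

/-- The number of crossings of a chord diagram. -/
def crossNum {n : ℕ} (σ : Equiv.Perm (Fin n)) : ℕ :=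
  (Finset.univ.filter (fun q : Fin n × Fin n =>
    q.1 < σ q.1 ∧ q.2 < σ q.2 ∧ q.1 < q.2 ∧ Cross σ q.1 q.2)).card

/-- The number of triangles of the intersection graph of a chord diagram:
unordered triples of chords which pairwise cross. -/
def triNum {n : ℕ} (σ : Equiv.Perm (Fin n)) : ℕ :=
  (Finset.univ.filter (fun t : Fin n × Fin n × Fin n =>
    t.1 < σ t.1 ∧ t.2.1 < σ t.2.1 ∧ t.2.2 < σ t.2.2 ∧
    t.1 < t.2.1 ∧ t.2.1 < t.2.2 ∧
    Cross σ t.1 t.2.1 ∧ Cross σ t.2.1 t.2.2 ∧ Cross σ t.1 t.2.2)).card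


def fpf (n : ℕ) : Finset (Equiv.Perm (Fin n)) :=
  Finset.univ.filter IsChordDiagram

lemma mem_fpf {k : ℕ} (σ : Equiv.Perm (Fin k)) :
    σ ∈ fpf k ↔ ((∀ x, σ (σ x) = x) ∧ ∀ x, σ x ≠ x) := by
  simp [fpf, IsChordDiagram]

/-- Generic fiber lemma. -/
lemma fpf_fiber_card {n m : ℕ} (p : Fin n → Prop) [DecidablePred p]
    (e : {x // p x} ≃ Fin m) (τ0 : Equiv.Perm (Fin n))
    (h1 : ∀ x, τ0 (τ0 x) = x) (h2 : ∀ x, ¬ p x → τ0 x ≠ x)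
    (h3 : ∀ x, p x → τ0 x = x) (h4 : ∀ x, ¬ p x → ¬ p (τ0 x)) :
    ((fpf n).filter (fun σ => ∀ x, ¬ p x → σ x = τ0 x)).card = (fpf m).card := by
  have key : ∀ σ (hσ : σ ∈ (fpf n).filter (fun σ => ∀ x, ¬ p x → σ x = τ0 x)),
      ∀ x, p x ↔ p (σ x) := by
    intro σ hσ
    rw [Finset.mem_filter, mem_fpf] at hσ
    obtain ⟨⟨hinv, hfpf⟩, hagr⟩ := hσ
    intro x
    constructor
    · intro hx
      by_contra hns
      have h5 : σ (σ x) = τ0 (σ x) := hagr _ hns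
      rw [hinv] at h5
      have := h4 _ hns
      rw [← h5] at this
      exact this hx
    · intro hx
      by_contra hnx
      have : σ x = τ0 x := hagr _ hnx
      rw [this] at hx
      exact h4 _ hnx hx
  refine Finset.card_bij'
    (fun σ hσ => e.permCongr (σ.subtypePerm (fun x => (key σ hσ x).symm)))
    (fun τ _ => (Equiv.Perm.ofSubtype (e.symm.permCongr τ)) * τ0) ?hi ?hj ?li ?ri
  case hi =>
    intro σ hσ
    have hσ' := hσ
    rw [Finset.mem_filter, mem_fpf] at hσ'
    obtain ⟨⟨hinv, hfpf⟩, _⟩ := hσ'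
    rw [mem_fpf]
    constructor
    · intro y
      simp only [permCongr_apply, Equiv.symm_apply_apply]
      have : (σ.subtypePerm (fun x => (key σ hσ x).symm)) ((σ.subtypePerm (fun x => (key σ hσ x).symm)) (e.symm y)) = e.symm y :=
        Subtype.ext (hinv _)
      rw [this, Equiv.apply_symm_apply]
    · intro y hy
      apply_fun e.symm at hy
      simp only [permCongr_apply, Equiv.symm_apply_apply] at hy
      have : σ (e.symm y) = (e.symm y : Fin n) := congrArg Subtype.val hy
      exact hfpf _ this
  case hj =>
    intro τ hτ
    rw [mem_fpf] at hτ
    obtain ⟨hinv, hfpf⟩ := hτ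
    set τ' : Equiv.Perm {x // p x} := e.symm.permCongr τ with hτ'
    have hτ'inv : ∀ z, τ' (τ' z) = z := by
      intro z; simp [hτ', hinv]
    have happ_p : ∀ x (hx : p x), (Equiv.Perm.ofSubtype τ' * τ0) x = (τ' ⟨x, hx⟩ : Fin n) := by
      intro x hx
      simp only [Equiv.Perm.mul_apply, h3 x hx]
      exact Equiv.Perm.ofSubtype_apply_of_mem τ' hx
    have happ_np : ∀ x, ¬ p x → (Equiv.Perm.ofSubtype τ' * τ0) x = τ0 x := by
      intro x hx
      simp only [Equiv.Perm.mul_apply]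
      exact Equiv.Perm.ofSubtype_apply_of_not_mem τ' (h4 x hx)
    rw [Finset.mem_filter, mem_fpf]
    refine ⟨⟨?_, ?_⟩, fun x hx => happ_np x hx⟩
    · intro x
      by_cases hx : p x
      · rw [happ_p x hx, happ_p _ (τ' ⟨x, hx⟩).2]
        have := hτ'inv ⟨x, hx⟩
        rw [show (⟨(τ' ⟨x, hx⟩ : Fin n), (τ' ⟨x, hx⟩).2⟩ : {x // p x}) = τ' ⟨x, hx⟩ from rfl, this]
      · rw [happ_np x hx, happ_np _ (h4 x hx), h1]
    · intro x hx
      by_cases hpx : p x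
      · rw [happ_p x hpx] at hx
        have : τ' ⟨x, hpx⟩ = ⟨x, hpx⟩ := Subtype.ext hx
        apply_fun e at this
        simp [hτ'] at this
        exact hfpf _ this
      · rw [happ_np x hpx] at hx
        exact h2 x hpx hx
  case li =>
    intro σ hσ
    have hσ' := hσ
    rw [Finset.mem_filter, mem_fpf] at hσ'
    obtain ⟨⟨hinv, hfpf⟩, hagr⟩ := hσ'
    refine Equiv.ext fun x => ?_
    simp only [Equiv.Perm.mul_apply]
    by_cases hx : p x
    · rw [h3 x hx]
      rw [Equiv.Perm.ofSubtype_apply_of_mem _ hx]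
      simp
    · rw [Equiv.Perm.ofSubtype_apply_of_not_mem _ (h4 x hx)]
      exact (hagr x hx).symm
  case ri =>
    intro τ hτ
    have hval : ∀ y : Fin m, (Equiv.Perm.ofSubtype (e.symm.permCongr τ) * τ0) ((e.symm y : Fin n))
        = ((e.symm.permCongr τ) (e.symm y) : Fin n) := by
      intro y
      simp only [Equiv.Perm.mul_apply, h3 _ (e.symm y).2]
      exact Equiv.Perm.ofSubtype_apply_of_mem _ (e.symm y).2
    refine Equiv.ext fun y => ?_
    simp only [permCongr_apply]
    rw [Equiv.apply_eq_iff_eq_symm_apply]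
    refine Subtype.ext ?_
    rw [subtypePerm_apply]
    show (Equiv.Perm.ofSubtype (e.symm.permCongr τ) * τ0) ((e.symm y : Fin n)) = _
    rw [hval y]
    simp

lemma card_compl_pair {n : ℕ} (s : Finset (Fin n)) :
    Fintype.card {x : Fin n // x ∉ s} = n - s.card := by
  rw [Fintype.card_subtype]
  rw [Finset.filter_not, Finset.filter_mem_eq_inter, Finset.univ_inter]
  rw [Finset.card_sdiff_of_subset (Finset.subset_univ s)]
  simp

/-- one forced chord -/
lemma fpf_fiber_one {m : ℕ} (a b : Fin (m + 2)) (hab : a ≠ b) :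
    ((fpf (m + 2)).filter (fun σ => σ a = b)).card = (fpf m).card := by
  classical
  have hcard : Fintype.card {x : Fin (m+2) // x ∉ ({a, b} : Finset (Fin (m+2)))} = m := by
    rw [card_compl_pair]
    rw [Finset.card_insert_of_notMem (by simpa using hab), Finset.card_singleton]
    omega
  have e : {x : Fin (m+2) // x ∉ ({a, b} : Finset (Fin (m+2)))} ≃ Fin m :=
    Fintype.equivFinOfCardEq hcard
  have h := fpf_fiber_card (fun x => x ∉ ({a, b} : Finset (Fin (m+2)))) e (Equiv.swap a b)
    (fun x => Equiv.swap_apply_self a b x)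
    (by
      intro x hx
      simp only [Finset.mem_insert, Finset.mem_singleton, not_not] at hx
      rcases hx with rfl | rfl
      · rw [Equiv.swap_apply_left]; exact hab.symm
      · rw [Equiv.swap_apply_right]; exact hab)
    (by
      intro x hx
      simp only [Finset.mem_insert, Finset.mem_singleton] at hx
      push_neg at hx
      exact Equiv.swap_apply_of_ne_of_ne hx.1 hx.2)
    (by
      intro x hx
      simp only [Finset.mem_insert, Finset.mem_singleton, not_not] at hx ⊢
      rcases hx with rfl | rfl
      · rw [Equiv.swap_apply_left]; right; rfl
      · rw [Equiv.swap_apply_right]; left; rfl)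
  rw [← h]
  congr 1
  apply Finset.filter_congr
  intro σ hσ
  rw [mem_fpf] at hσ
  obtain ⟨hinv, _⟩ := hσ
  constructor
  · intro h1 x hx
    simp only [Finset.mem_insert, Finset.mem_singleton, not_not] at hx
    rcases hx with rfl | rfl
    · rw [h1, Equiv.swap_apply_left]
    · rw [Equiv.swap_apply_right, ← h1]; exact hinv a
  · intro h1
    have := h1 a (by simp)
    rwa [Equiv.swap_apply_left] at this

/-- two forced chords a-c and b-d -/
lemma fpf_fiber_two {m : ℕ} (a b c d : Fin (m + 4))
    (hab : a ≠ b) (hac : a ≠ c) (had : a ≠ d) (hbc : b ≠ c) (hbd : b ≠ d) (hcd : c ≠ d) :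
    ((fpf (m + 4)).filter (fun σ => σ a = c ∧ σ b = d)).card = (fpf m).card := by
  classical
  set s : Finset (Fin (m+4)) := {a, b, c, d} with hs
  have hmem : ∀ x, x ∈ s ↔ (x = a ∨ x = b ∨ x = c ∨ x = d) := by
    intro x; simp [hs]
  have hcard : Fintype.card {x : Fin (m+4) // x ∉ s} = m := by
    rw [card_compl_pair]
    have : s.card = 4 := by
      rw [hs]
      rw [Finset.card_insert_of_notMem (by simp [hab, hac, had]),
        Finset.card_insert_of_notMem (by simp [hbc, hbd]),
        Finset.card_insert_of_notMem (by simp [hcd]), Finset.card_singleton]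
    rw [this]
    omega
  have e : {x : Fin (m+4) // x ∉ s} ≃ Fin m := Fintype.equivFinOfCardEq hcard
  set τ0 : Equiv.Perm (Fin (m+4)) := Equiv.swap a c * Equiv.swap b d with hτ0
  have hτa : τ0 a = c := by
    rw [hτ0]; simp only [Equiv.Perm.mul_apply]
    rw [Equiv.swap_apply_of_ne_of_ne hab had, Equiv.swap_apply_left]
  have hτb : τ0 b = d := by
    rw [hτ0]; simp only [Equiv.Perm.mul_apply]
    rw [Equiv.swap_apply_left, Equiv.swap_apply_of_ne_of_ne had.symm hcd.symm]
  have hτc : τ0 c = a := by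
    rw [hτ0]; simp only [Equiv.Perm.mul_apply]
    rw [Equiv.swap_apply_of_ne_of_ne hbc.symm hcd, Equiv.swap_apply_right]
  have hτd : τ0 d = b := by
    rw [hτ0]; simp only [Equiv.Perm.mul_apply]
    rw [Equiv.swap_apply_right, Equiv.swap_apply_of_ne_of_ne hab.symm hbc]
  have hτfix : ∀ x, x ∉ s → τ0 x = x := by
    intro x hx
    rw [hmem] at hx; push_neg at hx
    rw [hτ0]; simp only [Equiv.Perm.mul_apply]
    rw [Equiv.swap_apply_of_ne_of_ne hx.2.1 hx.2.2.2,
      Equiv.swap_apply_of_ne_of_ne hx.1 hx.2.2.1]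
  have h := fpf_fiber_card (fun x => x ∉ s) e τ0
    (by
      intro x
      by_cases hx : x ∈ s
      · rw [hmem] at hx
        rcases hx with rfl | rfl | rfl | rfl
        · rw [hτa, hτc]
        · rw [hτb, hτd]
        · rw [hτc, hτa]
        · rw [hτd, hτb]
      · rw [hτfix x hx, hτfix x hx])
    (by
      intro x hx
      simp only [not_not] at hx
      rw [hmem] at hx
      rcases hx with rfl | rfl | rfl | rfl
      · rw [hτa]; exact hac.symm
      · rw [hτb]; exact hbd.symm
      · rw [hτc]; exact hac
      · rw [hτd]; exact hbd)
    (fun x hx => hτfix x hx)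
    (by
      intro x hx
      simp only [not_not] at hx ⊢
      rw [hmem] at hx
      rw [hmem]
      rcases hx with rfl | rfl | rfl | rfl
      · rw [hτa]; tauto
      · rw [hτb]; tauto
      · rw [hτc]; tauto
      · rw [hτd]; tauto)
  rw [← h]
  congr 1
  apply Finset.filter_congr
  intro σ hσ
  rw [mem_fpf] at hσ
  obtain ⟨hinv, _⟩ := hσ
  constructor
  · intro h1 x hx
    simp only [not_not] at hx
    rw [hmem] at hx
    rcases hx with rfl | rfl | rfl | rfl
    · rw [h1.1, hτa]
    · rw [h1.2, hτb]
    · rw [hτc, ← h1.1]; exact hinv _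
    · rw [hτd, ← h1.2]; exact hinv _
  · intro h1
    constructor
    · have := h1 a (by simp [hmem])
      rwa [hτa] at this
    · have := h1 b (by simp [hmem])
      rwa [hτb] at this

lemma doubleFactorial_odd (k : ℕ) :
    Nat.doubleFactorial (2 * k + 1) = (2 * k + 1) * Nat.doubleFactorial (2 * k - 1) := by
  cases k with
  | zero => rfl
  | succ k =>
    have : 2 * (k + 1) + 1 = (2 * k + 1) + 2 := by ring
    rw [this, Nat.doubleFactorial_add_two]
    congr 1

lemma card_fpf (k : ℕ) : (fpf (2 * k)).card = Nat.doubleFactorial (2 * k - 1) := by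
  induction k with
  | zero =>
    decide
  | succ k ih =>
    have h2 : 2 * (k + 1) = (2 * k) + 2 := by ring
    rw [h2]
    -- partition by image of 0
    have h0 : ∀ σ ∈ fpf (2 * k + 2), σ 0 ∈ (Finset.univ.erase (0 : Fin (2 * k + 2))) := by
      intro σ hσ
      rw [mem_fpf] at hσ
      simp [hσ.2 0]
    rw [Finset.card_eq_sum_card_fiberwise h0]
    have : ∀ b ∈ Finset.univ.erase (0 : Fin (2 * k + 2)),
        ((fpf (2 * k + 2)).filter (fun σ => σ 0 = b)).card = (fpf (2 * k)).card := by
      intro b hb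
      exact fpf_fiber_one 0 b (Ne.symm (Finset.mem_erase.mp hb).1)
    rw [Finset.sum_congr rfl this, Finset.sum_const, Finset.card_erase_of_mem (Finset.mem_univ _),
      Finset.card_univ, Fintype.card_fin, smul_eq_mul, ih]
    have e1 : 2 * k + 2 - 1 = 2 * k + 1 := by omega
    rw [e1, doubleFactorial_odd]

lemma card_quadruples (n : ℕ) :
    ((Finset.univ : Finset ((Fin n × Fin n) × Fin n × Fin n)).filter
      (fun x => x.1.1 < x.1.2 ∧ x.1.2 < x.2.1 ∧ x.2.1 < x.2.2)).card = n.choose 4 := by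
  classical
  have hb : ((Finset.univ : Finset ((Fin n × Fin n) × Fin n × Fin n)).filter
      (fun x => x.1.1 < x.1.2 ∧ x.1.2 < x.2.1 ∧ x.2.1 < x.2.2)).card
      = ((Finset.univ : Finset (Fin n)).powersetCard 4).card := by
    apply Finset.card_bij (fun x _ => ({x.1.1, x.1.2, x.2.1, x.2.2} : Finset (Fin n)))
    · -- maps into powersetCard 4
      rintro ⟨⟨a, b⟩, c, d⟩ hx
      simp only [Finset.mem_filter] at hx
      obtain ⟨-, h1, h2, h3⟩ := hx
      rw [Finset.mem_powersetCard]
      refine ⟨Finset.subset_univ _, ?_⟩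
      rw [Finset.card_insert_of_notMem (by simp; omega),
        Finset.card_insert_of_notMem (by simp; omega),
        Finset.card_insert_of_notMem (by simp; omega), Finset.card_singleton]
    · -- injective
      rintro ⟨⟨a, b⟩, c, d⟩ h1 ⟨⟨a', b'⟩, c', d'⟩ h2 heq
      simp only [Finset.mem_filter] at h1 h2
      obtain ⟨-, ha1, hb1, hc1⟩ := h1
      obtain ⟨-, ha2, hb2, hc2⟩ := h2
      dsimp only at heq
      -- strictly monotone enumerations of the same set agree
      have hmono : StrictMono (![a, b, c, d] : Fin 4 → Fin n) := by
        simp only [strictMono_vecCons, strictMono_vecEmpty, and_true,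
          Matrix.cons_val_zero]
        exact ⟨ha1, hb1, hc1, strictMono_vecEmpty⟩
      have hmono' : StrictMono (![a', b', c', d'] : Fin 4 → Fin n) := by
        simp only [strictMono_vecCons, strictMono_vecEmpty, and_true,
          Matrix.cons_val_zero]
        exact ⟨ha2, hb2, hc2, strictMono_vecEmpty⟩
      set s : Finset (Fin n) := {a, b, c, d} with hs
      have hscard : s.card = 4 := by
        rw [hs, Finset.card_insert_of_notMem (by simp; omega),
          Finset.card_insert_of_notMem (by simp; omega),
          Finset.card_insert_of_notMem (by simp; omega), Finset.card_singleton]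
      have hmem : ∀ i, (![a, b, c, d] : Fin 4 → Fin n) i ∈ s := by
        intro i; fin_cases i <;> simp [hs]
      have hmem' : ∀ i, (![a', b', c', d'] : Fin 4 → Fin n) i ∈ s := by
        intro i
        rw [heq]
        fin_cases i <;> simp
      have e1 := Finset.orderEmbOfFin_unique hscard hmem hmono
      have e2 := Finset.orderEmbOfFin_unique hscard hmem' hmono'
      have : (![a, b, c, d] : Fin 4 → Fin n) = ![a', b', c', d'] := by rw [e1, e2]
      have q0 := congrFun this 0
      have q1 := congrFun this 1
      have q2 := congrFun this 2
      have q3 := congrFun this 3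
      simp only [Matrix.cons_val_zero, Matrix.cons_val_one, Matrix.cons_val_two,
        Matrix.cons_val_three, Matrix.head_cons, Matrix.vecHead, Matrix.vecTail,
        Function.comp_apply, Fin.succ] at q0 q1 q2 q3
      exact Prod.ext (Prod.ext q0 q1) (Prod.ext q2 q3)
    · -- surjective
      intro s hs
      rw [Finset.mem_powersetCard] at hs
      obtain ⟨-, hcard⟩ := hs
      set g := s.orderEmbOfFin hcard with hg
      refine ⟨((g 0, g 1), g 2, g 3), ?_, ?_⟩
      · simp only [Finset.mem_filter]
        refine ⟨Finset.mem_univ _, ?_, ?_, ?_⟩ <;>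
          exact (s.orderEmbOfFin hcard).strictMono (by decide)
      · -- image set equals s
        dsimp only
        have hm := (s.orderEmbOfFin hcard).strictMono
        have h01 : g 0 < g 1 := hm (by decide)
        have h12 : g 1 < g 2 := hm (by decide)
        have h23 : g 2 < g 3 := hm (by decide)
        apply Finset.eq_of_subset_of_card_le
        · intro x hx
          simp only [Finset.mem_insert, Finset.mem_singleton] at hx
          rcases hx with rfl | rfl | rfl | rfl <;> exact Finset.orderEmbOfFin_mem s hcard _
        · rw [hcard, Finset.card_insert_of_notMem (by simp),
            Finset.card_insert_of_notMem (by simp),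
            Finset.card_insert_of_notMem (by simp), Finset.card_singleton]
  rw [hb, Finset.card_powersetCard, Finset.card_univ, Fintype.card_fin]

lemma key_sum (m : ℕ) :
    ∑ σ ∈ fpf (m + 4), crossNum σ = (m + 4).choose 4 * (fpf m).card := by
  classical
  have step1 : ∑ σ ∈ fpf (m + 4), crossNum σ
      = ∑ q : Fin (m+4) × Fin (m+4), ∑ σ ∈ fpf (m + 4),
          if q.1 < σ q.1 ∧ q.2 < σ q.2 ∧ q.1 < q.2 ∧ Cross σ q.1 q.2 then 1 else 0 := by
    rw [Finset.sum_comm]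
    apply Finset.sum_congr rfl
    intro σ _
    rw [crossNum, Finset.card_filter]
  rw [step1]
  -- inner: for each q = (a, b), compute the number of σ
  have step2 : ∀ q : Fin (m+4) × Fin (m+4),
      (∑ σ ∈ fpf (m + 4),
        if q.1 < σ q.1 ∧ q.2 < σ q.2 ∧ q.1 < q.2 ∧ Cross σ q.1 q.2 then 1 else 0)
      = ∑ cd : Fin (m+4) × Fin (m+4),
          if q.1 < q.2 ∧ q.2 < cd.1 ∧ cd.1 < cd.2 then (fpf m).card else 0 := by
    rintro ⟨a, b⟩
    rw [← Finset.card_filter]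
    rw [Finset.card_eq_sum_card_fiberwise
      (f := fun σ => (σ a, σ b)) (t := Finset.univ) (fun σ _ => Finset.mem_univ _)]
    apply Finset.sum_congr rfl
    rintro ⟨c, d⟩ -
    by_cases h : a < b ∧ b < c ∧ c < d
    · rw [if_pos ⟨h.1, h.2⟩]
      obtain ⟨hab, hbc, hcd⟩ := h
      rw [Finset.filter_filter]
      have hfe : ((fpf (m+4)).filter
            (fun σ => ((fun σ => a < σ a ∧ b < σ b ∧ a < b ∧ Cross σ a b) σ) ∧ (σ a, σ b) = (c, d)))
          = (fpf (m+4)).filter (fun σ => σ a = c ∧ σ b = d) := by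
        apply Finset.filter_congr
        intro σ _
        simp only [Prod.mk.injEq]
        constructor
        · rintro ⟨-, h2⟩; exact h2
        · rintro ⟨h1, h2⟩
          refine ⟨⟨?_, ?_, hab, Or.inl ⟨hab, ?_, ?_⟩⟩, h1, h2⟩
          · rw [h1]; exact lt_trans hab hbc
          · rw [h2]; exact lt_trans hbc hcd
          · rw [h1]; exact hbc
          · rw [h1, h2]; exact hcd
      rw [hfe]
      exact fpf_fiber_two a b c d (ne_of_lt hab) (ne_of_lt (lt_trans hab hbc))
        (ne_of_lt (lt_trans hab (lt_trans hbc hcd))) (ne_of_lt hbc)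
        (ne_of_lt (lt_trans hbc hcd)) (ne_of_lt hcd)
    · rw [if_neg h, Finset.card_eq_zero]
      rw [Finset.eq_empty_iff_forall_notMem]
      intro σ hσ
      simp only [Finset.mem_filter, Prod.mk.injEq] at hσ
      obtain ⟨⟨-, -, -, hab, hcr⟩, h1, h2⟩ := hσ
      apply h
      refine ⟨hab, ?_⟩
      rcases hcr with ⟨-, hx, hy⟩ | ⟨hba, -⟩
      · rw [h1] at hx; rw [h1, h2] at hy; exact ⟨hx, hy⟩
      · exact absurd hab (lt_asymm hba)
  rw [Finset.sum_congr rfl (fun q _ => step2 q)]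
  rw [← Fintype.sum_prod_type']
  rw [Finset.sum_ite, Finset.sum_const, Finset.sum_const_zero, add_zero, smul_eq_mul]
  rw [card_quadruples]


/-- The total number of crossings over all (2p-1)!! chord diagrams with p chords. -/
theorem total_crossings (p : ℕ) :
    (∑ σ ∈ chordDiagrams p, (crossNum σ : ℚ)) =
      (1 / 3) * (p.choose 2) * (Nat.doubleFactorial (2 * p - 1)) := by
  have hcast : (∑ σ ∈ chordDiagrams p, (crossNum σ : ℚ))
      = ((∑ σ ∈ chordDiagrams p, crossNum σ : ℕ) : ℚ) := by
    push_cast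
    rfl
  rw [hcast]
  rcases p with _ | _ | k
  · have hz : (∑ σ ∈ chordDiagrams 0, crossNum σ) = 0 := by decide
    rw [hz]
    norm_num
  · have hz : (∑ σ ∈ chordDiagrams 1, crossNum σ) = 0 := by decide
    rw [hz]
    norm_num
  · -- p = k + 2
    have hs : (∑ σ ∈ chordDiagrams (k + 2), crossNum σ)
        = (2 * k + 4).choose 4 * (fpf (2 * k)).card := key_sum (2 * k)
    rw [card_fpf] at hs
    rw [hs]
    have e1 : 2 * (k + 2) - 1 = (2 * k + 1) + 2 := by omega
    rw [e1, Nat.doubleFactorial_add_two, doubleFactorial_odd]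
    have h4 : 24 * (2 * k + 4).choose 4 = (2*k+4)*(2*k+3)*(2*k+2)*(2*k+1) := by
      have hd := Nat.descFactorial_eq_factorial_mul_choose (2*k+4) 4
      rw [show (Nat.factorial 4) = 24 from rfl] at hd
      rw [← hd]
      simp only [Nat.descFactorial_succ, Nat.descFactorial_zero, mul_one, Nat.sub_zero]
      rw [show 2*k+4-1 = 2*k+3 by omega, show 2*k+4-2 = 2*k+2 by omega,
        show 2*k+4-3 = 2*k+1 by omega]
      ring
    have h2 : 2 * (k + 2).choose 2 = (k+2)*(k+1) := by
      have hd := Nat.descFactorial_eq_factorial_mul_choose (k+2) 2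
      rw [show (Nat.factorial 2) = 2 from rfl] at hd
      rw [← hd]
      simp only [Nat.descFactorial_succ, Nat.descFactorial_zero, mul_one, Nat.sub_zero]
      rw [show k+2-1 = k+1 by omega]
      ring
    have h4Q : (24 : ℚ) * ((2 * k + 4).choose 4 : ℚ)
        = (2*(k:ℚ)+4)*(2*k+3)*(2*k+2)*(2*k+1) := by exact_mod_cast congrArg Nat.cast h4
    have h2Q : (2 : ℚ) * ((k + 2).choose 2 : ℚ) = ((k:ℚ)+2)*(k+1) := by
      exact_mod_cast congrArg Nat.cast h2
    set D : ℚ := (Nat.doubleFactorial (2 * k - 1) : ℚ) with hD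
    push_cast
    linear_combination (D/24) * h4Q - ((2*(k:ℚ)+3)*(2*k+1)*D/6) * h2Q
end

section
/- The graded crossing count: Σ_i (-1)^{E_i} E_i = -binom(p,2), where the sum is over all (2p-1)!! chord diagrams with p chords and E_i is the crossing number of the i-th diagram. -/
open Finset

/-- Matchings on n points (any n). -/
def matchings (n : ℕ) : Finset (Equiv.Perm (Fin n)) :=
  Finset.univ.filter IsChordDiagram

/-- Number of chords straddling the gap before position ℓ. -/
def straddle {n : ℕ} (σ : Equiv.Perm (Fin n)) (ℓ : ℕ) : ℕ :=
  (Finset.univ.filter (fun a : Fin n => a.val < ℓ ∧ ℓ ≤ (σ a).val)).card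

section Decomp

variable {m : ℕ}

/-- order embedding of Fin m into Fin (m+2) missing 0 and j'+1. -/
def eIdx (j' : Fin (m+1)) (i : Fin m) : Fin (m+2) :=
  ⟨if i.val < j'.val then i.val + 1 else i.val + 2, by have := i.isLt; split <;> omega⟩

lemma eIdx_val (j' : Fin (m+1)) (i : Fin m) :
    (eIdx j' i).val = if i.val < j'.val then i.val + 1 else i.val + 2 := rfl

lemma eIdx_ne_zero (j' : Fin (m+1)) (i : Fin m) : (eIdx j' i).val ≠ 0 := by
  rw [eIdx_val]; split <;> omega

lemma eIdx_ne_j (j' : Fin (m+1)) (i : Fin m) : (eIdx j' i).val ≠ j'.val + 1 := by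
  rw [eIdx_val]; split <;> omega

lemma eIdx_lt_iff (j' : Fin (m+1)) (i k : Fin m) : eIdx j' i < eIdx j' k ↔ i < k := by
  simp only [Fin.lt_def, eIdx_val]
  split <;> split <;> omega

lemma eIdx_inj (j' : Fin (m+1)) {i k : Fin m} (h : eIdx j' i = eIdx j' k) : i = k := by
  have := congrArg Fin.val h
  simp only [eIdx_val] at this
  apply Fin.ext
  split at this <;> split at this <;> omega

/-- the master comparison lemma: `ℓ' = if ℓ ≤ j'+1 then ℓ-1 else ℓ-2` pulls back the gap. -/
lemma eIdx_gap (j' : Fin (m+1)) (k : Fin m) (ℓ : ℕ) :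
    ((eIdx j' k).val < ℓ ↔ k.val < (if ℓ ≤ j'.val + 1 then ℓ - 1 else ℓ - 2)) ∧
    (ℓ ≤ (eIdx j' k).val ↔ (if ℓ ≤ j'.val + 1 then ℓ - 1 else ℓ - 2) ≤ k.val) := by
  simp only [eIdx_val]
  split <;> split <;> omega

lemma exists_eIdx (j' : Fin (m+1)) (x : Fin (m+2)) (h0 : x.val ≠ 0)
    (hj : x.val ≠ j'.val + 1) : ∃ i, eIdx j' i = x := by
  have hx := x.isLt
  by_cases h : x.val ≤ j'.val
  · exact ⟨⟨x.val - 1, by omega⟩, by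
      apply Fin.ext; simp only [eIdx_val, Fin.val_mk]; split <;> omega⟩
  · exact ⟨⟨x.val - 2, by omega⟩, by
      apply Fin.ext; simp only [eIdx_val, Fin.val_mk]; split <;> omega⟩

/-- the point paired with 0. -/
def jpt (j' : Fin (m+1)) : Fin (m+2) := ⟨j'.val + 1, by have := j'.isLt; omega⟩

/-- The lift function: partner 0 with j'+1, conjugate σ by eIdx elsewhere. -/
def liftFun (j' : Fin (m+1)) (σ : Equiv.Perm (Fin m)) (x : Fin (m+2)) : Fin (m+2) :=
  if h0 : x.val = 0 then jpt j'
  else if hj : x.val = j'.val + 1 then 0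
  else if h : x.val ≤ j'.val then
    eIdx j' (σ ⟨x.val - 1, by have := j'.isLt; omega⟩)
  else
    eIdx j' (σ ⟨x.val - 2, by have := x.isLt; omega⟩)

lemma liftFun_zero (j' : Fin (m+1)) (σ : Equiv.Perm (Fin m)) :
    liftFun j' σ 0 = jpt j' := rfl

lemma liftFun_j (j' : Fin (m+1)) (σ : Equiv.Perm (Fin m)) :
    liftFun j' σ (jpt j') = 0 := by
  unfold liftFun
  split_ifs with h0 hj h
  · exact absurd h0 (by simp [jpt])
  · rfl
  · exact absurd rfl hj
  · exact absurd rfl hj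

lemma liftFun_eIdx (j' : Fin (m+1)) (σ : Equiv.Perm (Fin m)) (i : Fin m) :
    liftFun j' σ (eIdx j' i) = eIdx j' (σ i) := by
  unfold liftFun
  split_ifs with h0 hj h
  · exact absurd h0 (eIdx_ne_zero j' i)
  · exact absurd hj (eIdx_ne_j j' i)
  · refine congrArg _ (congrArg _ (Fin.ext ?_))
    simp only [Fin.val_mk]
    rw [eIdx_val] at h ⊢
    split_ifs at h ⊢ <;> omega
  · refine congrArg _ (congrArg _ (Fin.ext ?_))
    simp only [Fin.val_mk]
    rw [eIdx_val] at h ⊢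
    split_ifs at h ⊢ <;> omega

lemma liftFun_comp (j' : Fin (m+1)) (σ τ : Equiv.Perm (Fin m))
    (hστ : ∀ i, τ (σ i) = i) (x : Fin (m+2)) : liftFun j' τ (liftFun j' σ x) = x := by
  by_cases h0 : x.val = 0
  · have : x = 0 := Fin.ext h0
    subst this
    rw [liftFun_zero, liftFun_j]
  · by_cases hj : x.val = j'.val + 1
    · have : x = jpt j' := Fin.ext hj
      rw [this, liftFun_j]
      rfl
    · obtain ⟨i, rfl⟩ := exists_eIdx j' x h0 hj
      rw [liftFun_eIdx, liftFun_eIdx, hστ]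

/-- The lifted permutation. -/
def lift (j' : Fin (m+1)) (σ : Equiv.Perm (Fin m)) : Equiv.Perm (Fin (m+2)) where
  toFun := liftFun j' σ
  invFun := liftFun j' σ⁻¹
  left_inv := liftFun_comp j' σ σ⁻¹ (fun i => σ.symm_apply_apply i)
  right_inv := liftFun_comp j' σ⁻¹ σ (fun i => σ.apply_symm_apply i)

lemma lift_zero (j' : Fin (m+1)) (σ : Equiv.Perm (Fin m)) :
    lift j' σ 0 = jpt j' := rfl

lemma lift_j (j' : Fin (m+1)) (σ : Equiv.Perm (Fin m)) :
    lift j' σ (jpt j') = 0 := liftFun_j j' σ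

lemma lift_eIdx (j' : Fin (m+1)) (σ : Equiv.Perm (Fin m)) (i : Fin m) :
    lift j' σ (eIdx j' i) = eIdx j' (σ i) := liftFun_eIdx j' σ i

lemma lift_mem (j' : Fin (m+1)) {σ : Equiv.Perm (Fin m)} (hσ : σ ∈ matchings m) :
    lift j' σ ∈ matchings (m+2) := by
  simp only [matchings, mem_filter, mem_univ, true_and] at hσ ⊢
  obtain ⟨hinv, hfpf⟩ := hσ
  constructor
  · intro x
    by_cases h0 : x.val = 0
    · have : x = 0 := Fin.ext h0
      subst this
      rw [lift_zero, lift_j]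
    · by_cases hj : x.val = j'.val + 1
      · have : x = jpt j' := Fin.ext hj
        rw [this, lift_j, lift_zero]
      · obtain ⟨i, rfl⟩ := exists_eIdx j' x h0 hj
        rw [lift_eIdx, lift_eIdx, hinv]
  · intro x
    by_cases h0 : x.val = 0
    · have : x = 0 := Fin.ext h0
      subst this
      rw [lift_zero]
      intro h
      have := congrArg Fin.val h
      simp [jpt] at this
    · by_cases hj : x.val = j'.val + 1
      · have : x = jpt j' := Fin.ext hj
        rw [this, lift_j]
        intro h
        have := congrArg Fin.val h
        simp [jpt] at this
      · obtain ⟨i, rfl⟩ := exists_eIdx j' x h0 hj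
        rw [lift_eIdx]
        intro h
        exact hfpf i (eIdx_inj j' h)


def invIdx (j' : Fin (m+1)) (x : Fin (m+2)) (h0 : x.val ≠ 0) (hj : x.val ≠ j'.val + 1) :
    Fin m :=
  if h : x.val ≤ j'.val then ⟨x.val - 1, by have := j'.isLt; omega⟩
  else ⟨x.val - 2, by have := x.isLt; omega⟩

lemma eIdx_invIdx (j' : Fin (m+1)) (x : Fin (m+2)) (h0 : x.val ≠ 0)
    (hj : x.val ≠ j'.val + 1) : eIdx j' (invIdx j' x h0 hj) = x := by
  have hx := x.isLt
  have hjm := j'.isLt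
  apply Fin.ext
  unfold invIdx
  split_ifs with h <;> (simp only [eIdx_val, Fin.val_mk]; split_ifs <;> omega)

lemma coe_toPerm {α : Type*} (f : α → α) (h : Function.Involutive f) (x : α) :
    h.toPerm f x = f x := rfl

lemma lift_surj (τ : Equiv.Perm (Fin (m+2))) (hτ : τ ∈ matchings (m+2)) :
    ∃ (j' : Fin (m+1)) (σ : Equiv.Perm (Fin m)), σ ∈ matchings m ∧ lift j' σ = τ := by
  simp only [matchings, mem_filter, mem_univ, true_and] at hτ
  obtain ⟨hinv, hfpf⟩ := hτ
  have h0 : (τ 0).val ≠ 0 := fun h => hfpf 0 (Fin.ext h)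
  have hlt := (τ 0).isLt
  refine ⟨⟨(τ 0).val - 1, by omega⟩, ?_⟩
  set j' : Fin (m+1) := ⟨(τ 0).val - 1, by omega⟩ with hj'
  have hjpt : jpt j' = τ 0 := by
    apply Fin.ext
    simp only [jpt, hj', Fin.val_mk]
    omega
  have key : ∀ i : Fin m, (τ (eIdx j' i)).val ≠ 0 ∧ (τ (eIdx j' i)).val ≠ j'.val + 1 := by
    intro i
    constructor
    · intro h
      have h1 : τ (eIdx j' i) = 0 := Fin.ext h
      have h2 : eIdx j' i = τ 0 := by rw [← h1, hinv]
      have h3 : (eIdx j' i).val = (jpt j').val := by rw [h2, hjpt]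
      exact eIdx_ne_j j' i h3
    · intro h
      have h1 : τ (eIdx j' i) = jpt j' := Fin.ext (by simp only [jpt, Fin.val_mk]; exact h)
      have h2 : τ (eIdx j' i) = τ 0 := h1.trans hjpt
      have h3 := τ.injective h2
      exact eIdx_ne_zero j' i (congrArg Fin.val h3)
  set f : Fin m → Fin m := fun i => invIdx j' (τ (eIdx j' i)) (key i).1 (key i).2 with hf
  have hfe : ∀ i, eIdx j' (f i) = τ (eIdx j' i) := fun i => eIdx_invIdx j' _ _ _
  have hinvol : Function.Involutive f := by
    intro i
    apply eIdx_inj j'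
    rw [hfe, hfe, hinv]
  refine ⟨hinvol.toPerm f, ?_, ?_⟩
  · simp only [matchings, mem_filter, mem_univ, true_and]
    constructor
    · intro x
      exact hinvol x
    · intro x hx
      have : τ (eIdx j' x) = eIdx j' x := by rw [← hfe, show f x = x from hx]
      exact hfpf _ this
  · apply Equiv.ext
    intro x
    by_cases hx0 : x.val = 0
    · have : x = 0 := Fin.ext hx0
      subst this
      rw [lift_zero, hjpt]
    · by_cases hxj : x.val = j'.val + 1
      · have hx : x = jpt j' := Fin.ext hxj
        rw [hx, lift_j, hjpt]
        rw [hinv]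
      · obtain ⟨i, rfl⟩ := exists_eIdx j' x hx0 hxj
        rw [lift_eIdx, coe_toPerm, hfe]

lemma sum_decomp (F : Equiv.Perm (Fin (m+2)) → ℤ) :
    ∑ τ ∈ matchings (m+2), F τ = ∑ j' : Fin (m+1), ∑ σ ∈ matchings m, F (lift j' σ) := by
  rw [← Finset.sum_product']
  refine (Finset.sum_bij (fun x _ => lift x.1 x.2) ?_ ?_ ?_ ?_).symm
  · intro a ha
    rw [Finset.mem_product] at ha
    exact lift_mem a.1 ha.2
  · intro a₁ h₁ a₂ h₂ heq
    have hj : a₁.1 = a₂.1 := by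
      have h0 := congrArg (fun π : Equiv.Perm (Fin (m+2)) => π 0) heq
      simp only [lift_zero] at h0
      have := congrArg Fin.val h0
      simp only [jpt, Fin.val_mk] at this
      exact Fin.ext (by omega)
    have hσ : a₁.2 = a₂.2 := by
      apply Equiv.ext
      intro i
      have h1 := congrArg (fun π : Equiv.Perm (Fin (m+2)) => π (eIdx a₁.1 i)) heq
      rw [lift_eIdx, hj, lift_eIdx] at h1
      exact eIdx_inj _ h1
    exact Prod.ext hj hσ
  · intro τ hτ
    obtain ⟨j', σ, hσ, hlift⟩ := lift_surj τ hτ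
    exact ⟨(j', σ), Finset.mem_product.mpr ⟨Finset.mem_univ _, hσ⟩, hlift⟩
  · intro a ha
    rfl


lemma zero_lt_eIdx (j' : Fin (m+1)) (i : Fin m) : (0 : Fin (m+2)) < eIdx j' i := by
  rw [Fin.lt_def]
  have := eIdx_ne_zero j' i
  simp only [Fin.val_zero]
  omega

lemma eIdx_lt_jpt (j' : Fin (m+1)) (k : Fin m) : eIdx j' k < jpt j' ↔ k.val < j'.val := by
  rw [Fin.lt_def]
  show (eIdx j' k).val < j'.val + 1 ↔ _
  have := (eIdx_gap j' k (j'.val + 1)).1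
  rw [if_pos (le_refl _)] at this
  rw [this]
  omega

lemma jpt_lt_eIdx (j' : Fin (m+1)) (k : Fin m) : jpt j' < eIdx j' k ↔ j'.val ≤ k.val := by
  rw [Fin.lt_def]
  show j'.val + 1 < (eIdx j' k).val ↔ _
  have := (eIdx_gap j' k (j'.val + 2)).2
  rw [if_neg (by omega)] at this
  constructor
  · intro h
    have h2 : j'.val + 2 ≤ (eIdx j' k).val := by omega
    have := this.mp h2
    omega
  · intro h
    have h2 : j'.val + 2 - 2 ≤ k.val := by omega
    have := this.mpr h2
    omega

lemma cross_lift (j' : Fin (m+1)) (σ : Equiv.Perm (Fin m)) (a b : Fin m) :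
    Cross (lift j' σ) (eIdx j' a) (eIdx j' b) ↔ Cross σ a b := by
  unfold Cross
  rw [lift_eIdx, lift_eIdx]
  simp only [eIdx_lt_iff]

lemma cross_lift_zero (j' : Fin (m+1)) (σ : Equiv.Perm (Fin m)) (a : Fin m) :
    Cross (lift j' σ) 0 (eIdx j' a) ↔ (a.val < j'.val ∧ j'.val ≤ (σ a).val) := by
  unfold Cross
  rw [lift_zero, lift_eIdx]
  constructor
  · rintro (⟨h1, h2, h3⟩ | ⟨h1, _, _⟩)
    · exact ⟨(eIdx_lt_jpt j' a).mp h2, (jpt_lt_eIdx j' (σ a)).mp h3⟩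
    · exact absurd h1 (Fin.not_lt_zero _)
  · rintro ⟨h1, h2⟩
    exact Or.inl ⟨zero_lt_eIdx j' a, (eIdx_lt_jpt j' a).mpr h1,
      (jpt_lt_eIdx j' (σ a)).mpr h2⟩

lemma straddle_lift (j' : Fin (m+1)) (σ : Equiv.Perm (Fin m)) (ℓ : ℕ) :
    straddle (lift j' σ) ℓ =
      straddle σ (if ℓ ≤ j'.val + 1 then ℓ - 1 else ℓ - 2) +
        (if 1 ≤ ℓ ∧ ℓ ≤ j'.val + 1 then 1 else 0) := by
  set ℓ' := if ℓ ≤ j'.val + 1 then ℓ - 1 else ℓ - 2 with hℓ'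
  unfold straddle
  rw [← Finset.card_filter_add_card_filter_not
    (s := Finset.univ.filter (fun x : Fin (m+2) => x.val < ℓ ∧ ℓ ≤ ((lift j' σ) x).val))
    (p := fun x => x = 0)]
  conv_rhs => rw [Nat.add_comm]
  congr 1
  · -- the x = 0 part
    by_cases hχ : 1 ≤ ℓ ∧ ℓ ≤ j'.val + 1
    · rw [if_pos hχ]
      have hset : ((Finset.univ.filter (fun x : Fin (m+2) => x.val < ℓ ∧ ℓ ≤ ((lift j' σ) x).val)).filter
          (fun x => x = 0)) = {0} := by
        ext x
        simp only [mem_filter, mem_univ, true_and, Finset.mem_singleton]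
        constructor
        · rintro ⟨_, h⟩; exact h
        · rintro rfl
          refine ⟨⟨?_, ?_⟩, rfl⟩
          · simp only [Fin.val_zero]
            omega
          · rw [lift_zero]
            show ℓ ≤ j'.val + 1
            exact hχ.2
      rw [hset, Finset.card_singleton]
    · rw [if_neg hχ]
      rw [Finset.card_eq_zero, Finset.filter_eq_empty_iff]
      rintro x hx rfl
      simp only [mem_filter, mem_univ, true_and] at hx
      obtain ⟨h1, h2⟩ := hx
      rw [lift_zero] at h2
      simp only [Fin.val_zero] at h1
      exact hχ ⟨by omega, h2⟩
  · -- the x ≠ 0 part equals straddle σ ℓ'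
    refine (Finset.card_bij (fun (a : Fin m) _ => eIdx j' a) ?_ ?_ ?_).symm
    · intro a ha
      simp only [mem_filter, mem_univ, true_and] at ha ⊢
      refine ⟨⟨?_, ?_⟩, ?_⟩
      · exact ((eIdx_gap j' a ℓ).1).mpr ha.1
      · rw [lift_eIdx]
        exact ((eIdx_gap j' (σ a) ℓ).2).mpr ha.2
      · intro h
        exact eIdx_ne_zero j' a (congrArg Fin.val h)
    · intro a₁ h₁ a₂ h₂ heq
      exact eIdx_inj j' heq
    · intro x hx
      simp only [mem_filter, mem_univ, true_and] at hx
      obtain ⟨⟨hx1, hx2⟩, hx0⟩ := hx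
      have hx0' : x.val ≠ 0 := fun h => hx0 (Fin.ext h)
      have hxj : x.val ≠ j'.val + 1 := by
        intro h
        have hxe : x = jpt j' := Fin.ext h
        rw [hxe, lift_j] at hx2
        simp only [Fin.val_zero] at hx2
        omega
      obtain ⟨i, rfl⟩ := exists_eIdx j' x hx0' hxj
      refine ⟨i, ?_, rfl⟩
      simp only [mem_filter, mem_univ, true_and]
      rw [lift_eIdx] at hx2
      exact ⟨((eIdx_gap j' i ℓ).1).mp hx1, ((eIdx_gap j' (σ i) ℓ).2).mp hx2⟩


lemma zero_lt_jpt (j' : Fin (m+1)) : (0 : Fin (m+2)) < jpt j' := by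
  rw [Fin.lt_def]
  simp [jpt]

lemma crossNum_lift (j' : Fin (m+1)) (σ : Equiv.Perm (Fin m)) :
    crossNum (lift j' σ) = crossNum σ + straddle σ j'.val := by
  unfold crossNum straddle
  rw [← Finset.card_filter_add_card_filter_not
    (s := Finset.univ.filter (fun q : Fin (m+2) × Fin (m+2) =>
      q.1 < (lift j' σ) q.1 ∧ q.2 < (lift j' σ) q.2 ∧ q.1 < q.2 ∧ Cross (lift j' σ) q.1 q.2))
    (p := fun q => q.1 = 0)]
  conv_rhs => rw [Nat.add_comm]
  congr 1
  · -- pairs with q.1 = 0 ↔ straddle σ j'.val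
    refine (Finset.card_bij (fun (a : Fin m) _ => ((0 : Fin (m+2)), eIdx j' a)) ?_ ?_ ?_).symm
    · intro a ha
      simp only [mem_filter, mem_univ, true_and] at ha ⊢
      have hab : a < σ a := by
        rw [Fin.lt_def]
        omega
      refine ⟨⟨?_, ?_, ?_, ?_⟩, trivial⟩
      · rw [lift_zero]
        exact zero_lt_jpt j'
      · rw [lift_eIdx]
        exact (eIdx_lt_iff j' a (σ a)).mpr hab
      · exact zero_lt_eIdx j' a
      · exact (cross_lift_zero j' σ a).mpr ha
    · intro a₁ h₁ a₂ h₂ heq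
      rw [Prod.ext_iff] at heq
      exact eIdx_inj j' heq.2
    · intro q hq
      simp only [mem_filter, mem_univ, true_and] at hq
      obtain ⟨⟨c1, c2, c3, c4⟩, hq1⟩ := hq
      have hq2ne : (q.2).val ≠ 0 := by
        rw [hq1] at c3
        rw [Fin.lt_def] at c3
        simp only [Fin.val_zero] at c3
        omega
      have hq2j : (q.2).val ≠ j'.val + 1 := by
        intro h
        have : q.2 = jpt j' := Fin.ext h
        rw [this, lift_j] at c2
        exact Fin.not_lt_zero _ c2
      obtain ⟨i, hi⟩ := exists_eIdx j' q.2 hq2ne hq2j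
      refine ⟨i, ?_, ?_⟩
      · simp only [mem_filter, mem_univ, true_and]
        rw [hq1, ← hi] at c4
        exact (cross_lift_zero j' σ i).mp c4
      · exact Prod.ext hq1.symm hi
  · -- pairs with q.1 ≠ 0 ↔ crossNum σ
    refine (Finset.card_bij
      (fun (q : Fin m × Fin m) _ => (eIdx j' q.1, eIdx j' q.2)) ?_ ?_ ?_).symm
    · intro q hq
      simp only [mem_filter, mem_univ, true_and] at hq ⊢
      obtain ⟨c1, c2, c3, c4⟩ := hq
      refine ⟨⟨?_, ?_, ?_, ?_⟩, ?_⟩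
      · rw [lift_eIdx]
        exact (eIdx_lt_iff j' _ _).mpr c1
      · rw [lift_eIdx]
        exact (eIdx_lt_iff j' _ _).mpr c2
      · exact (eIdx_lt_iff j' _ _).mpr c3
      · exact (cross_lift j' σ _ _).mpr c4
      · intro h
        exact eIdx_ne_zero j' q.1 (congrArg Fin.val h)
    · intro a₁ h₁ a₂ h₂ heq
      rw [Prod.ext_iff] at heq
      exact Prod.ext (eIdx_inj j' heq.1) (eIdx_inj j' heq.2)
    · intro q hq
      simp only [mem_filter, mem_univ, true_and] at hq
      obtain ⟨⟨c1, c2, c3, c4⟩, hq1⟩ := hq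
      have hq1ne : (q.1).val ≠ 0 := fun h => hq1 (Fin.ext h)
      have hq1j : (q.1).val ≠ j'.val + 1 := by
        intro h
        have : q.1 = jpt j' := Fin.ext h
        rw [this, lift_j] at c1
        exact Fin.not_lt_zero _ c1
      have hq2ne : (q.2).val ≠ 0 := by
        rw [Fin.lt_def] at c3
        omega
      have hq2j : (q.2).val ≠ j'.val + 1 := by
        intro h
        have : q.2 = jpt j' := Fin.ext h
        rw [this, lift_j] at c2
        exact Fin.not_lt_zero _ c2
      obtain ⟨a, ha⟩ := exists_eIdx j' q.1 hq1ne hq1j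
      obtain ⟨b, hb⟩ := exists_eIdx j' q.2 hq2ne hq2j
      refine ⟨(a, b), ?_, ?_⟩
      · simp only [mem_filter, mem_univ, true_and]
        rw [← ha] at c1 c3 c4
        rw [← hb] at c2 c3 c4
        rw [lift_eIdx] at c1
        rw [lift_eIdx] at c2
        exact ⟨(eIdx_lt_iff j' _ _).mp c1, (eIdx_lt_iff j' _ _).mp c2,
          (eIdx_lt_iff j' _ _).mp c3, (cross_lift j' σ _ _).mp c4⟩
      · exact Prod.ext ha hb

end Decomp

lemma straddle_zero {n : ℕ} (σ : Equiv.Perm (Fin n)) : straddle σ 0 = 0 := by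
  unfold straddle
  rw [Finset.card_eq_zero, Finset.filter_eq_empty_iff]
  intro x _
  simp

lemma straddle_parity {n : ℕ} {σ : Equiv.Perm (Fin n)} (hσ : σ ∈ matchings n) :
    ∀ ℓ, ℓ ≤ n → straddle σ ℓ % 2 = ℓ % 2 := by
  simp only [matchings, mem_filter, mem_univ, true_and] at hσ
  obtain ⟨hinv, hfpf⟩ := hσ
  intro ℓ
  induction ℓ with
  | zero => intro _; rw [straddle_zero]
  | succ ℓ ih =>
    intro hl
    have hlt : ℓ < n := by omega
    have ihv := ih (by omega)
    set x : Fin n := ⟨ℓ, hlt⟩ with hx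
    have hne : (σ x).val ≠ ℓ := by
      intro h
      exact hfpf x (Fin.ext h)
    unfold straddle at ihv ⊢
    by_cases hgt : ℓ < (σ x).val
    · have hxnot : x ∉ Finset.univ.filter (fun a : Fin n => a.val < ℓ ∧ ℓ ≤ (σ a).val) := by
        simp only [mem_filter, mem_univ, true_and, not_and]
        intro h
        have hv : (x : Fin n).val = ℓ := rfl
        omega
      have hset : Finset.univ.filter (fun a : Fin n => a.val < ℓ + 1 ∧ ℓ + 1 ≤ (σ a).val) =
          insert x (Finset.univ.filter (fun a : Fin n => a.val < ℓ ∧ ℓ ≤ (σ a).val)) := by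
        ext a
        simp only [mem_filter, mem_univ, true_and, Finset.mem_insert]
        constructor
        · rintro ⟨h1, h2⟩
          by_cases hax : a = x
          · exact Or.inl hax
          · have : a.val ≠ ℓ := fun h => hax (Fin.ext h)
            exact Or.inr ⟨by omega, by omega⟩
        · rintro (rfl | ⟨h1, h2⟩)
          · have hv : (x : Fin n).val = ℓ := rfl
            exact ⟨by omega, by omega⟩
          · refine ⟨by omega, ?_⟩
            have : (σ a).val ≠ ℓ := by
              intro h
              have h1' : σ a = x := Fin.ext h
              have h2' : a = σ x := by rw [← h1', hinv]
              have := congrArg Fin.val h2'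
              omega
            omega
      rw [hset, Finset.card_insert_of_notMem hxnot]
      omega
    · have hblt : (σ x).val < ℓ := by omega
      have hbmem : σ x ∈ Finset.univ.filter (fun a : Fin n => a.val < ℓ ∧ ℓ ≤ (σ a).val) := by
        simp only [mem_filter, mem_univ, true_and]
        rw [hinv]
        have hv : (x : Fin n).val = ℓ := rfl
        exact ⟨hblt, by omega⟩
      have hset : Finset.univ.filter (fun a : Fin n => a.val < ℓ + 1 ∧ ℓ + 1 ≤ (σ a).val) =
          (Finset.univ.filter (fun a : Fin n => a.val < ℓ ∧ ℓ ≤ (σ a).val)).erase (σ x) := by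
        ext a
        simp only [mem_filter, mem_univ, true_and, Finset.mem_erase]
        constructor
        · rintro ⟨h1, h2⟩
          have hab : a ≠ σ x := by
            intro h
            rw [h, hinv] at h2
            have hv : (x : Fin n).val = ℓ := rfl
            omega
          have hax : a.val ≠ ℓ := by
            intro h
            have : a = x := Fin.ext h
            rw [this] at h2
            omega
          exact ⟨hab, by omega, by omega⟩
        · rintro ⟨hab, h1, h2⟩
          refine ⟨by omega, ?_⟩
          have : (σ a).val ≠ ℓ := by
            intro h
            have h1' : σ a = x := Fin.ext h
            have h2' : a = σ x := by rw [← h1', hinv]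
            exact hab h2'
          omega
      have hpos : 0 < #(Finset.univ.filter (fun a : Fin n => a.val < ℓ ∧ ℓ ≤ (σ a).val)) :=
        Finset.card_pos.mpr ⟨σ x, hbmem⟩
      rw [hset, Finset.card_erase_of_mem hbmem]
      omega

lemma neg_one_pow_congr' {a b : ℕ} (h : a % 2 = b % 2) : ((-1:ℤ))^a = (-1)^b := by
  conv_lhs => rw [← Nat.div_add_mod a 2]
  conv_rhs => rw [← Nat.div_add_mod b 2]
  rw [pow_add, pow_add, pow_mul, pow_mul, neg_one_sq, one_pow, one_pow, h]

lemma sum_range_neg_one_pow (n : ℕ) :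
    ∑ i ∈ Finset.range n, ((-1:ℤ))^i = if n % 2 = 0 then 0 else 1 := by
  induction n with
  | zero => simp
  | succ n ih =>
    rw [Finset.sum_range_succ, ih]
    by_cases h : n % 2 = 0
    · rw [if_pos h, if_neg (by omega), neg_one_pow_congr' (show n % 2 = 0 % 2 by omega), pow_zero]
      norm_num
    · rw [if_neg h, if_pos (by omega), neg_one_pow_congr' (show n % 2 = 1 % 2 by omega), pow_one]
      norm_num

lemma sum_range_odd_neg_one_pow (k : ℕ) : ∑ i ∈ Finset.range (2*k+1), ((-1:ℤ))^i = 1 := by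
  rw [sum_range_neg_one_pow, if_neg (by omega)]

lemma sum_range_mod (k : ℕ) :
    ∑ i ∈ Finset.range (2*k+1), ((-1:ℤ))^i * ((i % 2 : ℕ) : ℤ) = -(k : ℤ) := by
  induction k with
  | zero => simp
  | succ k ih =>
    rw [show 2*(k+1)+1 = (2*k+1)+1+1 from by ring, Finset.sum_range_succ, Finset.sum_range_succ,
      ih, neg_one_pow_congr' (show (2*k+1) % 2 = 1 % 2 by omega), pow_one,
      neg_one_pow_congr' (show (2*k+1+1) % 2 = 0 % 2 by omega), pow_zero,
      show (2*k+1) % 2 = 1 from by omega, show (2*k+1+1) % 2 = 0 from by omega]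
    push_cast
    ring

lemma Dsum (k ℓ : ℕ) (hℓ : ℓ ≤ 2*k+2) :
    ∑ i ∈ Finset.range (2*k+1), ((-1:ℤ))^i *
      ((((if ℓ ≤ i+1 then ℓ-1 else ℓ-2) % 2 : ℕ) : ℤ) +
        (if 1 ≤ ℓ ∧ ℓ ≤ i+1 then (1:ℤ) else 0)) = ((ℓ % 2 : ℕ) : ℤ) := by
  have h1 : ℓ - 1 ≤ 2*k+1 := by omega
  rw [Finset.range_eq_Ico, ← Finset.sum_Ico_consecutive _ (Nat.zero_le (ℓ-1)) h1]
  have e1 : ∀ i ∈ Finset.Ico 0 (ℓ-1), ((-1:ℤ))^i *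
      ((((if ℓ ≤ i+1 then ℓ-1 else ℓ-2) % 2 : ℕ) : ℤ) +
        (if 1 ≤ ℓ ∧ ℓ ≤ i+1 then (1:ℤ) else 0)) =
      ((-1:ℤ))^i * (((ℓ-2) % 2 : ℕ) : ℤ) := by
    intro i hi
    rw [Finset.mem_Ico] at hi
    rw [if_neg (by omega), if_neg (by omega)]
    ring
  have e2 : ∀ i ∈ Finset.Ico (ℓ-1) (2*k+1), ((-1:ℤ))^i *
      ((((if ℓ ≤ i+1 then ℓ-1 else ℓ-2) % 2 : ℕ) : ℤ) +
        (if 1 ≤ ℓ ∧ ℓ ≤ i+1 then (1:ℤ) else 0)) =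
      ((-1:ℤ))^i * ((((ℓ-1) % 2 : ℕ) : ℤ) + (if 1 ≤ ℓ then (1:ℤ) else 0)) := by
    intro i hi
    rw [Finset.mem_Ico] at hi
    rw [if_pos (by omega)]
    by_cases hc : 1 ≤ ℓ
    · rw [if_pos ⟨hc, by omega⟩, if_pos hc]
    · rw [if_neg (fun h => hc h.1), if_neg hc]
  rw [Finset.sum_congr rfl e1, Finset.sum_congr rfl e2, ← Finset.sum_mul, ← Finset.sum_mul,
    ← Finset.range_eq_Ico, Finset.sum_Ico_eq_sub _ h1, sum_range_odd_neg_one_pow,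
    sum_range_neg_one_pow]
  by_cases h0 : ℓ = 0
  · subst h0
    norm_num
  · by_cases he : ℓ % 2 = 0
    · rw [if_neg (show ¬((ℓ-1) % 2 = 0) by omega), show (ℓ-2) % 2 = 0 from by omega,
        show (ℓ-1) % 2 = 1 from by omega, if_pos (show 1 ≤ ℓ by omega),
        show ℓ % 2 = 0 from he]
      norm_num
    · rw [if_pos (show (ℓ-1) % 2 = 0 by omega), if_pos (show 1 ≤ ℓ by omega),
        show (ℓ-1) % 2 = 0 from by omega, show ℓ % 2 = 1 from by omega]
      norm_num

lemma lemA : ∀ k, ∑ σ ∈ matchings (2*k), ((-1:ℤ))^(crossNum σ) = 1 := by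
  intro k
  induction k with
  | zero => decide
  | succ k ih =>
    show ∑ τ ∈ matchings (2*k+2), ((-1:ℤ))^(crossNum τ) = 1
    rw [sum_decomp]
    have inner : ∀ j' : Fin (2*k+1),
        ∑ σ ∈ matchings (2*k), ((-1:ℤ))^(crossNum (lift j' σ)) = ((-1:ℤ))^(j'.val) := by
      intro j'
      have e : ∀ σ ∈ matchings (2*k), ((-1:ℤ))^(crossNum (lift j' σ)) =
          ((-1:ℤ))^(crossNum σ) * ((-1:ℤ))^(j'.val) := by
        intro σ hσ
        rw [crossNum_lift, pow_add,
          neg_one_pow_congr' (straddle_parity hσ j'.val (by have := j'.isLt; omega))]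
      rw [Finset.sum_congr rfl e, ← Finset.sum_mul, ih, one_mul]
    rw [Finset.sum_congr rfl (fun j' _ => inner j'),
      Fin.sum_univ_eq_sum_range (fun i => ((-1:ℤ))^i), sum_range_odd_neg_one_pow]

lemma lemD : ∀ k, ∀ ℓ, ℓ ≤ 2*k →
    ∑ σ ∈ matchings (2*k), ((-1:ℤ))^(crossNum σ) * ((straddle σ ℓ : ℕ) : ℤ) =
      ((ℓ % 2 : ℕ) : ℤ) := by
  intro k
  induction k with
  | zero =>
    intro ℓ hℓ
    have : ℓ = 0 := by omega
    subst this
    simp [straddle_zero]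
  | succ k ih =>
    intro ℓ hℓ
    show ∑ τ ∈ matchings (2*k+2), ((-1:ℤ))^(crossNum τ) * ((straddle τ ℓ : ℕ) : ℤ) = _
    rw [sum_decomp (fun τ => ((-1:ℤ))^(crossNum τ) * ((straddle τ ℓ : ℕ) : ℤ))]
    have inner : ∀ j' : Fin (2*k+1),
        ∑ σ ∈ matchings (2*k), ((-1:ℤ))^(crossNum (lift j' σ)) *
          ((straddle (lift j' σ) ℓ : ℕ) : ℤ) =
        ((-1:ℤ))^(j'.val) *
          ((((if ℓ ≤ j'.val+1 then ℓ-1 else ℓ-2) % 2 : ℕ) : ℤ) +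
            (if 1 ≤ ℓ ∧ ℓ ≤ j'.val+1 then (1:ℤ) else 0)) := by
      intro j'
      have hℓ' : (if ℓ ≤ j'.val+1 then ℓ-1 else ℓ-2) ≤ 2*k := by
        have := j'.isLt
        split_ifs <;> omega
      have e : ∀ σ ∈ matchings (2*k), ((-1:ℤ))^(crossNum (lift j' σ)) *
          ((straddle (lift j' σ) ℓ : ℕ) : ℤ) =
          ((-1:ℤ))^(j'.val) *
            (((-1:ℤ))^(crossNum σ) * ((straddle σ (if ℓ ≤ j'.val+1 then ℓ-1 else ℓ-2) : ℕ) : ℤ) +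
              ((-1:ℤ))^(crossNum σ) * (if 1 ≤ ℓ ∧ ℓ ≤ j'.val+1 then (1:ℤ) else 0)) := by
        intro σ hσ
        rw [crossNum_lift, straddle_lift, pow_add,
          neg_one_pow_congr' (straddle_parity hσ j'.val (by have := j'.isLt; omega))]
        push_cast
        split_ifs <;> ring
      rw [Finset.sum_congr rfl e, ← Finset.mul_sum, Finset.sum_add_distrib,
        ← Finset.sum_mul, ih _ hℓ', lemA k, one_mul]
    rw [Finset.sum_congr rfl (fun j' _ => inner j'),
      Fin.sum_univ_eq_sum_range (fun i => ((-1:ℤ))^i *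
        ((((if ℓ ≤ i+1 then ℓ-1 else ℓ-2) % 2 : ℕ) : ℤ) +
          (if 1 ≤ ℓ ∧ ℓ ≤ i+1 then (1:ℤ) else 0))),
      Dsum k ℓ hℓ]

lemma lemB : ∀ p, ∑ σ ∈ matchings (2*p), ((-1:ℤ))^(crossNum σ) * ((crossNum σ : ℕ) : ℤ) =
    -((p.choose 2 : ℕ) : ℤ) := by
  intro p
  induction p with
  | zero => decide
  | succ k ih =>
    show ∑ τ ∈ matchings (2*k+2), ((-1:ℤ))^(crossNum τ) * ((crossNum τ : ℕ) : ℤ) = _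
    rw [sum_decomp (fun τ => ((-1:ℤ))^(crossNum τ) * ((crossNum τ : ℕ) : ℤ))]
    have inner : ∀ j' : Fin (2*k+1),
        ∑ σ ∈ matchings (2*k), ((-1:ℤ))^(crossNum (lift j' σ)) *
          ((crossNum (lift j' σ) : ℕ) : ℤ) =
        ((-1:ℤ))^(j'.val) * (-(((k.choose 2 : ℕ)) : ℤ) + ((j'.val % 2 : ℕ) : ℤ)) := by
      intro j'
      have e : ∀ σ ∈ matchings (2*k), ((-1:ℤ))^(crossNum (lift j' σ)) *
          ((crossNum (lift j' σ) : ℕ) : ℤ) =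
          ((-1:ℤ))^(j'.val) *
            (((-1:ℤ))^(crossNum σ) * ((crossNum σ : ℕ) : ℤ) +
              ((-1:ℤ))^(crossNum σ) * ((straddle σ j'.val : ℕ) : ℤ)) := by
        intro σ hσ
        rw [crossNum_lift, pow_add,
          neg_one_pow_congr' (straddle_parity hσ j'.val (by have := j'.isLt; omega))]
        push_cast
        ring
      rw [Finset.sum_congr rfl e, ← Finset.mul_sum, Finset.sum_add_distrib, ih,
        lemD k j'.val (by have := j'.isLt; omega)]
    rw [Finset.sum_congr rfl (fun j' _ => inner j'),
      Fin.sum_univ_eq_sum_range (fun i => ((-1:ℤ))^i *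
        (-(((k.choose 2 : ℕ)) : ℤ) + ((i % 2 : ℕ) : ℤ)))]
    have expand : ∀ i ∈ Finset.range (2*k+1), ((-1:ℤ))^i *
        (-(((k.choose 2 : ℕ)) : ℤ) + ((i % 2 : ℕ) : ℤ)) =
        ((-1:ℤ))^i * (-(((k.choose 2 : ℕ)) : ℤ)) + ((-1:ℤ))^i * ((i % 2 : ℕ) : ℤ) := by
      intro i _
      ring
    rw [Finset.sum_congr rfl expand, Finset.sum_add_distrib, ← Finset.sum_mul,
      sum_range_odd_neg_one_pow, sum_range_mod, one_mul]
    have hch : ((k+1).choose 2 : ℕ) = k.choose 2 + k := by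
      rw [Nat.choose_succ_succ, Nat.choose_one_right, show Nat.succ 1 = 2 from rfl]
      omega
    rw [hch]
    push_cast
    ring

/-- The graded crossing count over all chord diagrams with `p` chords. -/
theorem graded_crossings (p : ℕ) :
    (∑ σ ∈ chordDiagrams p, (-1 : ℤ) ^ crossNum σ * crossNum σ) = -(p.choose 2 : ℤ) := by
  exact lemB p
end

section
/- The graded quadratic crossing count: Σ_i (-1)^{E_i} E_i (E_i - 1) = 6 binom(p,4), where the sum runs over all (2p-1)!! chord diagrams with p chords. -/
open Finset

open Equiv

/-- all chord diagrams on `Fin n`. -/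
def DD (n : ℕ) : Finset (Equiv.Perm (Fin n)) := Finset.univ.filter IsChordDiagram

namespace CD
variable {n : ℕ}

def emb (j : Fin (n+1)) (i : Fin n) : Fin (n+2) :=
  if (i : ℕ) < (j : ℕ) then i.castSucc.castSucc else i.succ.castSucc

lemma emb_val (j : Fin (n+1)) (i : Fin n) :
    ((emb j i : Fin (n+2)) : ℕ) = if (i:ℕ) < (j:ℕ) then (i:ℕ) else (i:ℕ)+1 := by
  unfold emb; split <;> simp

lemma emb_inj (j : Fin (n+1)) : Function.Injective (emb j) := by
  intro a b h
  have h' := congrArg Fin.val h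
  rw [emb_val, emb_val] at h'
  have : (a:ℕ) = b := by split_ifs at h' <;> omega
  exact Fin.ext this

lemma emb_ne_left (j : Fin (n+1)) (i : Fin n) : emb j i ≠ j.castSucc := by
  intro h
  have h' := congrArg Fin.val h
  rw [emb_val] at h'
  simp only [Fin.coe_castSucc] at h'
  split_ifs at h' <;> omega

lemma emb_ne_last (j : Fin (n+1)) (i : Fin n) : emb j i ≠ Fin.last (n+1) := by
  intro h
  have h' := congrArg Fin.val h
  rw [emb_val] at h'
  simp only [Fin.val_last] at h'
  have hi := i.isLt
  have hj := j.isLt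
  split_ifs at h' <;> omega

lemma exists_emb (j : Fin (n+1)) (x : Fin (n+2)) (h1 : x ≠ j.castSucc)
    (h2 : x ≠ Fin.last (n+1)) : ∃ i, emb j i = x := by
  have hx := x.isLt
  have hj := j.isLt
  have h1' : (x:ℕ) ≠ (j:ℕ) := fun h => h1 (Fin.ext (by simpa using h))
  have h2' : (x:ℕ) ≠ n+1 := fun h => h2 (Fin.ext (by simpa using h))
  rcases lt_or_gt_of_ne h1' with hlt | hgt
  · refine ⟨⟨(x:ℕ), by omega⟩, Fin.ext ?_⟩
    rw [emb_val]; simp only []; rw [if_pos (by simpa using hlt)]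
  · refine ⟨⟨(x:ℕ)-1, by omega⟩, Fin.ext ?_⟩
    rw [emb_val]; simp only []; rw [if_neg (by omega)]; omega

def insPerm (j : Fin (n+1)) (σ : Perm (Fin n)) : Perm (Fin (n+2)) :=
  Equiv.swap j.castSucc (Fin.last (n+1)) * σ.viaFintypeEmbedding ⟨emb j, emb_inj j⟩

lemma castSucc_not_mem_range (j : Fin (n+1)) :
    j.castSucc ∉ Set.range (⟨emb j, emb_inj j⟩ : Fin n ↪ Fin (n+2)) := by
  rintro ⟨i, hi⟩; exact emb_ne_left j i hi

lemma last_not_mem_range (j : Fin (n+1)) :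
    Fin.last (n+1) ∉ Set.range (⟨emb j, emb_inj j⟩ : Fin n ↪ Fin (n+2)) := by
  rintro ⟨i, hi⟩; exact emb_ne_last j i hi

lemma ins_emb (j : Fin (n+1)) (σ : Perm (Fin n)) (i : Fin n) :
    insPerm j σ (emb j i) = emb j (σ i) := by
  unfold insPerm
  rw [Equiv.Perm.mul_apply]
  have : σ.viaFintypeEmbedding ⟨emb j, emb_inj j⟩ (emb j i) = emb j (σ i) :=
    σ.viaFintypeEmbedding_apply_image ⟨emb j, emb_inj j⟩ i
  rw [this, Equiv.swap_apply_of_ne_of_ne (emb_ne_left j _) (emb_ne_last j _)]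

lemma ins_left (j : Fin (n+1)) (σ : Perm (Fin n)) :
    insPerm j σ j.castSucc = Fin.last (n+1) := by
  unfold insPerm
  rw [Equiv.Perm.mul_apply,
    σ.viaFintypeEmbedding_apply_notMem_range _ (castSucc_not_mem_range j),
    Equiv.swap_apply_left]

lemma ins_last (j : Fin (n+1)) (σ : Perm (Fin n)) :
    insPerm j σ (Fin.last (n+1)) = j.castSucc := by
  unfold insPerm
  rw [Equiv.Perm.mul_apply,
    σ.viaFintypeEmbedding_apply_notMem_range _ (last_not_mem_range j),
    Equiv.swap_apply_right]

lemma castSucc_ne_last (j : Fin (n+1)) : j.castSucc ≠ Fin.last (n+1) := by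
  intro h
  have h' := congrArg Fin.val h
  simp only [Fin.coe_castSucc, Fin.val_last] at h'
  have := j.isLt; omega

lemma ins_isCD (j : Fin (n+1)) (σ : Perm (Fin n)) (hσ : IsChordDiagram σ) :
    IsChordDiagram (insPerm j σ) := by
  constructor
  · intro x
    rcases eq_or_ne x j.castSucc with rfl | h1
    · rw [ins_left, ins_last]
    rcases eq_or_ne x (Fin.last (n+1)) with rfl | h2
    · rw [ins_last, ins_left]
    obtain ⟨i, rfl⟩ := exists_emb j x h1 h2
    rw [ins_emb, ins_emb, hσ.1]
  · intro x
    rcases eq_or_ne x j.castSucc with rfl | h1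
    · rw [ins_left]; exact (castSucc_ne_last j).symm
    rcases eq_or_ne x (Fin.last (n+1)) with rfl | h2
    · rw [ins_last]; exact castSucc_ne_last j
    obtain ⟨i, rfl⟩ := exists_emb j x h1 h2
    rw [ins_emb]
    exact fun h => hσ.2 i (emb_inj j h)

end CD

namespace CD
variable {n : ℕ}

lemma ins_injective :
    Function.Injective (fun p : Fin (n+1) × Perm (Fin n) => insPerm p.1 p.2) := by
  rintro ⟨j, σ⟩ ⟨j', σ'⟩ h
  simp only [] at h
  have hj : j = j' := by
    have := congrArg (fun τ : Perm (Fin (n+2)) => τ (Fin.last (n+1))) h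
    simp only [ins_last] at this
    exact Fin.castSucc_injective _ this
  subst hj
  have hσ : σ = σ' := by
    ext i
    have := congrArg (fun τ : Perm (Fin (n+2)) => τ (emb j i)) h
    simp only [ins_emb] at this
    exact congrArg Fin.val (emb_inj j this)
  rw [hσ]

lemma D_succ_eq_image :
    DD (n+2) = (Finset.univ ×ˢ DD n).image
      (fun p : Fin (n+1) × Perm (Fin n) => insPerm p.1 p.2) := by
  ext τ
  simp only [DD, Finset.mem_image, Finset.mem_filter, Finset.mem_univ, true_and,
    Finset.mem_product]
  constructor
  · intro hτ
    -- extract j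
    have hne : τ (Fin.last (n+1)) ≠ Fin.last (n+1) := hτ.2 _
    have hlt : (τ (Fin.last (n+1)) : ℕ) < n + 1 := by
      have h1 := (τ (Fin.last (n+1))).isLt
      have : (τ (Fin.last (n+1)) : ℕ) ≠ n+1 := fun h => hne (Fin.ext (by simpa using h))
      omega
    set j : Fin (n+1) := ⟨(τ (Fin.last (n+1)) : ℕ), hlt⟩ with hj
    have hjc : j.castSucc = τ (Fin.last (n+1)) := Fin.ext (by simp [hj])
    -- for each i, τ (emb j i) is in the range of emb j
    have key : ∀ i : Fin n, ∃ a : Fin n, emb j a = τ (emb j i) := by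
      intro i
      apply exists_emb
      · rw [hjc]
        intro h
        have := τ.injective h
        exact emb_ne_last j i this
      · intro h
        have h2 : τ (τ (emb j i)) = τ (Fin.last (n+1)) := by rw [h]
        rw [hτ.1] at h2
        rw [← hjc] at h2
        exact emb_ne_left j i h2
    choose f hf using key
    have hff : Function.Involutive f := by
      intro i
      apply emb_inj j
      rw [hf (f i), hf i, hτ.1]
    refine ⟨⟨j, hff.toPerm f⟩, ?_, ?_⟩
    · constructor
      · intro x; exact hff x
      · intro x h
        have : emb j (f x) = emb j x := congrArg (emb j) h
        rw [hf x] at this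
        exact hτ.2 (emb j x) this
    · -- insPerm j (toPerm f) = τ
      ext x
      rcases eq_or_ne x j.castSucc with rfl | h1
      · rw [ins_left]
        have : τ (τ (Fin.last (n+1))) = Fin.last (n+1) := hτ.1 _
        rw [← hjc] at this
        exact (congrArg Fin.val this).symm
      rcases eq_or_ne x (Fin.last (n+1)) with rfl | h2
      · rw [ins_last, hjc]
      obtain ⟨i, rfl⟩ := exists_emb j x h1 h2
      rw [ins_emb]
      show ((emb j (hff.toPerm f i)) : ℕ) = _
      have : hff.toPerm f i = f i := rfl
      rw [this, hf i]
  · rintro ⟨⟨j, σ⟩, hσ, rfl⟩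
    exact ins_isCD j σ hσ

lemma sum_D_succ (F : Perm (Fin (n+2)) → ℤ) :
    ∑ τ ∈ DD (n+2), F τ = ∑ j : Fin (n+1), ∑ σ ∈ DD n, F (insPerm j σ) := by
  rw [D_succ_eq_image, Finset.sum_image (fun p _ q _ h => ins_injective h),
    Finset.sum_product]

end CD

namespace CD
variable {n : ℕ}

/-- number of chords with both endpoints `≥ t`. -/
def NN (t : ℕ) (σ : Equiv.Perm (Fin n)) : ℕ :=
  (Finset.univ.filter (fun a : Fin n => a < σ a ∧ t ≤ (a:ℕ))).card

/-- chords crossing the inserted chord `(j, n+1)`. -/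
def cjF (j : Fin (n+1)) (σ : Equiv.Perm (Fin n)) : Finset (Fin n) :=
  Finset.univ.filter (fun a => a < σ a ∧ (a:ℕ) < (j:ℕ) ∧ (j:ℕ) ≤ ((σ a):ℕ))

lemma emb_lt_emb_iff (j : Fin (n+1)) (a b : Fin n) : emb j a < emb j b ↔ a < b := by
  rw [Fin.lt_def, Fin.lt_def, emb_val, emb_val]
  split_ifs <;> omega

lemma emb_lt_castSucc_iff (j : Fin (n+1)) (a : Fin n) :
    emb j a < j.castSucc ↔ (a:ℕ) < (j:ℕ) := by
  rw [Fin.lt_def, emb_val, Fin.coe_castSucc]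
  split_ifs <;> omega

lemma castSucc_lt_emb_iff (j : Fin (n+1)) (a : Fin n) :
    j.castSucc < emb j a ↔ (j:ℕ) ≤ (a:ℕ) := by
  rw [Fin.lt_def, emb_val, Fin.coe_castSucc]
  split_ifs <;> omega

lemma emb_lt_last (j : Fin (n+1)) (a : Fin n) : emb j a < Fin.last (n+1) := by
  rw [Fin.lt_def, emb_val, Fin.val_last]
  have := a.isLt; split_ifs <;> omega

lemma not_last_lt (x : Fin (n+2)) : ¬ (Fin.last (n+1) < x) := by
  rw [Fin.lt_def, Fin.val_last]
  have := x.isLt; omega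

lemma castSucc_lt_last (j : Fin (n+1)) : j.castSucc < Fin.last (n+1) := by
  rw [Fin.lt_def, Fin.coe_castSucc, Fin.val_last]
  exact j.isLt

lemma cross_ins_emb_iff (j : Fin (n+1)) (σ : Equiv.Perm (Fin n)) (a b : Fin n) :
    Cross (insPerm j σ) (emb j a) (emb j b) ↔ Cross σ a b := by
  unfold Cross
  rw [ins_emb, ins_emb]
  simp only [emb_lt_emb_iff]

/-- S2 : transport of NN along insertion. -/
lemma NN_ins (t : ℕ) (j : Fin (n+1)) (σ : Equiv.Perm (Fin n)) :
    NN t (insPerm j σ) = if t ≤ (j:ℕ) then NN t σ + 1 else NN (t-1) σ := by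
  classical
  set τ := insPerm j σ with hτ
  set t' : ℕ := if t ≤ (j:ℕ) then t else t - 1 with ht'
  have hset : (Finset.univ.filter (fun x : Fin (n+2) => x < τ x ∧ t ≤ (x:ℕ)))
      = (Finset.univ.filter (fun a : Fin n => a < σ a ∧ t' ≤ (a:ℕ))).image (emb j)
        ∪ (if t ≤ (j:ℕ) then {j.castSucc} else ∅) := by
    ext x
    simp only [Finset.mem_filter, Finset.mem_univ, true_and, Finset.mem_union,
      Finset.mem_image]
    constructor
    · rintro ⟨hlt, hts⟩
      rcases eq_or_ne x (Fin.last (n+1)) with rfl | h2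
      · rw [hτ, ins_last] at hlt
        exact absurd (lt_trans hlt (castSucc_lt_last j)) (lt_irrefl _)
      rcases eq_or_ne x j.castSucc with rfl | h1
      · right
        have : t ≤ (j:ℕ) := by simpa using hts
        simp [this]
      obtain ⟨a, rfl⟩ := exists_emb j x h1 h2
      left
      refine ⟨a, ⟨?_, ?_⟩, rfl⟩
      · rw [hτ, ins_emb] at hlt
        exact (emb_lt_emb_iff j a (σ a)).mp hlt
      · rw [emb_val] at hts
        rw [ht']
        have := j.isLt
        split_ifs with h <;> split_ifs at hts <;> omega
    · rintro (⟨a, ⟨hlt, hta⟩, rfl⟩ | hx)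
      · constructor
        · rw [hτ, ins_emb]
          exact (emb_lt_emb_iff j a (σ a)).mpr hlt
        · rw [emb_val]
          rw [ht'] at hta
          split_ifs with h <;> split_ifs at hta <;> omega
      · split_ifs at hx with h
        · simp only [Finset.mem_singleton] at hx
          subst hx
          refine ⟨?_, by simpa using h⟩
          rw [hτ, ins_left]
          exact castSucc_lt_last j
        · simp at hx
  have hdisj : Disjoint
      ((Finset.univ.filter (fun a : Fin n => a < σ a ∧ t' ≤ (a:ℕ))).image (emb j))
      (if t ≤ (j:ℕ) then ({j.castSucc} : Finset (Fin (n+2))) else ∅) := by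
    split_ifs
    · rw [Finset.disjoint_singleton_right]
      simp only [Finset.mem_image]
      rintro ⟨a, _, ha⟩
      exact emb_ne_left j a ha
    · exact Finset.disjoint_empty_right _
  have := congrArg Finset.card hset
  rw [Finset.card_union_of_disjoint hdisj,
    Finset.card_image_of_injective _ (emb_inj j)] at this
  rw [NN, this, NN, NN]
  split_ifs with h
  · simp [ht', if_pos h]
  · simp [ht', if_neg h]

/-- S1 : transport of crossNum along insertion. -/
lemma crossNum_ins (j : Fin (n+1)) (σ : Equiv.Perm (Fin n)) :
    crossNum (insPerm j σ) = crossNum σ + (cjF j σ).card := by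
  classical
  set τ := insPerm j σ with hτ
  set P : Fin (n+2) × Fin (n+2) → Prop := fun q =>
    q.1 < τ q.1 ∧ q.2 < τ q.2 ∧ q.1 < q.2 ∧ Cross τ q.1 q.2 with hP
  have hset : (Finset.univ.filter (fun q : Fin (n+2) × Fin (n+2) =>
        q.1 < τ q.1 ∧ q.2 < τ q.2 ∧ q.1 < q.2 ∧ Cross τ q.1 q.2))
      = ((Finset.univ.filter (fun q : Fin n × Fin n =>
          q.1 < σ q.1 ∧ q.2 < σ q.2 ∧ q.1 < q.2 ∧ Cross σ q.1 q.2)).image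
            (fun q => (emb j q.1, emb j q.2)))
        ∪ ((cjF j σ).image (fun a => (emb j a, j.castSucc))) := by
    ext ⟨x, y⟩
    simp only [Finset.mem_filter, Finset.mem_univ, true_and, Finset.mem_union,
      Finset.mem_image, cjF, Prod.mk.injEq, Prod.exists]
    constructor
    · rintro ⟨hx, hy, hxy, hc⟩
      -- x and y are lower endpoints, hence not last
      have hxlast : x ≠ Fin.last (n+1) := by
        rintro rfl
        rw [hτ, ins_last] at hx
        exact absurd (lt_trans hx (castSucc_lt_last j)) (lt_irrefl _)
      have hylast : y ≠ Fin.last (n+1) := by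
        rintro rfl
        rw [hτ, ins_last] at hy
        exact absurd (lt_trans hy (castSucc_lt_last j)) (lt_irrefl _)
      rcases eq_or_ne x j.castSucc with rfl | hxj
      · -- x = castSucc j : crossing impossible
        exfalso
        have hyj : y ≠ j.castSucc := fun h => absurd (h ▸ hxy) (lt_irrefl _)
        obtain ⟨b, rfl⟩ := exists_emb j y hyj hylast
        rw [hτ] at hc
        rcases hc with ⟨_, _, h3⟩ | ⟨h1, _, _⟩
        · rw [ins_left] at h3
          exact not_last_lt _ h3
        · exact absurd (lt_trans h1 hxy) (lt_irrefl _)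
      rcases eq_or_ne y j.castSucc with rfl | hyj
      · -- y = castSucc j : special-chord crossing
        obtain ⟨a, rfl⟩ := exists_emb j x hxj hxlast
        right
        refine ⟨a, ⟨?_, ?_, ?_⟩, rfl, rfl⟩
        · rw [hτ, ins_emb] at hx; exact (emb_lt_emb_iff j a (σ a)).mp hx
        · exact (emb_lt_castSucc_iff j a).mp hxy
        · rw [hτ] at hc
          rcases hc with ⟨_, h2, _⟩ | ⟨h1, _, _⟩
          · rw [ins_emb] at h2
            exact (castSucc_lt_emb_iff j (σ a)).mp h2
          · exact absurd (lt_trans h1 hxy) (lt_irrefl _)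
      · obtain ⟨a, rfl⟩ := exists_emb j x hxj hxlast
        obtain ⟨b, rfl⟩ := exists_emb j y hyj hylast
        left
        refine ⟨a, b, ⟨?_, ?_, ?_, ?_⟩, rfl, rfl⟩
        · rw [hτ, ins_emb] at hx; exact (emb_lt_emb_iff j a (σ a)).mp hx
        · rw [hτ, ins_emb] at hy; exact (emb_lt_emb_iff j b (σ b)).mp hy
        · exact (emb_lt_emb_iff j a b).mp hxy
        · rw [hτ] at hc; exact (cross_ins_emb_iff j σ a b).mp hc
    · rintro (⟨a, b, ⟨h1, h2, h3, h4⟩, rfl, rfl⟩ | ⟨a, ⟨h1, h2, h3⟩, rfl, rfl⟩)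
      · refine ⟨?_, ?_, ?_, ?_⟩
        · rw [hτ, ins_emb]; exact (emb_lt_emb_iff j a (σ a)).mpr h1
        · rw [hτ, ins_emb]; exact (emb_lt_emb_iff j b (σ b)).mpr h2
        · exact (emb_lt_emb_iff j a b).mpr h3
        · rw [hτ]; exact (cross_ins_emb_iff j σ a b).mpr h4
      · refine ⟨?_, ?_, ?_, ?_⟩
        · rw [hτ, ins_emb]; exact (emb_lt_emb_iff j a (σ a)).mpr h1
        · rw [hτ, ins_left]; exact castSucc_lt_last j
        · exact (emb_lt_castSucc_iff j a).mpr h2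
        · left
          rw [hτ, ins_emb, ins_left]
          exact ⟨(emb_lt_castSucc_iff j a).mpr h2,
            (castSucc_lt_emb_iff j (σ a)).mpr h3, emb_lt_last j (σ a)⟩
  have hdisj : Disjoint
      ((Finset.univ.filter (fun q : Fin n × Fin n =>
          q.1 < σ q.1 ∧ q.2 < σ q.2 ∧ q.1 < q.2 ∧ Cross σ q.1 q.2)).image
            (fun q => (emb j q.1, emb j q.2)))
      ((cjF j σ).image (fun a => (emb j a, j.castSucc))) := by
    rw [Finset.disjoint_left]
    simp only [Finset.mem_image, Prod.mk.injEq, Prod.exists]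
    intro q h1 h2
    obtain ⟨a, b, hab, hxy⟩ := h1
    obtain ⟨c, hc, hxy2⟩ := h2
    have h5 := (congrArg Prod.snd hxy).trans (congrArg Prod.snd hxy2).symm
    exact emb_ne_left j b h5
  have hinj1 : Function.Injective
      (fun q : Fin n × Fin n => ((emb j q.1, emb j q.2) : Fin (n+2) × Fin (n+2))) := by
    rintro ⟨a, b⟩ ⟨c, d⟩ h
    simp only [Prod.mk.injEq] at h
    exact Prod.ext (emb_inj j h.1) (emb_inj j h.2)
  have hinj2 : Function.Injective
      (fun a : Fin n => ((emb j a, j.castSucc) : Fin (n+2) × Fin (n+2))) := by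
    intro a b h
    simp only [Prod.mk.injEq] at h
    exact emb_inj j h.1
  have := congrArg Finset.card hset
  rw [Finset.card_union_of_disjoint hdisj,
    Finset.card_image_of_injective _ hinj1,
    Finset.card_image_of_injective _ hinj2] at this
  exact this

end CD

namespace CD
variable {n : ℕ}

/-- S3 : the count of crossers of the inserted chord, plus twice the chords
beyond `j`, equals `n - j`. -/
lemma cjF_card (j : Fin (n+1)) (σ : Equiv.Perm (Fin n)) (hσ : IsChordDiagram σ) :
    (cjF j σ).card + 2 * NN (j:ℕ) σ = n - (j:ℕ) := by
  classical
  set T1 := Finset.univ.filter (fun x : Fin n => x < σ x ∧ (j:ℕ) ≤ (x:ℕ)) with hT1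
  set T2 := Finset.univ.filter (fun x : Fin n => σ x < x ∧ (j:ℕ) ≤ (x:ℕ)) with hT2
  set T2' := Finset.univ.filter (fun a : Fin n => a < σ a ∧ (j:ℕ) ≤ ((σ a):ℕ)) with hT2'
  have hS : (Finset.univ.filter (fun x : Fin n => (j:ℕ) ≤ (x:ℕ))).card = n - (j:ℕ) := by
    have himg : (Finset.univ.filter (fun x : Fin n => (j:ℕ) ≤ (x:ℕ))).image Fin.val
        = Finset.Ico (j:ℕ) n := by
      ext x
      simp only [Finset.mem_image, Finset.mem_filter, Finset.mem_univ, true_and,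
        Finset.mem_Ico]
      constructor
      · rintro ⟨a, ha, rfl⟩; exact ⟨ha, a.isLt⟩
      · rintro ⟨h1, h2⟩; exact ⟨⟨x, h2⟩, h1, rfl⟩
    have := congrArg Finset.card himg
    rwa [Finset.card_image_of_injective _ Fin.val_injective, Nat.card_Ico] at this
  have hsplit : (Finset.univ.filter (fun x : Fin n => (j:ℕ) ≤ (x:ℕ))) = T1 ∪ T2 := by
    ext x
    simp only [hT1, hT2, Finset.mem_filter, Finset.mem_univ, true_and, Finset.mem_union]
    constructor
    · intro hx
      rcases lt_or_gt_of_ne (hσ.2 x).symm with h | h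
      · exact Or.inl ⟨h, hx⟩
      · exact Or.inr ⟨h, hx⟩
    · rintro (⟨_, hx⟩ | ⟨_, hx⟩) <;> exact hx
  have hdisj : Disjoint T1 T2 := by
    rw [Finset.disjoint_left]
    simp only [hT1, hT2, Finset.mem_filter, Finset.mem_univ, true_and]
    rintro x ⟨h1, _⟩ ⟨h2, _⟩
    exact absurd (lt_trans h1 h2) (lt_irrefl _)
  have hcard2 : T2.card = T2'.card := by
    apply Finset.card_bij (fun a _ => σ a)
    · intro a ha
      rw [hT2, Finset.mem_filter] at ha
      rw [hT2', Finset.mem_filter]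
      refine ⟨Finset.mem_univ _, ?_, ?_⟩ <;> rw [hσ.1 a]
      · exact ha.2.1
      · exact ha.2.2
    · intro a ha b hb hab
      exact σ.injective hab
    · intro x hx
      rw [hT2', Finset.mem_filter] at hx
      refine ⟨σ x, ?_, hσ.1 x⟩
      rw [hT2, Finset.mem_filter]
      refine ⟨Finset.mem_univ _, ?_, hx.2.2⟩
      rw [hσ.1 x]
      exact hx.2.1
  have hsplit2 : T2' = cjF j σ ∪ T1 := by
    ext a
    simp only [hT2', hT1, cjF, Finset.mem_filter, Finset.mem_univ, true_and,
      Finset.mem_union]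
    constructor
    · rintro ⟨h1, h2⟩
      rcases lt_or_ge (a:ℕ) (j:ℕ) with h | h
      · exact Or.inl ⟨h1, h, h2⟩
      · exact Or.inr ⟨h1, h⟩
    · rintro (⟨h1, _, h3⟩ | ⟨h1, h2⟩)
      · exact ⟨h1, h3⟩
      · refine ⟨h1, ?_⟩
        have := (Fin.lt_def).mp h1
        omega
  have hdisj2 : Disjoint (cjF j σ) T1 := by
    rw [Finset.disjoint_left]
    simp only [cjF, hT1, Finset.mem_filter, Finset.mem_univ, true_and]
    rintro a ⟨_, h2, _⟩ ⟨_, h4⟩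
    omega
  have e1 : n - (j:ℕ) = T1.card + T2.card := by
    rw [← hS, hsplit, Finset.card_union_of_disjoint hdisj]
  have e2 : T2'.card = (cjF j σ).card + T1.card := by
    rw [hsplit2, Finset.card_union_of_disjoint hdisj2]
  have hNN : NN (j:ℕ) σ = T1.card := rfl
  omega

/-- `(-1)^a` only depends on `a % 2`. -/
lemma neg_one_pow_mod (a : ℕ) : ((-1:ℤ))^a = (-1)^(a % 2) := by
  conv_lhs => rw [← Nat.div_add_mod a 2]
  rw [pow_add, pow_mul]
  norm_num

lemma neg_one_pow_congr {a b : ℕ} (h : a % 2 = b % 2) : ((-1:ℤ))^a = (-1)^b := by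
  rw [neg_one_pow_mod a, neg_one_pow_mod b, h]

lemma neg_one_pow_cases (a : ℕ) : ((-1:ℤ))^a = if a % 2 = 0 then 1 else -1 := by
  rw [neg_one_pow_mod a]
  rcases Nat.mod_two_eq_zero_or_one a with h | h <;> rw [h] <;> simp

/-- sign of an inserted diagram. -/
lemma sgn_ins (j : Fin (n+1)) (σ : Equiv.Perm (Fin n)) (hσ : IsChordDiagram σ)
    (hn : n % 2 = 0) :
    ((-1:ℤ))^(crossNum (insPerm j σ)) = (-1)^(j:ℕ) * (-1)^(crossNum σ) := by
  rw [crossNum_ins, pow_add]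
  have h3 := cjF_card j σ hσ
  have hj : (j:ℕ) ≤ n := by have := j.isLt; omega
  have : ((cjF j σ).card) % 2 = (j:ℕ) % 2 := by omega
  rw [mul_comm, neg_one_pow_congr this]

/- Alternating sum helpers -/

def altv (m : ℕ) : ℤ := if m % 2 = 0 then 0 else 1

lemma alt_sum (m : ℕ) : ∑ j ∈ Finset.range m, ((-1:ℤ))^j = altv m := by
  induction m with
  | zero => simp [altv]
  | succ m ih =>
    rw [Finset.sum_range_succ, ih, neg_one_pow_cases m]
    simp only [altv]
    split_ifs <;> omega

lemma alt_chi (m t : ℕ) :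
    ∑ j ∈ Finset.range m, ((-1:ℤ))^j * (if t ≤ j then 1 else 0)
      = altv m - altv (min t m) := by
  induction m with
  | zero => simp
  | succ m ih =>
    rw [Finset.sum_range_succ, ih, neg_one_pow_cases m]
    rcases le_or_gt t m with h | h
    · have h1 : min t (m+1) = t := by omega
      have h2 : min t m = t := by omega
      rw [if_pos h, h1, h2]
      simp only [altv]
      split_ifs <;> omega
    · have h1 : min t (m+1) = m+1 := by omega
      have h2 : min t m = m := by omega
      rw [if_neg (show ¬ t ≤ m by omega), mul_zero, add_zero, h1, h2]
      simp only [altv]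
      split_ifs <;> omega

end CD

namespace CD
variable {n : ℕ}

lemma alt_odd (m : ℕ) :
    ∑ j ∈ Finset.range m, ((-1:ℤ))^j * ((j:ℤ) % 2) = -((m/2 : ℕ) : ℤ) := by
  induction m with
  | zero => simp
  | succ m ih =>
    rw [Finset.sum_range_succ, ih, neg_one_pow_cases m]
    split_ifs <;> omega

lemma alt_chi_odd (m t : ℕ) :
    ∑ j ∈ Finset.range m, ((-1:ℤ))^j * ((j:ℤ) % 2) * (if t ≤ j then 1 else 0)
      = (((min t m)/2 : ℕ) : ℤ) - ((m/2 : ℕ) : ℤ) := by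
  induction m with
  | zero => simp
  | succ m ih =>
    rw [Finset.sum_range_succ, ih, neg_one_pow_cases m]
    rcases le_or_gt t m with h | h
    · have h1 : min t (m+1) = t := by omega
      have h2 : min t m = t := by omega
      rw [if_pos h, h1, h2]
      split_ifs <;> omega
    · have h1 : min t (m+1) = m+1 := by omega
      have h2 : min t m = m := by omega
      rw [if_neg (show ¬ t ≤ m by omega), mul_zero, add_zero, h1, h2]
      omega

lemma pair_sum (f : ℕ → ℤ) (k : ℕ) :
    ∑ j ∈ Finset.range (2*k+1), ((-1:ℤ))^j * f j
      = f 0 + ∑ i ∈ Finset.range k, (f (2*i+2) - f (2*i+1)) := by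
  induction k with
  | zero => simp
  | succ k ih =>
    have hb : 2*(k+1)+1 = (2*k+1)+1+1 := by ring
    rw [hb, Finset.sum_range_succ, Finset.sum_range_succ, ih,
      Finset.sum_range_succ]
    have e1 : ((-1:ℤ))^(2*k+1) = -1 := by
      rw [neg_one_pow_cases]; rw [if_neg (by omega)]
    have e2 : ((-1:ℤ))^(2*k+1+1) = 1 := by
      rw [neg_one_pow_cases]; rw [if_pos (by omega)]
    rw [e1, e2]
    have e3 : 2*k+1+1 = 2*k+2 := by ring
    rw [e3]
    ring

lemma sum_id (k : ℕ) :
    2 * ∑ i ∈ Finset.range k, (i:ℤ) = (k:ℤ) * ((k:ℤ) - 1) := by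
  induction k with
  | zero => simp
  | succ k ih =>
    rw [Finset.sum_range_succ]
    push_cast
    push_cast at ih
    linear_combination ih

lemma choose2 (k : ℕ) : (2:ℤ) * (k.choose 2 : ℤ) = (k:ℤ) * ((k:ℤ) - 1) := by
  induction k with
  | zero => simp
  | succ k ih =>
    have h : (k+1).choose 2 = k.choose 1 + k.choose 2 := Nat.choose_succ_succ k 1
    rw [h, Nat.choose_one_right]
    push_cast
    linear_combination ih

lemma choose3 (k : ℕ) : (6:ℤ) * (k.choose 3 : ℤ) = (k:ℤ) * ((k:ℤ) - 1) * ((k:ℤ) - 2) := by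
  induction k with
  | zero => simp
  | succ k ih =>
    have h : (k+1).choose 3 = k.choose 2 + k.choose 3 := Nat.choose_succ_succ k 2
    rw [h]
    push_cast
    linear_combination ih + 3 * choose2 k

lemma choose2_succ (k : ℕ) : ((k+1).choose 2 : ℤ) = (k.choose 2 : ℤ) + k := by
  have h : (k+1).choose 2 = k.choose 1 + k.choose 2 := Nat.choose_succ_succ k 1
  rw [h, Nat.choose_one_right]; push_cast; ring

lemma choose4_succ (k : ℕ) : ((k+1).choose 4 : ℤ) = (k.choose 4 : ℤ) + (k.choose 3 : ℤ) := by
  have h : (k+1).choose 4 = k.choose 3 + k.choose 4 := Nat.choose_succ_succ k 3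
  rw [h]; push_cast; ring

lemma DD_zero : DD 0 = {1} := by
  have huniq : ∀ σ τ : Equiv.Perm (Fin 0), σ = τ :=
    fun σ τ => Equiv.ext (fun x => x.elim0)
  ext σ
  simp only [DD, Finset.mem_filter, Finset.mem_univ, true_and, Finset.mem_singleton]
  constructor
  · intro _; exact huniq σ 1
  · intro _; exact ⟨fun x => x.elim0, fun x => x.elim0⟩

lemma crossNum_fin_zero (σ : Equiv.Perm (Fin 0)) : crossNum σ = 0 := by
  unfold crossNum
  rw [Finset.univ_eq_empty, Finset.filter_empty, Finset.card_empty]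

lemma NN_fin_zero (t : ℕ) (σ : Equiv.Perm (Fin 0)) : NN t σ = 0 := by
  unfold NN
  rw [Finset.univ_eq_empty, Finset.filter_empty, Finset.card_empty]

theorem L1 : ∀ n, n % 2 = 0 → ∑ σ ∈ DD n, ((-1:ℤ))^(crossNum σ) = 1 := by
  intro n
  induction n using Nat.strong_induction_on with
  | _ n ih =>
    match n with
    | 0 => intro _; rw [DD_zero, Finset.sum_singleton, crossNum_fin_zero]; norm_num
    | 1 => intro h; exact absurd h (by norm_num)
    | (m+2) =>
      intro h
      have hm : m % 2 = 0 := by omega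
      rw [sum_D_succ (fun τ => ((-1:ℤ))^(crossNum τ))]
      have inner : ∀ j : Fin (m+1),
          (∑ σ ∈ DD m, ((-1:ℤ))^(crossNum (insPerm j σ))) = (-1:ℤ)^(j:ℕ) := by
        intro j
        have hc : ∀ σ ∈ DD m,
            ((-1:ℤ))^(crossNum (insPerm j σ)) = (-1:ℤ)^(j:ℕ) * (-1)^(crossNum σ) := by
          intro σ hσ
          exact sgn_ins j σ ((Finset.mem_filter.mp hσ).2) hm
        rw [Finset.sum_congr rfl hc, ← Finset.mul_sum, ih m (by omega) hm, mul_one]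
      rw [Finset.sum_congr rfl (fun j _ => inner j),
        Fin.sum_univ_eq_sum_range (fun j => ((-1:ℤ))^j) (m+1), alt_sum]
      simp only [altv]
      rw [if_neg (by omega)]

end CD

namespace CD

theorem L2 : ∀ n, n % 2 = 0 → ∀ t : ℕ,
    ∑ σ ∈ DD n, ((-1:ℤ))^(crossNum σ) * (NN t σ : ℤ) = (((n - t)/2 : ℕ) : ℤ) := by
  intro n
  induction n using Nat.strong_induction_on with
  | _ n ih =>
    match n with
    | 0 =>
      intro _ t
      rw [DD_zero, Finset.sum_singleton, crossNum_fin_zero, NN_fin_zero]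
      simp
    | 1 => intro h; exact absurd h (by norm_num)
    | (m+2) =>
      intro h t
      have hm : m % 2 = 0 := by omega
      rw [sum_D_succ (fun τ => ((-1:ℤ))^(crossNum τ) * (NN t τ : ℤ))]
      have inner : ∀ j : Fin (m+1),
          (∑ σ ∈ DD m, ((-1:ℤ))^(crossNum (insPerm j σ)) * (NN t (insPerm j σ) : ℤ))
            = (-1:ℤ)^(j:ℕ) * (if t ≤ (j:ℕ) then ((((m-t)/2 : ℕ):ℤ) + 1)
                else (((m-(t-1))/2 : ℕ):ℤ)) := by
        intro j
        by_cases hc : t ≤ (j:ℕ)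
        · have hexp : ∀ σ ∈ DD m,
              ((-1:ℤ))^(crossNum (insPerm j σ)) * (NN t (insPerm j σ) : ℤ)
              = (-1:ℤ)^(j:ℕ) * ((-1:ℤ)^(crossNum σ) * (NN t σ : ℤ)
                  + (-1:ℤ)^(crossNum σ)) := by
            intro σ hσ
            rw [sgn_ins j σ ((Finset.mem_filter.mp hσ).2) hm, NN_ins t j σ, if_pos hc]
            push_cast
            ring
          rw [Finset.sum_congr rfl hexp, ← Finset.mul_sum, Finset.sum_add_distrib,
            ih m (by omega) hm t, L1 m hm, if_pos hc]
        · have hexp : ∀ σ ∈ DD m,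
              ((-1:ℤ))^(crossNum (insPerm j σ)) * (NN t (insPerm j σ) : ℤ)
              = (-1:ℤ)^(j:ℕ) * ((-1:ℤ)^(crossNum σ) * (NN (t-1) σ : ℤ)) := by
            intro σ hσ
            rw [sgn_ins j σ ((Finset.mem_filter.mp hσ).2) hm, NN_ins t j σ, if_neg hc]
            ring
          rw [Finset.sum_congr rfl hexp, ← Finset.mul_sum, ih m (by omega) hm (t-1),
            if_neg hc]
      rw [Finset.sum_congr rfl (fun j _ => inner j),
        Fin.sum_univ_eq_sum_range (fun j => (-1:ℤ)^j * (if t ≤ j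
          then ((((m-t)/2 : ℕ):ℤ) + 1) else (((m-(t-1))/2 : ℕ):ℤ))) (m+1)]
      have hpt : ∀ j : ℕ, ((-1:ℤ))^j * (if t ≤ j then ((((m-t)/2 : ℕ):ℤ) + 1)
            else (((m-(t-1))/2 : ℕ):ℤ))
          = (((m-(t-1))/2 : ℕ):ℤ) * ((-1:ℤ)^j)
            + (((((m-t)/2 : ℕ):ℤ) + 1) - (((m-(t-1))/2 : ℕ):ℤ))
              * ((-1:ℤ)^j * (if t ≤ j then 1 else 0)) := by
        intro j; split_ifs <;> ring
      rw [Finset.sum_congr rfl (fun j _ => hpt j), Finset.sum_add_distrib,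
        ← Finset.mul_sum, ← Finset.mul_sum, alt_sum, alt_chi]
      simp only [altv]
      split_ifs <;> omega

end CD

namespace CD

lemma alt_chi2 (m t u : ℕ) :
    ∑ j ∈ Finset.range m, ((-1:ℤ))^j
        * ((if t ≤ j then (1:ℤ) else 0) * (if u ≤ j then (1:ℤ) else 0))
      = altv m - altv (min (max t u) m) := by
  have hpt : ∀ j : ℕ, (if t ≤ j then (1:ℤ) else 0) * (if u ≤ j then (1:ℤ) else 0)
      = (if max t u ≤ j then (1:ℤ) else 0) := by
    intro j; split_ifs <;> omega
  rw [Finset.sum_congr rfl (fun j _ => by rw [hpt j]), alt_chi]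

theorem L3 : ∀ n, n % 2 = 0 → ∀ t u : ℕ,
    ∑ σ ∈ DD n, ((-1:ℤ))^(crossNum σ) * (NN t σ : ℤ) * (NN u σ : ℤ)
      = (((n - t)/2 : ℕ) : ℤ) * (((n - u)/2 : ℕ) : ℤ) := by
  intro n
  induction n using Nat.strong_induction_on with
  | _ n ih =>
    match n with
    | 0 =>
      intro _ t u
      rw [DD_zero, Finset.sum_singleton, crossNum_fin_zero, NN_fin_zero, NN_fin_zero]
      simp
    | 1 => intro h; exact absurd h (by norm_num)
    | (m+2) =>
      intro h t u
      have hm : m % 2 = 0 := by omega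
      rw [sum_D_succ (fun τ => ((-1:ℤ))^(crossNum τ) * (NN t τ : ℤ) * (NN u τ : ℤ))]
      have inner : ∀ j : Fin (m+1),
          (∑ σ ∈ DD m, ((-1:ℤ))^(crossNum (insPerm j σ)) * (NN t (insPerm j σ) : ℤ)
              * (NN u (insPerm j σ) : ℤ))
            = (-1:ℤ)^(j:ℕ) *
              ((if t ≤ (j:ℕ) then (((m-t)/2:ℕ):ℤ) + 1 else (((m-(t-1))/2:ℕ):ℤ)) *
               (if u ≤ (j:ℕ) then (((m-u)/2:ℕ):ℤ) + 1 else (((m-(u-1))/2:ℕ):ℤ))) := by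
        intro j
        by_cases hct : t ≤ (j:ℕ) <;> by_cases hcu : u ≤ (j:ℕ)
        · have hexp : ∀ σ ∈ DD m,
              ((-1:ℤ))^(crossNum (insPerm j σ)) * (NN t (insPerm j σ) : ℤ)
                  * (NN u (insPerm j σ) : ℤ)
              = (-1:ℤ)^(j:ℕ) * (((-1:ℤ)^(crossNum σ) * (NN t σ : ℤ) * (NN u σ : ℤ))
                  + (((-1:ℤ)^(crossNum σ) * (NN t σ : ℤ))
                  + (((-1:ℤ)^(crossNum σ) * (NN u σ : ℤ)) + (-1:ℤ)^(crossNum σ)))) := by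
            intro σ hσ
            rw [sgn_ins j σ ((Finset.mem_filter.mp hσ).2) hm, NN_ins t j σ, if_pos hct,
              NN_ins u j σ, if_pos hcu]
            push_cast
            ring
          rw [Finset.sum_congr rfl hexp, ← Finset.mul_sum, Finset.sum_add_distrib,
            Finset.sum_add_distrib, Finset.sum_add_distrib,
            ih m (by omega) hm t u, L2 m hm t, L2 m hm u, L1 m hm,
            if_pos hct, if_pos hcu]
          ring
        · have hexp : ∀ σ ∈ DD m,
              ((-1:ℤ))^(crossNum (insPerm j σ)) * (NN t (insPerm j σ) : ℤ)
                  * (NN u (insPerm j σ) : ℤ)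
              = (-1:ℤ)^(j:ℕ) * (((-1:ℤ)^(crossNum σ) * (NN t σ : ℤ) * (NN (u-1) σ : ℤ))
                  + ((-1:ℤ)^(crossNum σ) * (NN (u-1) σ : ℤ))) := by
            intro σ hσ
            rw [sgn_ins j σ ((Finset.mem_filter.mp hσ).2) hm, NN_ins t j σ, if_pos hct,
              NN_ins u j σ, if_neg hcu]
            push_cast
            ring
          rw [Finset.sum_congr rfl hexp, ← Finset.mul_sum, Finset.sum_add_distrib,
            ih m (by omega) hm t (u-1), L2 m hm (u-1), if_pos hct, if_neg hcu]
          ring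
        · have hexp : ∀ σ ∈ DD m,
              ((-1:ℤ))^(crossNum (insPerm j σ)) * (NN t (insPerm j σ) : ℤ)
                  * (NN u (insPerm j σ) : ℤ)
              = (-1:ℤ)^(j:ℕ) * (((-1:ℤ)^(crossNum σ) * (NN (t-1) σ : ℤ) * (NN u σ : ℤ))
                  + ((-1:ℤ)^(crossNum σ) * (NN (t-1) σ : ℤ))) := by
            intro σ hσ
            rw [sgn_ins j σ ((Finset.mem_filter.mp hσ).2) hm, NN_ins t j σ, if_neg hct,
              NN_ins u j σ, if_pos hcu]
            push_cast
            ring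
          rw [Finset.sum_congr rfl hexp, ← Finset.mul_sum, Finset.sum_add_distrib,
            ih m (by omega) hm (t-1) u, L2 m hm (t-1), if_neg hct, if_pos hcu]
          ring
        · have hexp : ∀ σ ∈ DD m,
              ((-1:ℤ))^(crossNum (insPerm j σ)) * (NN t (insPerm j σ) : ℤ)
                  * (NN u (insPerm j σ) : ℤ)
              = (-1:ℤ)^(j:ℕ) * ((-1:ℤ)^(crossNum σ) * (NN (t-1) σ : ℤ)
                  * (NN (u-1) σ : ℤ)) := by
            intro σ hσ
            rw [sgn_ins j σ ((Finset.mem_filter.mp hσ).2) hm, NN_ins t j σ, if_neg hct,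
              NN_ins u j σ, if_neg hcu]
            push_cast
            ring
          rw [Finset.sum_congr rfl hexp, ← Finset.mul_sum,
            ih m (by omega) hm (t-1) (u-1), if_neg hct, if_neg hcu]
      rw [Finset.sum_congr rfl (fun j _ => inner j),
        Fin.sum_univ_eq_sum_range (fun j => (-1:ℤ)^j *
          ((if t ≤ j then (((m-t)/2:ℕ):ℤ) + 1 else (((m-(t-1))/2:ℕ):ℤ)) *
           (if u ≤ j then (((m-u)/2:ℕ):ℤ) + 1 else (((m-(u-1))/2:ℕ):ℤ)))) (m+1)]
      have hphi : ∀ (t : ℕ) (j : ℕ), j ≤ m →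
          (if t ≤ j then (((m-t)/2 : ℕ):ℤ) + 1 else (((m-(t-1))/2 : ℕ):ℤ))
          = (((m+2-t)/2 : ℕ):ℤ) - (if t % 2 = 0 ∧ t ≤ m then (1:ℤ) else 0)
              * (1 - (if t ≤ j then (1:ℤ) else 0)) := by
        intro t j hj
        split_ifs <;> omega
      have hpt : ∀ j : ℕ, j ≤ m → ((-1:ℤ))^j *
          ((if t ≤ j then (((m-t)/2:ℕ):ℤ) + 1 else (((m-(t-1))/2:ℕ):ℤ)) *
           (if u ≤ j then (((m-u)/2:ℕ):ℤ) + 1 else (((m-(u-1))/2:ℕ):ℤ)))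
          = ((((m+2-t)/2 : ℕ):ℤ) - (if t % 2 = 0 ∧ t ≤ m then (1:ℤ) else 0))
              * ((((m+2-u)/2 : ℕ):ℤ) - (if u % 2 = 0 ∧ u ≤ m then (1:ℤ) else 0))
              * ((-1:ℤ)^j)
            + ((if t % 2 = 0 ∧ t ≤ m then (1:ℤ) else 0)
                * ((((m+2-u)/2 : ℕ):ℤ) - (if u % 2 = 0 ∧ u ≤ m then (1:ℤ) else 0)))
              * ((-1:ℤ)^j * (if t ≤ j then (1:ℤ) else 0))
            + ((if u % 2 = 0 ∧ u ≤ m then (1:ℤ) else 0)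
                * ((((m+2-t)/2 : ℕ):ℤ) - (if t % 2 = 0 ∧ t ≤ m then (1:ℤ) else 0)))
              * ((-1:ℤ)^j * (if u ≤ j then (1:ℤ) else 0))
            + ((if t % 2 = 0 ∧ t ≤ m then (1:ℤ) else 0)
                * (if u % 2 = 0 ∧ u ≤ m then (1:ℤ) else 0))
              * ((-1:ℤ)^j * ((if t ≤ j then (1:ℤ) else 0)
                  * (if u ≤ j then (1:ℤ) else 0))) := by
        intro j hj
        rw [hphi t j hj, hphi u j hj]
        ring
      rw [Finset.sum_congr rfl (fun j hj => hpt j (by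
          have := Finset.mem_range.mp hj; omega)),
        Finset.sum_add_distrib, Finset.sum_add_distrib, Finset.sum_add_distrib,
        ← Finset.mul_sum, ← Finset.mul_sum, ← Finset.mul_sum, ← Finset.mul_sum,
        alt_sum, alt_chi, alt_chi, alt_chi2]
      rw [show altv (m+1) = 1 from by unfold altv; rw [if_neg (by omega)]]
      by_cases hPt : t % 2 = 0 ∧ t ≤ m <;> by_cases hPu : u % 2 = 0 ∧ u ≤ m
      · have e1 : altv (min t (m+1)) = 0 := by unfold altv; rw [if_pos (by omega)]
        have e2 : altv (min u (m+1)) = 0 := by unfold altv; rw [if_pos (by omega)]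
        have e3 : altv (min (max t u) (m+1)) = 0 := by
          unfold altv; rw [if_pos (by omega)]
        rw [if_pos hPt, if_pos hPu, e1, e2, e3]
        ring
      · have e1 : altv (min t (m+1)) = 0 := by unfold altv; rw [if_pos (by omega)]
        rw [if_pos hPt, if_neg hPu, e1]
        ring
      · have e2 : altv (min u (m+1)) = 0 := by unfold altv; rw [if_pos (by omega)]
        rw [if_neg hPt, if_pos hPu, e2]
        ring
      · rw [if_neg hPt, if_neg hPu]
        ring

end CD

namespace CD

theorem L4 : ∀ n, n % 2 = 0 →
    ∑ σ ∈ DD n, ((-1:ℤ))^(crossNum σ) * (crossNum σ : ℤ)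
      = -(((n/2).choose 2 : ℕ) : ℤ) := by
  intro n
  induction n using Nat.strong_induction_on with
  | _ n ih =>
    match n with
    | 0 =>
      intro _
      rw [DD_zero, Finset.sum_singleton, crossNum_fin_zero]
      simp
    | 1 => intro h; exact absurd h (by norm_num)
    | (m+2) =>
      intro h
      have hm : m % 2 = 0 := by omega
      rw [sum_D_succ (fun τ => ((-1:ℤ))^(crossNum τ) * (crossNum τ : ℤ))]
      have inner : ∀ j : Fin (m+1),
          (∑ σ ∈ DD m, ((-1:ℤ))^(crossNum (insPerm j σ)) * (crossNum (insPerm j σ) : ℤ))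
            = (-1:ℤ)^(j:ℕ) * (-(((m/2).choose 2 : ℕ) : ℤ)
                + (((m - (j:ℕ) : ℕ)) : ℤ) - 2 * ((((m - (j:ℕ))/2 : ℕ)) : ℤ)) := by
        intro j
        have hexp : ∀ σ ∈ DD m,
            ((-1:ℤ))^(crossNum (insPerm j σ)) * (crossNum (insPerm j σ) : ℤ)
            = (-1:ℤ)^(j:ℕ) * (((-1:ℤ)^(crossNum σ) * (crossNum σ : ℤ))
                + ((((m - (j:ℕ) : ℕ)) : ℤ) * ((-1:ℤ)^(crossNum σ))
                  - 2 * ((-1:ℤ)^(crossNum σ) * (NN (j:ℕ) σ : ℤ)))) := by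
          intro σ hσ
          have hCD := (Finset.mem_filter.mp hσ).2
          rw [sgn_ins j σ hCD hm, crossNum_ins]
          have hc := cjF_card j σ hCD
          have hci : (((cjF j σ).card : ℕ) : ℤ)
              = (((m - (j:ℕ) : ℕ)) : ℤ) - 2 * (NN (j:ℕ) σ : ℤ) := by omega
          push_cast
          push_cast at hci
          rw [hci]
          ring
        rw [Finset.sum_congr rfl hexp, ← Finset.mul_sum, Finset.sum_add_distrib,
          Finset.sum_sub_distrib, ← Finset.mul_sum, ← Finset.mul_sum,
          ih m (by omega) hm, L1 m hm, L2 m hm (j:ℕ)]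
        ring
      rw [Finset.sum_congr rfl (fun j _ => inner j),
        Fin.sum_univ_eq_sum_range (fun j => (-1:ℤ)^j * (-(((m/2).choose 2 : ℕ) : ℤ)
          + (((m - j : ℕ)) : ℤ) - 2 * ((((m - j)/2 : ℕ)) : ℤ))) (m+1)]
      obtain ⟨k, rfl⟩ : ∃ k, m = 2*k := ⟨m/2, by omega⟩
      rw [pair_sum (fun j => -((((2*k)/2).choose 2 : ℕ) : ℤ)
          + (((2*k - j : ℕ)) : ℤ) - 2 * ((((2*k - j)/2 : ℕ)) : ℤ)) k]
      have hdiff : ∀ i ∈ Finset.range k,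
          ((-((((2*k)/2).choose 2 : ℕ) : ℤ)
            + (((2*k - (2*i+2) : ℕ)) : ℤ) - 2 * ((((2*k - (2*i+2))/2 : ℕ)) : ℤ))
          - (-((((2*k)/2).choose 2 : ℕ) : ℤ)
            + (((2*k - (2*i+1) : ℕ)) : ℤ) - 2 * ((((2*k - (2*i+1))/2 : ℕ)) : ℤ)))
          = -1 := by
        intro i hi
        have hik := Finset.mem_range.mp hi
        have harith : (((2*k - (2*i+2)) : ℕ) : ℤ) - 2 * (((2*k - (2*i+2))/2 : ℕ) : ℤ)
            = (((2*k - (2*i+1)) : ℕ) : ℤ) - 2 * (((2*k - (2*i+1))/2 : ℕ) : ℤ) - 1 := by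
          omega
        linear_combination harith
      rw [Finset.sum_congr rfl hdiff, Finset.sum_const, Finset.card_range]
      have h2 : (2*k+2)/2 = k + 1 := by omega
      have h3 : (2*k)/2 = k := by omega
      rw [h2, h3, choose2_succ k]
      have hf0 : (((2*k - 0):ℕ):ℤ) - 2*((((2*k - 0)/2 : ℕ)):ℤ) = 0 := by omega
      push_cast
      push_cast at hf0
      linear_combination hf0

end CD

namespace CD

theorem L5 : ∀ n, n % 2 = 0 → ∀ t : ℕ,
    ∑ σ ∈ DD n, ((-1:ℤ))^(crossNum σ) * (crossNum σ : ℤ) * (NN t σ : ℤ)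
      = (((n - t)/2 : ℕ) : ℤ) * (((t/2 : ℕ) : ℤ) - (((n/2).choose 2 : ℕ) : ℤ)) := by
  intro n
  induction n using Nat.strong_induction_on with
  | _ n ih =>
    match n with
    | 0 =>
      intro _ t
      rw [DD_zero, Finset.sum_singleton, crossNum_fin_zero, NN_fin_zero]
      simp
    | 1 => intro h; exact absurd h (by norm_num)
    | (m+2) =>
      intro h t
      have hm : m % 2 = 0 := by omega
      rw [sum_D_succ (fun τ => ((-1:ℤ))^(crossNum τ) * (crossNum τ : ℤ) * (NN t τ : ℤ))]
      have inner : ∀ j : Fin (m+1),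
          (∑ σ ∈ DD m, ((-1:ℤ))^(crossNum (insPerm j σ)) * (crossNum (insPerm j σ) : ℤ) * (NN t (insPerm j σ) : ℤ))
            = (-1:ℤ)^(j:ℕ) * (if t ≤ (j:ℕ) then ((((m - t)/2 : ℕ) : ℤ) * (((t/2 : ℕ) : ℤ) - (((m/2).choose 2 : ℕ) : ℤ)) - (((m/2).choose 2 : ℕ) : ℤ) + ((((m - t)/2 : ℕ) : ℤ) + 1) * (((m - (j:ℕ) : ℕ) : ℤ) - 2 * (((m - (j:ℕ))/2 : ℕ) : ℤ))) else ((((m - (t-1))/2 : ℕ) : ℤ) * ((((t-1)/2 : ℕ) : ℤ) - (((m/2).choose 2 : ℕ) : ℤ)) + (((m - (t-1))/2 : ℕ) : ℤ) * (((m - (j:ℕ) : ℕ) : ℤ) - 2 * (((m - (j:ℕ))/2 : ℕ) : ℤ)))) := by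
        intro j
        by_cases hct : t ≤ (j:ℕ)
        · have hexp : ∀ σ ∈ DD m, ((-1:ℤ))^(crossNum (insPerm j σ)) * (crossNum (insPerm j σ) : ℤ) * (NN t (insPerm j σ) : ℤ)
              = (-1:ℤ)^(j:ℕ) * ((((-1:ℤ))^(crossNum σ) * (crossNum σ : ℤ) * (NN t σ : ℤ)) + ((((-1:ℤ))^(crossNum σ) * (crossNum σ : ℤ)) + (((m - (j:ℕ) : ℕ) : ℤ) * (((-1:ℤ))^(crossNum σ) * (NN t σ : ℤ)) + (((m - (j:ℕ) : ℕ) : ℤ) * ((-1:ℤ))^(crossNum σ) - (2 * (((-1:ℤ))^(crossNum σ) * (NN (j:ℕ) σ : ℤ) * (NN t σ : ℤ)) + 2 * (((-1:ℤ))^(crossNum σ) * (NN (j:ℕ) σ : ℤ))))))) := by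
            intro σ hσ
            have hCD := (Finset.mem_filter.mp hσ).2
            rw [sgn_ins j σ hCD hm, crossNum_ins, NN_ins t j σ, if_pos hct]
            have hc := cjF_card j σ hCD
            have hci : (((cjF j σ).card : ℕ) : ℤ)
                = ((m - (j:ℕ) : ℕ) : ℤ) - 2 * (NN (j:ℕ) σ : ℤ) := by omega
            push_cast
            push_cast at hci
            rw [hci]
            ring
          rw [Finset.sum_congr rfl hexp, ← Finset.mul_sum, Finset.sum_add_distrib,
            Finset.sum_add_distrib, Finset.sum_add_distrib, Finset.sum_sub_distrib,
            Finset.sum_add_distrib, ← Finset.mul_sum, ← Finset.mul_sum,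
            ← Finset.mul_sum, ← Finset.mul_sum,
            ih m (by omega) hm t, L4 m hm, L2 m hm t, L1 m hm,
            L3 m hm (j:ℕ) t, L2 m hm (j:ℕ), if_pos hct]
          ring
        · have hexp : ∀ σ ∈ DD m, ((-1:ℤ))^(crossNum (insPerm j σ)) * (crossNum (insPerm j σ) : ℤ) * (NN t (insPerm j σ) : ℤ)
              = (-1:ℤ)^(j:ℕ) * ((((-1:ℤ))^(crossNum σ) * (crossNum σ : ℤ) * (NN (t-1) σ : ℤ)) + (((m - (j:ℕ) : ℕ) : ℤ) * (((-1:ℤ))^(crossNum σ) * (NN (t-1) σ : ℤ)) - 2 * (((-1:ℤ))^(crossNum σ) * (NN (j:ℕ) σ : ℤ) * (NN (t-1) σ : ℤ)))) := by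
            intro σ hσ
            have hCD := (Finset.mem_filter.mp hσ).2
            rw [sgn_ins j σ hCD hm, crossNum_ins, NN_ins t j σ, if_neg hct]
            have hc := cjF_card j σ hCD
            have hci : (((cjF j σ).card : ℕ) : ℤ)
                = ((m - (j:ℕ) : ℕ) : ℤ) - 2 * (NN (j:ℕ) σ : ℤ) := by omega
            push_cast
            push_cast at hci
            rw [hci]
            ring
          rw [Finset.sum_congr rfl hexp, ← Finset.mul_sum, Finset.sum_add_distrib,
            Finset.sum_sub_distrib, ← Finset.mul_sum, ← Finset.mul_sum,
            ih m (by omega) hm (t-1), L2 m hm (t-1), L3 m hm (j:ℕ) (t-1), if_neg hct]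
          ring
      rw [Finset.sum_congr rfl (fun j _ => inner j),
        Fin.sum_univ_eq_sum_range (fun j => (-1:ℤ)^j * (if t ≤ j then ((((m - t)/2 : ℕ) : ℤ) * (((t/2 : ℕ) : ℤ) - (((m/2).choose 2 : ℕ) : ℤ)) - (((m/2).choose 2 : ℕ) : ℤ) + ((((m - t)/2 : ℕ) : ℤ) + 1) * (((m - j : ℕ) : ℤ) - 2 * (((m - j)/2 : ℕ) : ℤ))) else ((((m - (t-1))/2 : ℕ) : ℤ) * ((((t-1)/2 : ℕ) : ℤ) - (((m/2).choose 2 : ℕ) : ℤ)) + (((m - (t-1))/2 : ℕ) : ℤ) * (((m - j : ℕ) : ℤ) - 2 * (((m - j)/2 : ℕ) : ℤ))))) (m+1)]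
      have hpt : ∀ j : ℕ, j ≤ m → (-1:ℤ)^j * (if t ≤ j then ((((m - t)/2 : ℕ) : ℤ) * (((t/2 : ℕ) : ℤ) - (((m/2).choose 2 : ℕ) : ℤ)) - (((m/2).choose 2 : ℕ) : ℤ) + ((((m - t)/2 : ℕ) : ℤ) + 1) * (((m - j : ℕ) : ℤ) - 2 * (((m - j)/2 : ℕ) : ℤ))) else ((((m - (t-1))/2 : ℕ) : ℤ) * ((((t-1)/2 : ℕ) : ℤ) - (((m/2).choose 2 : ℕ) : ℤ)) + (((m - (t-1))/2 : ℕ) : ℤ) * (((m - j : ℕ) : ℤ) - 2 * (((m - j)/2 : ℕ) : ℤ))))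
          = ((((m - (t-1))/2 : ℕ) : ℤ) * ((((t-1)/2 : ℕ) : ℤ) - (((m/2).choose 2 : ℕ) : ℤ))) * ((-1:ℤ)^j) + (((((m - t)/2 : ℕ) : ℤ) * (((t/2 : ℕ) : ℤ) - (((m/2).choose 2 : ℕ) : ℤ)) - (((m/2).choose 2 : ℕ) : ℤ)) - ((((m - (t-1))/2 : ℕ) : ℤ) * ((((t-1)/2 : ℕ) : ℤ) - (((m/2).choose 2 : ℕ) : ℤ)))) * ((-1:ℤ)^j * (if t ≤ j then (1:ℤ) else 0)) + (((m - (t-1))/2 : ℕ) : ℤ) * ((-1:ℤ)^j * ((j:ℤ) % 2)) + (((((m - t)/2 : ℕ) : ℤ) + 1) - (((m - (t-1))/2 : ℕ) : ℤ)) * ((-1:ℤ)^j * ((j:ℤ) % 2) * (if t ≤ j then (1:ℤ) else 0)) := by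
        intro j hj
        have hp : (((m - j : ℕ) : ℤ) - 2 * (((m - j)/2 : ℕ) : ℤ)) = (j:ℤ) % 2 := by omega
        rw [hp]
        split_ifs <;> ring
      rw [Finset.sum_congr rfl (fun j hj => hpt j (by
          have := Finset.mem_range.mp hj; omega)),
        Finset.sum_add_distrib, Finset.sum_add_distrib, Finset.sum_add_distrib,
        ← Finset.mul_sum, ← Finset.mul_sum, ← Finset.mul_sum, ← Finset.mul_sum,
        alt_sum, alt_chi, alt_odd, alt_chi_odd]
      rw [show altv (m+1) = 1 from by unfold altv; rw [if_neg (by omega)]]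
      rw [show ((m+2)/2) = m/2 + 1 from by omega, choose2_succ (m/2)]
      by_cases hPt : t % 2 = 0 ∧ t ≤ m
      · have e1 : altv (min t (m+1)) = 0 := by unfold altv; rw [if_pos (by omega)]
        have e2 : (((min t (m+1))/2 : ℕ) : ℤ) = ((t/2 : ℕ) : ℤ) := by omega
        have e3 : (((m+1)/2 : ℕ) : ℤ) = ((m/2 : ℕ) : ℤ) := by omega
        have e4 : (((m - (t-1))/2 : ℕ) : ℤ) = (((m - t)/2 : ℕ) : ℤ) := by omega
        have e5 : (((m + 2 - t)/2 : ℕ) : ℤ) = (((m - t)/2 : ℕ) : ℤ) + 1 := by omega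
        rw [e1, e2, e3, e4, e5]
        ring
      · have e1 : altv (min t (m+1)) = 1 := by unfold altv; rw [if_neg (by omega)]
        rw [e1]
        by_cases hle : t ≤ m
        · have e2 : (((min t (m+1))/2 : ℕ) : ℤ) = ((t/2 : ℕ) : ℤ) := by omega
          have e3 : (((m+1)/2 : ℕ) : ℤ) = ((m/2 : ℕ) : ℤ) := by omega
          have e4 : (((m - (t-1))/2 : ℕ) : ℤ) = (((m + 2 - t)/2 : ℕ) : ℤ) := by omega
          have e6 : (((t-1)/2 : ℕ) : ℤ) = ((t/2 : ℕ) : ℤ) := by omega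
          have e5 : (((m - t)/2 : ℕ) : ℤ) + 1 = (((m + 2 - t)/2 : ℕ) : ℤ) := by omega
          rw [e2, e3, e4, e6]
          linear_combination (((t/2 : ℕ) : ℤ) - ((m/2 : ℕ) : ℤ)) * e5
        · have e2 : (((m - t)/2 : ℕ) : ℤ) = 0 := by omega
          have e3 : (((m - (t-1))/2 : ℕ) : ℤ) = 0 := by omega
          have e4 : (((m + 2 - t)/2 : ℕ) : ℤ) = 0 := by omega
          have e5 : (((min t (m+1))/2 : ℕ) : ℤ) = (((m+1)/2 : ℕ) : ℤ) := by omega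
          rw [e2, e3, e4, e5]
          ring
end CD

namespace CD

theorem L6 : ∀ n, n % 2 = 0 →
    ∑ σ ∈ DD n, ((-1:ℤ))^(crossNum σ) * (crossNum σ : ℤ) * ((crossNum σ : ℤ) - 1)
      = 6 * (((n/2).choose 4 : ℕ) : ℤ) := by
  intro n
  induction n using Nat.strong_induction_on with
  | _ n ih =>
    match n with
    | 0 =>
      intro _
      rw [DD_zero, Finset.sum_singleton, crossNum_fin_zero]
      simp
    | 1 => intro h; exact absurd h (by norm_num)
    | (m+2) =>
      intro h
      have hm : m % 2 = 0 := by omega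
      rw [sum_D_succ (fun τ => ((-1:ℤ))^(crossNum τ) * (crossNum τ : ℤ)
        * ((crossNum τ : ℤ) - 1))]
      have inner : ∀ j : Fin (m+1),
          (∑ σ ∈ DD m, ((-1:ℤ))^(crossNum (insPerm j σ)) * (crossNum (insPerm j σ) : ℤ) * ((crossNum (insPerm j σ) : ℤ) - 1))
            = (-1:ℤ)^(j:ℕ) * (6 * (((m/2).choose 4 : ℕ) : ℤ) + (2 * ((m - (j:ℕ) : ℕ) : ℤ)) * (-(((m/2).choose 2 : ℕ) : ℤ)) + (((m - (j:ℕ) : ℕ) : ℤ) * ((m - (j:ℕ) : ℕ) : ℤ) - ((m - (j:ℕ) : ℕ) : ℤ)) + (2 - 4 * ((m - (j:ℕ) : ℕ) : ℤ)) * (((m - (j:ℕ))/2 : ℕ) : ℤ) + 4 * ((((m - (j:ℕ))/2 : ℕ) : ℤ) * (((m - (j:ℕ))/2 : ℕ) : ℤ)) - 4 * ((((m - (j:ℕ))/2 : ℕ) : ℤ) * ((((j:ℕ)/2 : ℕ) : ℤ) - (((m/2).choose 2 : ℕ) : ℤ)))) := by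
        intro j
        have hexp : ∀ σ ∈ DD m, ((-1:ℤ))^(crossNum (insPerm j σ)) * (crossNum (insPerm j σ) : ℤ) * ((crossNum (insPerm j σ) : ℤ) - 1)
            = (-1:ℤ)^(j:ℕ) * ((((-1:ℤ))^(crossNum σ) * (crossNum σ : ℤ) * ((crossNum σ : ℤ) - 1)) + ((2 * ((m - (j:ℕ) : ℕ) : ℤ)) * (((-1:ℤ))^(crossNum σ) * (crossNum σ : ℤ)) + ((((m - (j:ℕ) : ℕ) : ℤ) * ((m - (j:ℕ) : ℕ) : ℤ) - ((m - (j:ℕ) : ℕ) : ℤ)) * ((-1:ℤ))^(crossNum σ) + ((2 - 4 * ((m - (j:ℕ) : ℕ) : ℤ)) * (((-1:ℤ))^(crossNum σ) * (NN (j:ℕ) σ : ℤ)) + (4 * (((-1:ℤ))^(crossNum σ) * (NN (j:ℕ) σ : ℤ) * (NN (j:ℕ) σ : ℤ)) - 4 * (((-1:ℤ))^(crossNum σ) * (crossNum σ : ℤ) * (NN (j:ℕ) σ : ℤ))))))) := by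
          intro σ hσ
          have hCD := (Finset.mem_filter.mp hσ).2
          rw [sgn_ins j σ hCD hm, crossNum_ins]
          have hc := cjF_card j σ hCD
          have hci : (((cjF j σ).card : ℕ) : ℤ)
              = ((m - (j:ℕ) : ℕ) : ℤ) - 2 * (NN (j:ℕ) σ : ℤ) := by omega
          push_cast
          push_cast at hci
          rw [hci]
          ring
        rw [Finset.sum_congr rfl hexp, ← Finset.mul_sum, Finset.sum_add_distrib,
          Finset.sum_add_distrib, Finset.sum_add_distrib, Finset.sum_add_distrib,
          Finset.sum_sub_distrib, ← Finset.mul_sum, ← Finset.mul_sum,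
          ← Finset.mul_sum, ← Finset.mul_sum, ← Finset.mul_sum,
          ih m (by omega) hm, L4 m hm, L1 m hm, L2 m hm (j:ℕ),
          L3 m hm (j:ℕ) (j:ℕ), L5 m hm (j:ℕ)]
        ring
      rw [Finset.sum_congr rfl (fun j _ => inner j),
        Fin.sum_univ_eq_sum_range (fun j => (-1:ℤ)^j * (6 * (((m/2).choose 4 : ℕ) : ℤ) + (2 * ((m - j : ℕ) : ℤ)) * (-(((m/2).choose 2 : ℕ) : ℤ)) + (((m - j : ℕ) : ℤ) * ((m - j : ℕ) : ℤ) - ((m - j : ℕ) : ℤ)) + (2 - 4 * ((m - j : ℕ) : ℤ)) * (((m - j)/2 : ℕ) : ℤ) + 4 * ((((m - j)/2 : ℕ) : ℤ) * (((m - j)/2 : ℕ) : ℤ)) - 4 * ((((m - j)/2 : ℕ) : ℤ) * (((j/2 : ℕ) : ℤ) - (((m/2).choose 2 : ℕ) : ℤ))))) (m+1)]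
      obtain ⟨k, rfl⟩ : ∃ k, m = 2*k := ⟨m/2, by omega⟩
      rw [pair_sum (fun j => (6 * ((((2*k)/2).choose 4 : ℕ) : ℤ) + (2 * ((2*k - j : ℕ) : ℤ)) * (-((((2*k)/2).choose 2 : ℕ) : ℤ)) + (((2*k - j : ℕ) : ℤ) * ((2*k - j : ℕ) : ℤ) - ((2*k - j : ℕ) : ℤ)) + (2 - 4 * ((2*k - j : ℕ) : ℤ)) * (((2*k - j)/2 : ℕ) : ℤ) + 4 * ((((2*k - j)/2 : ℕ) : ℤ) * (((2*k - j)/2 : ℕ) : ℤ)) - 4 * ((((2*k - j)/2 : ℕ) : ℤ) * (((j/2 : ℕ) : ℤ) - ((((2*k)/2).choose 2 : ℕ) : ℤ))))) k]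
      beta_reduce
      have hdiff : ∀ i ∈ Finset.range k, ((6 * ((((2*k)/2).choose 4 : ℕ) : ℤ) + (2 * ((2*k - (2*i+2) : ℕ) : ℤ)) * (-((((2*k)/2).choose 2 : ℕ) : ℤ)) + (((2*k - (2*i+2) : ℕ) : ℤ) * ((2*k - (2*i+2) : ℕ) : ℤ) - ((2*k - (2*i+2) : ℕ) : ℤ)) + (2 - 4 * ((2*k - (2*i+2) : ℕ) : ℤ)) * (((2*k - (2*i+2))/2 : ℕ) : ℤ) + 4 * ((((2*k - (2*i+2))/2 : ℕ) : ℤ) * (((2*k - (2*i+2))/2 : ℕ) : ℤ)) - 4 * ((((2*k - (2*i+2))/2 : ℕ) : ℤ) * ((((2*i+2)/2 : ℕ) : ℤ) - ((((2*k)/2).choose 2 : ℕ) : ℤ)))) - (6 * ((((2*k)/2).choose 4 : ℕ) : ℤ) + (2 * ((2*k - (2*i+1) : ℕ) : ℤ)) * (-((((2*k)/2).choose 2 : ℕ) : ℤ)) + (((2*k - (2*i+1) : ℕ) : ℤ) * ((2*k - (2*i+1) : ℕ) : ℤ) - ((2*k - (2*i+1) : ℕ) : ℤ)) + (2 - 4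 * ((2*k - (2*i+1) : ℕ) : ℤ)) * (((2*k - (2*i+1))/2 : ℕ) : ℤ) + 4 * ((((2*k - (2*i+1))/2 : ℕ) : ℤ) * (((2*k - (2*i+1))/2 : ℕ) : ℤ)) - 4 * ((((2*k - (2*i+1))/2 : ℕ) : ℤ) * ((((2*i+1)/2 : ℕ) : ℤ) - ((((2*k)/2).choose 2 : ℕ) : ℤ)))))
          = 2 * ((((2*k)/2).choose 2 : ℕ) : ℤ) - 4 * ((k:ℤ) - (i:ℤ) - 1) := by
        intro i hi
        have hik := Finset.mem_range.mp hi
        have hA : ((2*k - (2*i+2) : ℕ) : ℤ) = 2*(k:ℤ) - 2*(i:ℤ) - 2 := by omega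
        have hB : ((2*k - (2*i+1) : ℕ) : ℤ) = 2*(k:ℤ) - 2*(i:ℤ) - 1 := by omega
        have hC : (((2*k - (2*i+2))/2 : ℕ) : ℤ) = (k:ℤ) - (i:ℤ) - 1 := by omega
        have hD : (((2*k - (2*i+1))/2 : ℕ) : ℤ) = (k:ℤ) - (i:ℤ) - 1 := by omega
        have hE : (((2*i+2)/2 : ℕ) : ℤ) = (i:ℤ) + 1 := by omega
        have hF : (((2*i+1)/2 : ℕ) : ℤ) = (i:ℤ) := by omega
        rw [hA, hB, hC, hD, hE, hF]
        ring
      rw [Finset.sum_congr rfl hdiff]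
      have hdiff2 : ∀ i ∈ Finset.range k, 2 * ((((2*k)/2).choose 2 : ℕ) : ℤ) - 4 * ((k:ℤ) - (i:ℤ) - 1)
          = (2 * ((((2*k)/2).choose 2 : ℕ) : ℤ) - 4*(k:ℤ) + 4) + 4 * (i:ℤ) := by
        intro i _
        ring
      rw [Finset.sum_congr rfl hdiff2, Finset.sum_add_distrib, Finset.sum_const,
        Finset.card_range, ← Finset.mul_sum]
      have hK0 : ((2*k - 0 : ℕ) : ℤ) = 2*(k:ℤ) := by omega
      have hg0 : (((2*k - 0)/2 : ℕ) : ℤ) = (k:ℤ) := by omega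
      have hq0 : ((0/2 : ℕ) : ℤ) = 0 := by omega
      rw [hK0, hg0, hq0]
      rw [show ((2*k+2)/2) = k + 1 from by omega, choose4_succ k,
        show ((2*k)/2) = k from by omega]
      have hc2 := choose2 k
      have hc3 := choose3 k
      have hs := sum_id k
      push_cast
      push_cast at hc2 hc3 hs
      linear_combination (k:ℤ) * hc2 + 2 * hs - hc3
end CD

/-- The graded quadratic crossing count over all chord diagrams with `p` chords. -/
theorem graded_crossings_sq (p : ℕ) :
    (∑ σ ∈ chordDiagrams p,
        (-1 : ℤ) ^ crossNum σ * (crossNum σ : ℤ) * ((crossNum σ : ℤ) - 1)) =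
      6 * (p.choose 4 : ℤ) := by
  have h := CD.L6 (2*p) (by omega)
  rw [show (2*p)/2 = p from by omega] at h
  exact h
end
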